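/- arXiv:2001.11422 — 10 statements merged into one kernel-verified Lean document; each statement's English description precedes it below -/
import Mathlib

section
/- In the fixed-price location game with density f symmetric about 0 and strictly decreasing on [0,∞), if firm 1 locates at x₁ with |x₁| ≥ 2δ, then the unique best response of firm 2 is x₂ = 0, i.e. x₂ = 0 strictly maximizes q₂(x₁, ·). -/
open MeasureTheory Set

/-- Market share of a firm located at `own` when the other firm is at `opp`:
consumers buy from the nearest firm within distance `δ` (ties split equally;
for `own ≠ opp` the tie set has measure zero). -/
noncomputable def payoff (f : ℝ → ℝ) (δ own opp : ℝ) : ℝ :=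
  if own = opp then (∫ t in {t : ℝ | |t - own| ≤ δ}, f t) / 2
  else ∫ t in {t : ℝ | |t - own| ≤ δ ∧ |t - own| ≤ |t - opp|}, f t

/-- Pure-strategy Nash equilibrium of the fixed-price location game. -/
def IsEquilibrium (f : ℝ → ℝ) (δ x₁ x₂ : ℝ) : Prop :=
  (∀ y : ℝ, payoff f δ y x₂ ≤ payoff f δ x₁ x₂) ∧
  (∀ y : ℝ, payoff f δ y x₁ ≤ payoff f δ x₂ x₁)

theorem stmt_4 (f : ℝ → ℝ)
    (hf_nonneg : ∀ t, 0 ≤ f t)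
    (hf_int : Integrable f)
    (hf_mass : ∫ t, f t = 1)
    (hf_cont : Continuous f)
    (hf_symm : ∀ t, f (-t) = f t)
    (hf_anti : StrictAntiOn f (Ici 0))
    (δ : ℝ) (hδ : 0 < δ)
    (x₁ : ℝ) (hx₁ : 2 * δ ≤ |x₁|) :
    ∀ y : ℝ, y ≠ 0 → payoff f δ y x₁ < payoff f δ 0 x₁ := by
  intro y hy
  have hΦ : ∀ x : ℝ, HasDerivAt (fun u => ∫ t in (0:ℝ)..u, f t) (f x) x := fun x =>
    intervalIntegral.integral_hasDerivAt_right
      (hf_int.intervalIntegrable (a := 0) (b := x))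
      (hf_cont.stronglyMeasurableAtFilter volume (nhds x)) hf_cont.continuousAt
  set G : ℝ → ℝ := fun u =>
    (∫ t in (0:ℝ)..(u + δ), f t) - ∫ t in (0:ℝ)..(u - δ), f t with hGdef
  have hGint : ∀ u, G u = ∫ t in (u - δ)..(u + δ), f t := by
    intro u
    exact intervalIntegral.integral_interval_sub_left hf_int.intervalIntegrable
      hf_int.intervalIntegrable
  have hG : ∀ u : ℝ, HasDerivAt G (f (u + δ) - f (u - δ)) u := by
    intro u
    have h1 : HasDerivAt (fun v : ℝ => ∫ t in (0:ℝ)..(v + δ), f t) (f (u + δ) * 1) u :=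
      by have := (hΦ (u + δ)).comp u ((hasDerivAt_id u).add_const δ); exact this
    have h2 : HasDerivAt (fun v : ℝ => ∫ t in (0:ℝ)..(v - δ), f t) (f (u - δ) * 1) u :=
      by have := (hΦ (u - δ)).comp u ((hasDerivAt_id u).sub_const δ); exact this
    have h3 := h1.sub h2; rw [mul_one, mul_one] at h3; exact h3
  have hanti : StrictAntiOn G (Ici 0) := by
    apply strictAntiOn_of_deriv_neg (convex_Ici 0)
      (fun x _ => (hG x).differentiableAt.continuousAt.continuousWithinAt)
    intro x hx
    rw [interior_Ici] at hx
    rw [(hG x).deriv]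
    have hxd : f (x - δ) = f |x - δ| := by
      rcases abs_cases (x - δ) with ⟨h, _⟩ | ⟨h, _⟩
      · rw [h]
      · rw [h, ← hf_symm (x - δ)]
    have habs : |x - δ| < x + δ := by
      rw [abs_lt]
      constructor <;> [linarith [hx.out]; linarith [hx.out]]
    have : f (x + δ) < f |x - δ| :=
      hf_anti (mem_Ici.mpr (abs_nonneg _)) (by simp only [mem_Ici]; linarith [hx.out]) habs
    linarith [hxd ▸ this]
  have heven : ∀ u : ℝ, G (-u) = G u := by
    intro u
    rw [hGint, hGint]
    have h := intervalIntegral.integral_comp_neg (a := u - δ) (b := u + δ) f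
    simp only [hf_symm] at h
    rw [h]
    congr 1 <;> ring
  have hGnonneg : ∀ u : ℝ, 0 ≤ G u := by
    intro u
    rw [hGint]
    exact intervalIntegral.integral_nonneg (by linarith) (fun t _ => hf_nonneg t)
  have hlt : G y < G 0 := by
    rcases lt_or_gt_of_ne hy with h | h
    · have : G (-y) < G 0 := hanti self_mem_Ici (by simp [mem_Ici]; linarith) (by linarith)
      rwa [heven] at this
    · exact hanti self_mem_Ici (le_of_lt h) h
  have hIcc : ∀ a b : ℝ, a ≤ b → ∫ t in Icc a b, f t = ∫ t in a..b, f t := by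
    intro a b h
    rw [intervalIntegral.integral_of_le h, ← integral_Icc_eq_integral_Ioc]
  have hball : ∀ c : ℝ, {t : ℝ | |t - c| ≤ δ} = Icc (c - δ) (c + δ) := by
    intro c
    ext t
    simp only [mem_setOf_eq, mem_Icc, abs_le]
    constructor <;> intro h <;> constructor <;> linarith [h.1, h.2]
  have hballG : ∀ c : ℝ, (∫ t in {t : ℝ | |t - c| ≤ δ}, f t) = G c := by
    intro c
    rw [hball c, hIcc _ _ (by linarith), hGint]
  -- payoff at 0
  have hne0 : (0:ℝ) ≠ x₁ := by
    intro h
    rw [← h, abs_zero] at hx₁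
    linarith
  have hp0 : payoff f δ 0 x₁ = G 0 := by
    rw [payoff, if_neg hne0]
    have hset : {t : ℝ | |t - 0| ≤ δ ∧ |t - 0| ≤ |t - x₁|} = {t : ℝ | |t - 0| ≤ δ} := by
      ext t
      simp only [mem_setOf_eq, sub_zero, and_iff_left_iff_imp]
      intro ht
      have h1 : |x₁| - |t| ≤ |x₁ - t| := abs_sub_abs_le_abs_sub x₁ t
      rw [abs_sub_comm] at h1
      linarith
    rw [hset, hballG]
  -- payoff at y is at most G y
  have hpy : payoff f δ y x₁ ≤ G y := by
    by_cases hyx : y = x₁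
    · rw [payoff, if_pos hyx, hballG]
      exact half_le_self (hGnonneg y)
    · rw [payoff, if_neg hyx, ← hballG y]
      apply setIntegral_mono_set (hf_int.integrableOn)
        (Filter.Eventually.of_forall fun t => hf_nonneg t)
      exact Filter.Eventually.of_forall fun t ht => ht.1
  rw [hp0]
  exact lt_of_le_of_lt hpy hlt
end

section
/- In the fixed-price location game with density f symmetric about 0 and strictly decreasing on [0,∞), for any x₁ ∈ [−2δ, 0), every best response x₂ of firm 2 against x₁ satisfies x₁ < x₂ ≤ x₁ + 2δ. In particular, x₂ = x₁ is not a best response because the limit as ε → 0⁺ of q₂(x₁, x₁+ε) − q₂(x₁, x₁) equals (F(x₁+δ) + F(x₁−δ))/2 − F(x₁) > 0. -/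
open MeasureTheory Set

set_option maxHeartbeats 1600000 in
theorem stmt_5 (f : ℝ → ℝ)
    (hf_nonneg : ∀ t, 0 ≤ f t)
    (hf_int : Integrable f)
    (hf_mass : ∫ t, f t = 1)
    (hf_cont : Continuous f)
    (hf_symm : ∀ t, f (-t) = f t)
    (hf_anti : StrictAntiOn f (Ici 0))
    (F : ℝ → ℝ) (hF : ∀ x, F x = ∫ t in Iic x, f t)
    (δ : ℝ) (hδ : 0 < δ)
    (x₁ : ℝ) (hx₁ : x₁ ∈ Ico (-(2 * δ)) 0) :
    (∀ x₂ : ℝ, (∀ y : ℝ, payoff f δ y x₁ ≤ payoff f δ x₂ x₁) →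
      x₁ < x₂ ∧ x₂ ≤ x₁ + 2 * δ) ∧
    Filter.Tendsto (fun ε : ℝ => payoff f δ (x₁ + ε) x₁ - payoff f δ x₁ x₁)
      (nhdsWithin 0 (Ioi 0))
      (nhds ((F (x₁ + δ) + F (x₁ - δ)) / 2 - F x₁)) ∧
    0 < (F (x₁ + δ) + F (x₁ - δ)) / 2 - F x₁ := by
  obtain ⟨hx₁l, hx₁r⟩ := hx₁
  -- F difference formula
  have hFd : ∀ a b : ℝ, F b - F a = ∫ t in a..b, f t := by
    intro a b
    rw [hF, hF]
    exact intervalIntegral.integral_Iic_sub_Iic hf_int.integrableOn hf_int.integrableOn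
  -- F is continuous
  have hFc : Continuous F := by
    have h1 : Continuous fun b : ℝ => ∫ t in (0:ℝ)..b, f t := hf_int.continuous_primitive 0
    have h2 : F = fun x => (∫ t in Iic (0:ℝ), f t) + ∫ t in (0:ℝ)..x, f t := by
      funext x
      have := hFd 0 x
      rw [hF 0] at this
      linarith
    rw [h2]
    exact continuous_const.add h1
  -- key monotonicity fact
  have key_lt : ∀ a b : ℝ, |a| < b → f b < f a := by
    intro a b h
    have ha : f |a| = f a := by
      rcases abs_cases a with ⟨h1, _⟩ | ⟨h1, _⟩
      · rw [h1]
      · rw [h1]; exact hf_symm a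
    rw [← ha]
    exact hf_anti (mem_Ici.2 (abs_nonneg a)) (mem_Ici.2 ((abs_nonneg a).trans h.le)) h
  -- midpoint characterizations
  have hmidR : ∀ y t : ℝ, x₁ < y → (|t - y| ≤ |t - x₁| ↔ (y + x₁) / 2 ≤ t) := by
    intro y t hy
    constructor
    · intro h'
      nlinarith [mul_self_le_mul_self (abs_nonneg (t - y)) h',
        abs_mul_abs_self (t - y), abs_mul_abs_self (t - x₁)]
    · intro h'
      rw [abs_le]
      constructor
      · linarith [le_abs_self (t - x₁)]
      · linarith [le_abs_self (t - x₁)]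
  have hmidL : ∀ y t : ℝ, y < x₁ → (|t - y| ≤ |t - x₁| ↔ t ≤ (y + x₁) / 2) := by
    intro y t hy
    constructor
    · intro h'
      nlinarith [mul_self_le_mul_self (abs_nonneg (t - y)) h',
        abs_mul_abs_self (t - y), abs_mul_abs_self (t - x₁)]
    · intro h'
      rw [abs_le]
      constructor
      · linarith [neg_abs_le (t - x₁)]
      · linarith [neg_le_abs (t - x₁)]
  -- payoff formulas
  have payoff_gt : ∀ y : ℝ, x₁ < y →
      payoff f δ y x₁ = F (y + δ) - F (max (y - δ) ((y + x₁) / 2)) := by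
    intro y hy
    rw [payoff, if_neg (ne_of_gt hy)]
    have hset : {t : ℝ | |t - y| ≤ δ ∧ |t - y| ≤ |t - x₁|}
        = Icc (max (y - δ) ((y + x₁) / 2)) (y + δ) := by
      ext t
      simp only [mem_setOf_eq, mem_Icc, max_le_iff]
      rw [abs_le, hmidR y t hy]
      constructor
      · rintro ⟨⟨h1, h2⟩, h3⟩
        exact ⟨⟨by linarith, h3⟩, by linarith⟩
      · rintro ⟨⟨h1, h3⟩, h2⟩
        exact ⟨⟨by linarith, by linarith⟩, h3⟩
    have hab : max (y - δ) ((y + x₁) / 2) ≤ y + δ := max_le (by linarith) (by linarith)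
    rw [hset, integral_Icc_eq_integral_Ioc, ← intervalIntegral.integral_of_le hab, ← hFd]
  have payoff_lt : ∀ y : ℝ, y < x₁ →
      payoff f δ y x₁ = F (min (y + δ) ((y + x₁) / 2)) - F (y - δ) := by
    intro y hy
    rw [payoff, if_neg (ne_of_lt hy)]
    have hset : {t : ℝ | |t - y| ≤ δ ∧ |t - y| ≤ |t - x₁|}
        = Icc (y - δ) (min (y + δ) ((y + x₁) / 2)) := by
      ext t
      simp only [mem_setOf_eq, mem_Icc, le_min_iff]
      rw [abs_le, hmidL y t hy]
      constructor
      · rintro ⟨⟨h1, h2⟩, h3⟩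
        exact ⟨by linarith, by linarith, h3⟩
      · rintro ⟨h1, h2, h3⟩
        exact ⟨⟨by linarith, by linarith⟩, h3⟩
    have hab : y - δ ≤ min (y + δ) ((y + x₁) / 2) := le_min (by linarith) (by linarith)
    rw [hset, integral_Icc_eq_integral_Ioc, ← intervalIntegral.integral_of_le hab, ← hFd]
  have payoff_eq : payoff f δ x₁ x₁ = (F (x₁ + δ) - F (x₁ - δ)) / 2 := by
    rw [payoff, if_pos rfl]
    have hset : {t : ℝ | |t - x₁| ≤ δ} = Icc (x₁ - δ) (x₁ + δ) := by
      ext t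
      simp only [mem_setOf_eq, mem_Icc, abs_le]
      constructor
      · rintro ⟨h1, h2⟩; exact ⟨by linarith, by linarith⟩
      · rintro ⟨h1, h2⟩; exact ⟨by linarith, by linarith⟩
    rw [hset, integral_Icc_eq_integral_Ioc,
      ← intervalIntegral.integral_of_le (by linarith : x₁ - δ ≤ x₁ + δ), ← hFd]
  -- Part 3: positivity
  have hpos3 : 0 < (F (x₁ + δ) + F (x₁ - δ)) / 2 - F x₁ := by
    have c1 : Continuous fun u : ℝ => f (x₁ + u) := hf_cont.comp (by continuity)
    have c2 : Continuous fun u : ℝ => f (x₁ - u) := hf_cont.comp (by continuity)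
    have e1 : (∫ u in (0:ℝ)..δ, f (x₁ + u)) = ∫ t in x₁..(x₁ + δ), f t := by
      simpa using intervalIntegral.integral_comp_add_left f x₁
    have e2 : (∫ u in (0:ℝ)..δ, f (x₁ - u)) = ∫ t in (x₁ - δ)..x₁, f t := by
      simpa using intervalIntegral.integral_comp_sub_left f x₁
    have hI : 0 < ∫ u in (0:ℝ)..δ, (f (x₁ + u) - f (x₁ - u)) := by
      apply intervalIntegral.intervalIntegral_pos_of_pos_on ((c1.sub c2).intervalIntegrable 0 δ)
      · intro u hu
        have hs : f (x₁ - u) = f (u - x₁) := by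
          rw [← hf_symm (u - x₁)]; ring_nf
        have habs : |x₁ + u| < u - x₁ := by
          rw [abs_lt]; constructor <;> [linarith [hu.1]; linarith [hu.1]]
        have := key_lt (x₁ + u) (u - x₁) habs
        rw [← hs] at this
        simp only [Pi.sub_apply]; linarith
      · exact hδ
    have hsub : (∫ u in (0:ℝ)..δ, (f (x₁ + u) - f (x₁ - u)))
        = (∫ u in (0:ℝ)..δ, f (x₁ + u)) - ∫ u in (0:ℝ)..δ, f (x₁ - u) :=
      intervalIntegral.integral_sub (c1.intervalIntegrable 0 δ) (c2.intervalIntegrable 0 δ)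
    rw [hsub, e1, e2, ← hFd, ← hFd] at hI
    linarith
  -- Part 2: the limit
  have hlim : Filter.Tendsto (fun ε : ℝ => payoff f δ (x₁ + ε) x₁ - payoff f δ x₁ x₁)
      (nhdsWithin 0 (Ioi 0)) (nhds ((F (x₁ + δ) + F (x₁ - δ)) / 2 - F x₁)) := by
    have heq : ∀ᶠ ε in nhdsWithin 0 (Ioi 0),
        (fun ε : ℝ => (F (x₁ + ε + δ) - F (x₁ + ε / 2)) - (F (x₁ + δ) - F (x₁ - δ)) / 2) ε
          = payoff f δ (x₁ + ε) x₁ - payoff f δ x₁ x₁ := by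
      filter_upwards [Ioo_mem_nhdsGT_of_mem (left_mem_Ico.2 (by linarith : (0:ℝ) < 2 * δ))]
        with ε hε
      rw [payoff_gt (x₁ + ε) (by linarith [hε.1]), payoff_eq]
      have hmax : max (x₁ + ε - δ) ((x₁ + ε + x₁) / 2) = x₁ + ε / 2 := by
        rw [max_eq_right (by linarith [hε.2])]; ring
      rw [hmax]
    have hcont : Continuous fun ε : ℝ =>
        (F (x₁ + ε + δ) - F (x₁ + ε / 2)) - (F (x₁ + δ) - F (x₁ - δ)) / 2 := by
      apply Continuous.sub _ continuous_const
      exact (hFc.comp (by continuity)).sub (hFc.comp (by continuity))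
    have hT := (hcont.tendsto 0).mono_left (nhdsWithin_le_nhds (s := Ioi 0))
    have hval : (F (x₁ + 0 + δ) - F (x₁ + 0 / 2)) - (F (x₁ + δ) - F (x₁ - δ)) / 2
        = (F (x₁ + δ) + F (x₁ - δ)) / 2 - F x₁ := by
      norm_num; ring
    rw [hval] at hT
    exact hT.congr' heq
  -- strict improvement lemmas
  have hmirror : ∀ x₂ : ℝ, x₂ < x₁ → payoff f δ x₂ x₁ < payoff f δ (2 * x₁ - x₂) x₁ := by
    intro x₂ hlt
    set a := x₂ - δ with ha
    set b := min (x₂ + δ) ((x₂ + x₁) / 2) with hb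
    have hab : a < b := lt_min (by simp [ha]; linarith) (by simp [ha]; linarith)
    have hbu : b ≤ (x₂ + x₁) / 2 := min_le_right _ _
    have hP2 : payoff f δ x₂ x₁ = F b - F a := payoff_lt x₂ hlt
    have hP1 : payoff f δ (2 * x₁ - x₂) x₁ = F (2 * x₁ - a) - F (2 * x₁ - b) := by
      rw [payoff_gt (2 * x₁ - x₂) (by linarith)]
      have h1 : 2 * x₁ - x₂ + δ = 2 * x₁ - a := by rw [ha]; ring
      have h2 : max (2 * x₁ - x₂ - δ) ((2 * x₁ - x₂ + x₁) / 2) = 2 * x₁ - b := by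
        rcases le_total (x₂ + δ) ((x₂ + x₁) / 2) with h | h
        · rw [hb, min_eq_left h, max_eq_left (by linarith)]; ring
        · rw [hb, min_eq_right h, max_eq_right (by linarith)]; ring
      rw [h1, h2]
    have c1 : Continuous fun s : ℝ => f (2 * x₁ - s) := hf_cont.comp (by continuity)
    have e3 : (∫ s in a..b, f (2 * x₁ - s)) = ∫ t in (2 * x₁ - b)..(2 * x₁ - a), f t :=
      intervalIntegral.integral_comp_sub_left f (2 * x₁)
    have hI : 0 < ∫ s in a..b, (f (2 * x₁ - s) - f s) := by
      apply intervalIntegral.intervalIntegral_pos_of_pos_on ((c1.sub hf_cont).intervalIntegrable a b)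
      · intro s hs
        have hsx : s < x₁ := by
          have := hs.2
          have : s < (x₂ + x₁) / 2 := lt_of_lt_of_le this hbu
          linarith
        have habs : |2 * x₁ - s| < -s := by
          rw [abs_lt]; constructor <;> [linarith; linarith]
        have := key_lt (2 * x₁ - s) (-s) habs
        rw [hf_symm s] at this
        simp only [Pi.sub_apply]; linarith
      · exact hab
    have hsub : (∫ s in a..b, (f (2 * x₁ - s) - f s))
        = (∫ s in a..b, f (2 * x₁ - s)) - ∫ s in a..b, f s :=
      intervalIntegral.integral_sub (c1.intervalIntegrable a b) (hf_cont.intervalIntegrable a b)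
    rw [hsub, e3, ← hFd, ← hFd] at hI
    linarith [hP1, hP2, hI]
  have hfar : ∀ x₂ : ℝ, x₁ + 2 * δ < x₂ → payoff f δ x₂ x₁ < payoff f δ (x₁ + 2 * δ) x₁ := by
    intro x₂ hlt
    have hP1 : payoff f δ (x₁ + 2 * δ) x₁ = F (x₁ + 3 * δ) - F (x₁ + δ) := by
      rw [payoff_gt (x₁ + 2 * δ) (by linarith)]
      have h1 : x₁ + 2 * δ + δ = x₁ + 3 * δ := by ring
      have h2 : max (x₁ + 2 * δ - δ) ((x₁ + 2 * δ + x₁) / 2) = x₁ + δ := by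
        rw [max_eq_left (by linarith)]; ring
      rw [h1, h2]
    have hP2 : payoff f δ x₂ x₁ = F (x₂ + δ) - F (x₂ - δ) := by
      rw [payoff_gt x₂ (by linarith)]
      rw [max_eq_left (by linarith)]
    have c1 : Continuous fun s : ℝ => f (s + 2 * δ) := hf_cont.comp (by continuity)
    have e4 : (∫ s in (x₁ + δ)..(x₂ - δ), f (s + 2 * δ))
        = ∫ t in (x₁ + 3 * δ)..(x₂ + δ), f t := by
      rw [intervalIntegral.integral_comp_add_right f (2 * δ)]
      congr 1 <;> ring
    have hI : 0 < ∫ s in (x₁ + δ)..(x₂ - δ), (f s - f (s + 2 * δ)) := by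
      apply intervalIntegral.intervalIntegral_pos_of_pos_on ((hf_cont.sub c1).intervalIntegrable _ _)
      · intro s hs
        have habs : |s| < s + 2 * δ := by
          rw [abs_lt]; constructor <;> [linarith [hs.1]; linarith]
        have := key_lt s (s + 2 * δ) habs
        simp only [Pi.sub_apply]; linarith
      · linarith
    have hsub : (∫ s in (x₁ + δ)..(x₂ - δ), (f s - f (s + 2 * δ)))
        = (∫ s in (x₁ + δ)..(x₂ - δ), f s) - ∫ s in (x₁ + δ)..(x₂ - δ), f (s + 2 * δ) :=
      intervalIntegral.integral_sub (hf_cont.intervalIntegrable _ _) (c1.intervalIntegrable _ _)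
    rw [hsub, e4, ← hFd, ← hFd] at hI
    linarith [hP1, hP2, hI]
  refine ⟨?_, hlim, hpos3⟩
  intro x₂ hbest
  constructor
  · by_contra h
    push_neg at h
    rcases lt_or_eq_of_le h with hlt | heq
    · exact absurd (hbest (2 * x₁ - x₂)) (not_le.2 (hmirror x₂ hlt))
    · have hev : ∀ᶠ ε in nhdsWithin 0 (Ioi 0),
          0 < payoff f δ (x₁ + ε) x₁ - payoff f δ x₁ x₁ :=
        hlim.eventually (eventually_gt_nhds hpos3)
      obtain ⟨ε, hε⟩ := hev.exists
      have := hbest (x₁ + ε)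
      rw [heq] at this
      linarith
  · by_contra h
    push_neg at h
    exact absurd (hbest (x₁ + 2 * δ)) (not_le.2 (hfar x₂ h))
end

section
/- In the fixed-price location game, any pure Nash equilibrium (x₁, x₂) with x₁ ≤ x₂ satisfies x₁ ∈ [−2δ, 0] and x₂ ∈ [0, 2δ]. -/
open MeasureTheory Set

namespace Stmt6Aux

/-- Antiderivative of `f` based at `0`. -/
noncomputable def F (f : ℝ → ℝ) (x : ℝ) : ℝ := ∫ t in (0:ℝ)..x, f t

/-- Mass of the ball of radius `δ` around `c`. -/
noncomputable def M (f : ℝ → ℝ) (δ c : ℝ) : ℝ := F f (c + δ) - F f (c - δ)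

theorem hasDerivAt_F {f : ℝ → ℝ} (hf_cont : Continuous f) (x : ℝ) :
    HasDerivAt (F f) (f x) x :=
  intervalIntegral.integral_hasDerivAt_right (hf_cont.intervalIntegrable _ _)
    hf_cont.stronglyMeasurable.stronglyMeasurableAtFilter hf_cont.continuousAt

theorem continuous_F {f : ℝ → ℝ} (hf_cont : Continuous f) : Continuous (F f) :=
  continuous_iff_continuousAt.2 fun x => (hasDerivAt_F hf_cont x).continuousAt

theorem F_sub {f : ℝ → ℝ} (hf_cont : Continuous f) (a b : ℝ) :
    F f b - F f a = ∫ t in a..b, f t := by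
  simpa [F] using intervalIntegral.integral_interval_sub_left
    (hf_cont.intervalIntegrable (0:ℝ) b) (hf_cont.intervalIntegrable (0:ℝ) a)

theorem integral_Icc_eq {f : ℝ → ℝ} (hf_cont : Continuous f) {a b : ℝ} (hab : a ≤ b) :
    ∫ t in Icc a b, f t = F f b - F f a := by
  rw [F_sub hf_cont, intervalIntegral.integral_of_le hab, integral_Icc_eq_integral_Ioc]

theorem F_neg {f : ℝ → ℝ} (hf_symm : ∀ t, f (-t) = f t) (x : ℝ) :
    F f (-x) = - F f x := by
  have h1 : (∫ t in (0:ℝ)..x, f (-t)) = ∫ t in (-x)..(0:ℝ), f t := by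
    simpa using intervalIntegral.integral_comp_neg (a := (0:ℝ)) (b := x) f
  have h2 : (∫ t in (0:ℝ)..x, f (-t)) = F f x := by
    unfold F; congr 1; ext t; rw [hf_symm]
  have h3 : F f (-x) = - ∫ t in (-x)..(0:ℝ), f t := by
    unfold F; rw [intervalIntegral.integral_symm]
  rw [h3, ← h1, h2]

theorem f_abs {f : ℝ → ℝ} (hf_symm : ∀ t, f (-t) = f t) (t : ℝ) : f t = f |t| := by
  rcases le_or_gt 0 t with h | h
  · rw [abs_of_nonneg h]
  · rw [abs_of_neg h, hf_symm]

theorem f_lt_of_abs_lt {f : ℝ → ℝ} (hf_symm : ∀ t, f (-t) = f t)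
    (hf_anti : StrictAntiOn f (Ici 0)) {a b : ℝ} (h : |a| < |b|) : f b < f a := by
  rw [f_abs hf_symm a, f_abs hf_symm b]
  exact hf_anti (abs_nonneg a) (abs_nonneg b) h

theorem abs_eq_of_f_eq {f : ℝ → ℝ} (hf_symm : ∀ t, f (-t) = f t)
    (hf_anti : StrictAntiOn f (Ici 0)) {a b : ℝ} (h : f a = f b) : |a| = |b| := by
  rcases lt_trichotomy |a| |b| with hc | hc | hc
  · exact absurd h (ne_of_gt (f_lt_of_abs_lt hf_symm hf_anti hc))
  · exact hc
  · exact absurd h (ne_of_lt (f_lt_of_abs_lt hf_symm hf_anti hc))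

theorem ball_eq (c δ : ℝ) : {t : ℝ | |t - c| ≤ δ} = Icc (c - δ) (c + δ) := by
  ext t; simp only [mem_setOf_eq, mem_Icc, abs_le]
  constructor <;> intro h <;> constructor <;> linarith [h.1, h.2]

theorem closer_iff {a b t : ℝ} (h : a < b) : |t - a| ≤ |t - b| ↔ t ≤ (a + b) / 2 := by
  constructor
  · intro hab
    have h2 : |t - a| ^ 2 ≤ |t - b| ^ 2 := pow_le_pow_left₀ (abs_nonneg _) hab 2
    rw [sq_abs, sq_abs] at h2
    nlinarith
  · intro ht
    rcases abs_cases (t - b) with ⟨hb, _⟩ | ⟨hb, _⟩ <;> rw [hb, abs_le] <;>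
      constructor <;> linarith

theorem farther_iff {a b t : ℝ} (h : b < a) : |t - a| ≤ |t - b| ↔ (a + b) / 2 ≤ t := by
  have key := closer_iff (t := -t) (neg_lt_neg h)
  have e : |(-t) - (-a)| = |t - a| := by
    rw [show (-t) - (-a) = -(t - a) by ring, abs_neg]
  have e' : |(-t) - (-b)| = |t - b| := by
    rw [show (-t) - (-b) = -(t - b) by ring, abs_neg]
  rw [e, e'] at key
  rw [key]; constructor <;> intro <;> linarith

theorem payoff_eq_self {f : ℝ → ℝ} (hf_cont : Continuous f) {δ : ℝ} (hδ : 0 < δ) (c : ℝ) :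
    payoff f δ c c = (F f (c + δ) - F f (c - δ)) / 2 := by
  rw [payoff, if_pos rfl, ball_eq, integral_Icc_eq hf_cont (by linarith)]

theorem payoff_lt {f : ℝ → ℝ} (hf_cont : Continuous f) {δ : ℝ} (hδ : 0 < δ)
    {own opp : ℝ} (h : own < opp) :
    payoff f δ own opp
      = F f (min (own + δ) ((own + opp) / 2)) - F f (own - δ) := by
  rw [payoff, if_neg h.ne]
  have hset : {t : ℝ | |t - own| ≤ δ ∧ |t - own| ≤ |t - opp|}
      = Icc (own - δ) (min (own + δ) ((own + opp) / 2)) := by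
    ext t
    simp only [mem_setOf_eq, mem_Icc, abs_le, closer_iff h, le_min_iff]
    constructor
    · rintro ⟨⟨h1, h2⟩, h3⟩; exact ⟨by linarith, by linarith, h3⟩
    · rintro ⟨h1, h2, h3⟩; exact ⟨⟨by linarith, by linarith⟩, h3⟩
  rw [hset, integral_Icc_eq hf_cont]
  exact le_min (by linarith) (by linarith)

theorem payoff_gt {f : ℝ → ℝ} (hf_cont : Continuous f) {δ : ℝ} (hδ : 0 < δ)
    {own opp : ℝ} (h : opp < own) :
    payoff f δ own opp
      = F f (own + δ) - F f (max (own - δ) ((own + opp) / 2)) := by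
  rw [payoff, if_neg h.ne']
  have hset : {t : ℝ | |t - own| ≤ δ ∧ |t - own| ≤ |t - opp|}
      = Icc (max (own - δ) ((own + opp) / 2)) (own + δ) := by
    ext t
    simp only [mem_setOf_eq, mem_Icc, abs_le, farther_iff h, max_le_iff]
    constructor
    · rintro ⟨⟨h1, h2⟩, h3⟩; exact ⟨⟨by linarith, h3⟩, by linarith⟩
    · rintro ⟨⟨h1, h3⟩, h2⟩; exact ⟨⟨by linarith, by linarith⟩, h3⟩
  rw [hset, integral_Icc_eq hf_cont]
  exact max_le (by linarith) (by linarith)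

/-- full-ball payoff when the opponent is at distance ≥ 2δ -/
theorem payoff_full {f : ℝ → ℝ} (hf_cont : Continuous f) {δ : ℝ} (hδ : 0 < δ)
    {y opp : ℝ} (hne : y ≠ opp) (hfar : 2 * δ ≤ |y - opp|) :
    payoff f δ y opp = M f δ y := by
  rw [payoff, if_neg hne]
  have hset : {t : ℝ | |t - y| ≤ δ ∧ |t - y| ≤ |t - opp|} = Icc (y - δ) (y + δ) := by
    ext t
    simp only [mem_setOf_eq, mem_Icc]
    constructor
    · rintro ⟨h1, _⟩; rw [abs_le] at h1; exact ⟨by linarith [h1.1], by linarith [h1.2]⟩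
    · rintro ⟨h1, h2⟩
      have ht : |t - y| ≤ δ := by rw [abs_le]; exact ⟨by linarith, by linarith⟩
      refine ⟨ht, ?_⟩
      have tri : |y - opp| ≤ |y - t| + |t - opp| := abs_sub_le y t opp
      have e : |y - t| = |t - y| := abs_sub_comm y t
      linarith
  rw [hset, integral_Icc_eq hf_cont (by linarith)]; rfl

theorem M_symm {f : ℝ → ℝ} (hf_cont : Continuous f) (hf_symm : ∀ t, f (-t) = f t)
    (δ c : ℝ) : M f δ (-c) = M f δ c := by
  have h1 : M f δ c = ∫ t in (c - δ)..(c + δ), f t := (F_sub hf_cont _ _)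
  have h2 : M f δ (-c) = ∫ t in (-c - δ)..(-c + δ), f t := (F_sub hf_cont _ _)
  rw [h1, h2]
  have h3 : (∫ t in (c - δ)..(c + δ), f (-t)) = ∫ t in (-(c+δ))..(-(c-δ)), f t :=
    intervalIntegral.integral_comp_neg f
  have h4 : (∫ t in (c - δ)..(c + δ), f (-t)) = ∫ t in (c - δ)..(c + δ), f t := by
    congr 1; ext t; rw [hf_symm]
  rw [← h4, h3]
  norm_num [show -(c+δ) = -c - δ by ring, show -(c-δ) = -c + δ by ring]

theorem M_abs {f : ℝ → ℝ} (hf_cont : Continuous f) (hf_symm : ∀ t, f (-t) = f t)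
    (δ c : ℝ) : M f δ c = M f δ |c| := by
  rcases le_or_gt 0 c with h | h
  · rw [abs_of_nonneg h]
  · rw [abs_of_neg h, M_symm hf_cont hf_symm]

theorem M_anti {f : ℝ → ℝ} (hf_cont : Continuous f) (hf_symm : ∀ t, f (-t) = f t)
    (hf_anti : StrictAntiOn f (Ici 0)) {δ : ℝ} (hδ : 0 < δ)
    {c c' : ℝ} (hc : 0 ≤ c) (hcc : c < c') : M f δ c' < M f δ c := by
  have key : M f δ c - M f δ c'
      = ∫ t in (c - δ)..(c' - δ), (f t - f (t + 2*δ)) := by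
    rw [intervalIntegral.integral_sub (hf_cont.intervalIntegrable _ _)
      ((show Continuous fun t => f (t + 2*δ) by continuity).intervalIntegrable _ _)]
    rw [intervalIntegral.integral_comp_add_right (fun t => f t) (2*δ)]
    rw [M, M, ← F_sub hf_cont (c - δ) (c' - δ),
      ← F_sub hf_cont (c - δ + 2*δ) (c' - δ + 2*δ)]
    ring_nf
  have pos : 0 < ∫ t in (c - δ)..(c' - δ), (f t - f (t + 2*δ)) := by
    apply intervalIntegral.intervalIntegral_pos_of_pos_on
    · exact ((show Continuous fun t => f t - f (t + 2*δ) by continuity).intervalIntegrable _ _)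
    · intro t ht
      have h1 : c - δ < t := ht.1
      have habs : |t| < |t + 2*δ| := by
        have h2 : 0 < t + 2*δ := by
          rcases le_or_gt 0 t with h' | h' <;> linarith
        rw [abs_of_pos h2, abs_lt]
        constructor <;> [linarith; nlinarith]
      linarith [f_lt_of_abs_lt hf_symm hf_anti habs]
    · linarith
  linarith

theorem payoff_le_M {f : ℝ → ℝ} (hf_nonneg : ∀ t, 0 ≤ f t) (hf_int : Integrable f)
    (hf_cont : Continuous f) {δ : ℝ} (hδ : 0 < δ) (own opp : ℝ) :
    payoff f δ own opp ≤ M f δ own := by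
  have hM : M f δ own = ∫ t in Icc (own - δ) (own + δ), f t :=
    (integral_Icc_eq hf_cont (by linarith)).symm
  have hM0 : 0 ≤ M f δ own := by
    rw [hM]
    exact setIntegral_nonneg measurableSet_Icc fun t _ => hf_nonneg t
  rw [payoff]
  split_ifs with h
  · rw [ball_eq, ← hM]; linarith
  · rw [hM]
    apply setIntegral_mono_set (hf_int.integrableOn)
      (Filter.Eventually.of_forall fun t => hf_nonneg t)
    apply HasSubset.Subset.eventuallyLE
    intro t ht
    have h1 : |t - own| ≤ δ := ht.1
    rw [abs_le] at h1
    rw [mem_Icc]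
    exact ⟨by linarith [h1.1], by linarith [h1.2]⟩

theorem payoff_reflect {f : ℝ → ℝ} (hf_cont : Continuous f) (hf_symm : ∀ t, f (-t) = f t)
    {δ : ℝ} (hδ : 0 < δ) (a b : ℝ) :
    payoff f δ (-a) (-b) = payoff f δ a b := by
  rcases lt_trichotomy a b with h | h | h
  · rw [payoff_gt hf_cont hδ (by linarith : -b < -a), payoff_lt hf_cont hδ h]
    rw [show -a - δ = -(a + δ) by ring, show (-a + -b)/2 = -((a+b)/2) by ring,
      max_neg_neg, show -a + δ = -(a - δ) by ring, F_neg hf_symm, F_neg hf_symm]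
    ring
  · subst h
    rw [payoff_eq_self hf_cont hδ, payoff_eq_self hf_cont hδ]
    rw [show -a - δ = -(a + δ) by ring, show -a + δ = -(a - δ) by ring,
      F_neg hf_symm, F_neg hf_symm]
    ring
  · rw [payoff_lt hf_cont hδ (by linarith : -a < -b), payoff_gt hf_cont hδ h]
    rw [show -a + δ = -(a - δ) by ring, show (-a + -b)/2 = -((a+b)/2) by ring,
      min_neg_neg, show -a - δ = -(a + δ) by ring, F_neg hf_symm, F_neg hf_symm]
    ring

theorem equilibrium_reflect {f : ℝ → ℝ} (hf_cont : Continuous f)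
    (hf_symm : ∀ t, f (-t) = f t) {δ : ℝ} (hδ : 0 < δ) {x₁ x₂ : ℝ}
    (heq : IsEquilibrium f δ x₁ x₂) : IsEquilibrium f δ (-x₂) (-x₁) := by
  constructor
  · intro y
    have := heq.2 (-y)
    rw [← payoff_reflect hf_cont hf_symm hδ (-y) x₁, neg_neg] at this
    rw [← payoff_reflect hf_cont hf_symm hδ x₂ x₁] at this
    exact this
  · intro y
    have := heq.1 (-y)
    rw [← payoff_reflect hf_cont hf_symm hδ (-y) x₂, neg_neg] at this
    rw [← payoff_reflect hf_cont hf_symm hδ x₁ x₂] at this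
    exact this

/-- Claim B : in equilibrium, `x₂ ≤ 2δ`. -/
theorem claimB {f : ℝ → ℝ}
    (hf_nonneg : ∀ t, 0 ≤ f t) (hf_int : Integrable f) (hf_cont : Continuous f)
    (hf_symm : ∀ t, f (-t) = f t) (hf_anti : StrictAntiOn f (Ici 0))
    {δ : ℝ} (hδ : 0 < δ) {x₁ x₂ : ℝ} (hle : x₁ ≤ x₂)
    (heq : IsEquilibrium f δ x₁ x₂) : x₂ ≤ 2 * δ := by
  by_contra hx
  push_neg at hx
  -- choose a deviation y for firm 2 with a full ball and |y| < x₂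
  obtain ⟨y, hyne, hyfar, hyabs⟩ :
      ∃ y : ℝ, y ≠ x₁ ∧ 2 * δ ≤ |y - x₁| ∧ |y| < x₂ := by
    rcases lt_or_ge (x₁ + 2*δ) x₂ with hc | hc
    · refine ⟨max (x₁ + 2*δ) 0, ?_, ?_, ?_⟩
      · have : x₁ < max (x₁ + 2*δ) 0 := lt_of_lt_of_le (by linarith) (le_max_left _ _)
        exact this.ne'
      · rw [abs_of_nonneg (by linarith [le_max_left (x₁ + 2*δ) 0])]
        linarith [le_max_left (x₁ + 2*δ) 0]
      · rw [abs_of_nonneg (le_max_right _ _)]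
        exact max_lt hc (by linarith)
    · have hx₁ : 0 < x₁ := by linarith
      refine ⟨x₁ - 2*δ, by intro h; nlinarith [sub_eq_iff_eq_add.mp h], ?_, ?_⟩
      · rw [show x₁ - 2*δ - x₁ = -(2*δ) by ring, abs_neg, abs_of_nonneg (by linarith)]
      · rw [abs_lt]; constructor <;> linarith
  have hdev : payoff f δ y x₁ = M f δ y := payoff_full hf_cont hδ hyne hyfar
  have hlt : M f δ x₂ < M f δ y := by
    rw [M_abs hf_cont hf_symm δ y]
    exact M_anti hf_cont hf_symm hf_anti hδ (abs_nonneg y) hyabs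
  have h1 := heq.2 y
  have h2 := payoff_le_M hf_nonneg hf_int hf_cont hδ x₂ x₁
  rw [hdev] at h1
  linarith

/-- Claim A : in equilibrium with `x₁ ≤ x₂`, `x₁ ≤ 0`. -/
theorem claimA {f : ℝ → ℝ}
    (hf_nonneg : ∀ t, 0 ≤ f t) (hf_int : Integrable f) (hf_cont : Continuous f)
    (hf_symm : ∀ t, f (-t) = f t) (hf_anti : StrictAntiOn f (Ici 0))
    {δ : ℝ} (hδ : 0 < δ) {x₁ x₂ : ℝ} (hle : x₁ ≤ x₂)
    (heq : IsEquilibrium f δ x₁ x₂) : x₁ ≤ 0 := by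
  by_contra hx
  push_neg at hx
  rcases eq_or_lt_of_le hle with heq12 | hlt12
  · -- coincident case x₁ = x₂
    subst heq12
    set x := x₁ with hxdef
    -- limit of deviations from the left
    set g : ℝ → ℝ := fun y => F f ((y + x)/2) - F f (y - δ) with hg
    have hgc : Continuous g := by
      apply Continuous.sub
      · exact (continuous_F hf_cont).comp (by continuity)
      · exact (continuous_F hf_cont).comp (by continuity)
    have htend : Filter.Tendsto g (nhdsWithin x (Iio x)) (nhds (g x)) :=
      (hgc.tendsto x).mono_left nhdsWithin_le_nhds
    have hev : ∀ᶠ y in nhdsWithin x (Iio x), g y ≤ payoff f δ x x := by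
      filter_upwards [Ioo_mem_nhdsLT_of_mem
        (show x ∈ Ioc (x - 2*δ) x from ⟨by linarith, le_refl x⟩)] with y hy
      have hylt : y < x := hy.2
      have := heq.1 y
      rw [payoff_lt hf_cont hδ hylt] at this
      have hmin : min (y + δ) ((y + x)/2) = (y + x)/2 := by
        apply min_eq_right; have := hy.1; linarith
      rw [hmin] at this
      exact this
    have hle1 : g x ≤ payoff f δ x x :=
      le_of_tendsto htend hev
    rw [payoff_eq_self hf_cont hδ] at hle1
    have hgx : g x = F f x - F f (x - δ) := by
      simp only [hg]; norm_num
    -- hence ∫_{x-δ}^x f ≤ ∫_x^{x+δ} f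
    have hineq : F f x - F f (x - δ) ≤ F f (x + δ) - F f x := by
      rw [hgx] at hle1; linarith
    -- but strictly the reverse holds since x > 0
    have hrefl : (∫ t in (x - δ)..x, f (2*x - t)) = ∫ t in x..(x + δ), f t := by
      rw [intervalIntegral.integral_comp_sub_left f (2*x)]
      norm_num [show 2*x - x = x by ring, show 2*x - (x - δ) = x + δ by ring]
    have hstrict : 0 < ∫ t in (x - δ)..x, (f t - f (2*x - t)) := by
      apply intervalIntegral.intervalIntegral_pos_of_pos_on
      · exact ((show Continuous fun t => f t - f (2*x - t) by continuity).intervalIntegrable _ _)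
      · intro t ht
        have habs : |t| < |2*x - t| := by
          have h2 : 0 < 2*x - t := by linarith [ht.2]
          rw [abs_of_pos h2, abs_lt]
          constructor <;> linarith [ht.1, ht.2]
        linarith [f_lt_of_abs_lt hf_symm hf_anti habs]
      · linarith
    have hsplit : (∫ t in (x - δ)..x, (f t - f (2*x - t)))
        = (F f x - F f (x - δ)) - (F f (x + δ) - F f x) := by
      rw [intervalIntegral.integral_sub (hf_cont.intervalIntegrable _ _)
        ((show Continuous fun t => f (2*x - t) by continuity).intervalIntegrable _ _),
        hrefl, ← F_sub hf_cont (x - δ) x, ← F_sub hf_cont x (x + δ)]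
    rw [hsplit] at hstrict
    linarith
  · -- x₁ < x₂
    rcases le_or_gt (x₁ + 2*δ) x₂ with hsep | hclose
    · -- separated: firm 1 has a full ball; deviate to 0
      have hP1 : payoff f δ x₁ x₂ = M f δ x₁ := by
        rw [payoff_lt hf_cont hδ hlt12]
        have hmin : min (x₁ + δ) ((x₁ + x₂)/2) = x₁ + δ := by
          apply min_eq_left; linarith
        rw [hmin]; rfl
      have hdev : payoff f δ 0 x₂ = M f δ 0 := by
        apply payoff_full hf_cont hδ
        · intro h; rw [← h] at hsep; linarith
        · rw [show (0:ℝ) - x₂ = -x₂ by ring, abs_neg, abs_of_nonneg (by linarith)]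
          linarith
      have h1 := heq.1 0
      rw [hdev, hP1] at h1
      have := M_anti hf_cont hf_symm hf_anti hδ (le_refl 0) (show (0:ℝ) < x₁ from hx)
      linarith
    · -- interior competition: first-order conditions
      set m := (x₁ + x₂) / 2 with hm
      -- firm 2's FOC
      have hfoc2 : f (x₂ + δ) - f m * (2⁻¹) = 0 := by
        have hloc : IsLocalMax (fun y => F f (y + δ) - F f ((x₁ + y)/2)) x₂ := by
          filter_upwards [isOpen_Ioo.mem_nhds
            (show x₂ ∈ Ioo x₁ (x₁ + 2*δ) from ⟨hlt12, by linarith⟩)] with y hy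
          have h1 := heq.2 y
          rw [payoff_gt hf_cont hδ hy.1] at h1
          have hmax : max (y - δ) ((y + x₁)/2) = (x₁ + y)/2 := by
            rw [max_eq_right (by linarith [hy.2] : y - δ ≤ (y + x₁)/2)]
            ring_nf
          rw [hmax] at h1
          rw [payoff_gt hf_cont hδ hlt12] at h1
          have hmax2 : max (x₂ - δ) ((x₂ + x₁)/2) = (x₁ + x₂)/2 := by
            rw [max_eq_right (by linarith : x₂ - δ ≤ (x₂ + x₁)/2)]
            ring_nf
          rw [hmax2] at h1
          exact h1
        have hd : HasDerivAt (fun y => F f (y + δ) - F f ((x₁ + y)/2))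
            (f (x₂ + δ) - f ((x₁ + x₂)/2) * (2⁻¹)) x₂ := by
          have d1 : HasDerivAt (fun y : ℝ => F f (y + δ)) (f (x₂ + δ)) x₂ := by
            have := (hasDerivAt_F hf_cont (x₂ + δ)).comp x₂
              ((hasDerivAt_id x₂).add_const δ)
            simp only [Function.comp_def, id, mul_one] at this; exact this
          have d2 : HasDerivAt (fun y : ℝ => F f ((x₁ + y)/2))
              (f ((x₁ + x₂)/2) * (2⁻¹)) x₂ := by
            have inner : HasDerivAt (fun y : ℝ => (x₁ + y)/2) (2⁻¹) x₂ := by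
              have := ((hasDerivAt_id x₂).const_add x₁).div_const 2
              simpa using this
            exact (hasDerivAt_F hf_cont ((x₁ + x₂)/2)).comp x₂ inner
          exact d1.sub d2
        exact hloc.hasDerivAt_eq_zero hd
      -- firm 1's FOC
      have hfoc1 : f m * (2⁻¹) - f (x₁ - δ) = 0 := by
        have hloc : IsLocalMax (fun y => F f ((y + x₂)/2) - F f (y - δ)) x₁ := by
          filter_upwards [isOpen_Ioo.mem_nhds
            (show x₁ ∈ Ioo (x₂ - 2*δ) x₂ from ⟨by linarith, hlt12⟩)] with y hy
          have h1 := heq.1 y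
          rw [payoff_lt hf_cont hδ hy.2] at h1
          have hmin : min (y + δ) ((y + x₂)/2) = (y + x₂)/2 := by
            apply min_eq_right; linarith [hy.1]
          rw [hmin] at h1
          rw [payoff_lt hf_cont hδ hlt12] at h1
          have hmin2 : min (x₁ + δ) ((x₁ + x₂)/2) = (x₁ + x₂)/2 := by
            apply min_eq_right; linarith
          rw [hmin2] at h1
          exact h1
        have hd : HasDerivAt (fun y => F f ((y + x₂)/2) - F f (y - δ))
            (f ((x₁ + x₂)/2) * (2⁻¹) - f (x₁ - δ)) x₁ := by
          have d1 : HasDerivAt (fun y : ℝ => F f ((y + x₂)/2))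
              (f ((x₁ + x₂)/2) * (2⁻¹)) x₁ := by
            have inner : HasDerivAt (fun y : ℝ => (y + x₂)/2) (2⁻¹) x₁ := by
              have := ((hasDerivAt_id x₁).add_const x₂).div_const 2
              simpa using this
            exact (hasDerivAt_F hf_cont ((x₁ + x₂)/2)).comp x₁ inner
          have d2 : HasDerivAt (fun y : ℝ => F f (y - δ)) (f (x₁ - δ)) x₁ := by
            have := (hasDerivAt_F hf_cont (x₁ - δ)).comp x₁
              ((hasDerivAt_id x₁).sub_const δ)
            simp only [Function.comp_def, id, mul_one] at this; exact this
          exact d1.sub d2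
        exact hloc.hasDerivAt_eq_zero hd
      -- combine: f(x₁ - δ) = f(x₂ + δ), so |x₁ - δ| = |x₂ + δ|
      have hfe : f (x₁ - δ) = f (x₂ + δ) := by
        have h1 : f (x₁ - δ) = f m * (2⁻¹) := by linarith
        have h2 : f (x₂ + δ) = f m * (2⁻¹) := by linarith
        rw [h1, h2]
      have habs := abs_eq_of_f_eq hf_symm hf_anti hfe
      rw [abs_of_pos (show (0:ℝ) < x₂ + δ by linarith)] at habs
      rcases abs_cases (x₁ - δ) with ⟨he, _⟩ | ⟨he, _⟩ <;> rw [he] at habs <;> linarith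

end Stmt6Aux

theorem stmt_6 (f : ℝ → ℝ)
    (hf_nonneg : ∀ t, 0 ≤ f t)
    (hf_int : Integrable f)
    (hf_mass : ∫ t, f t = 1)
    (hf_cont : Continuous f)
    (hf_symm : ∀ t, f (-t) = f t)
    (hf_anti : StrictAntiOn f (Ici 0))
    (δ : ℝ) (hδ : 0 < δ)
    (x₁ x₂ : ℝ) (hle : x₁ ≤ x₂)
    (heq : IsEquilibrium f δ x₁ x₂) :
    x₁ ∈ Icc (-(2 * δ)) 0 ∧ x₂ ∈ Icc 0 (2 * δ) := by
  have h1 : x₁ ≤ 0 :=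
    Stmt6Aux.claimA hf_nonneg hf_int hf_cont hf_symm hf_anti hδ hle heq
  have h2 : x₂ ≤ 2 * δ :=
    Stmt6Aux.claimB hf_nonneg hf_int hf_cont hf_symm hf_anti hδ hle heq
  have heq' := Stmt6Aux.equilibrium_reflect hf_cont hf_symm hδ heq
  have h3 : -x₂ ≤ 0 :=
    Stmt6Aux.claimA hf_nonneg hf_int hf_cont hf_symm hf_anti hδ (by linarith) heq'
  have h4 : -x₁ ≤ 2 * δ :=
    Stmt6Aux.claimB hf_nonneg hf_int hf_cont hf_symm hf_anti hδ (by linarith) heq'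
  exact ⟨⟨by linarith, h1⟩, ⟨by linarith, h2⟩⟩
end

section
/- In the fixed-price location game with log-concave, symmetric (about 0), strictly decreasing on [0,∞), continuous density f, the profile (0,0) is a pure Nash equilibrium if and only if δ ≥ κ, where κ > 0 is the unique positive solution of f(κ) = f(0)/2. -/
open MeasureTheory Set

/-- Auxiliary: integrating a symmetric function over the reflection of a set. -/
lemma integral_preimage_neg_aux (f : ℝ → ℝ) (hf_symm : ∀ t, f (-t) = f t)
    (S : Set ℝ) (hS : MeasurableSet S) :
    ∫ t in Neg.neg ⁻¹' S, f t = ∫ t in S, f t := by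
  rw [← integral_indicator hS, ← integral_indicator (hS.preimage measurable_neg),
    ← integral_neg_eq_self (S.indicator f) volume]
  congr 1
  funext t
  by_cases h : -t ∈ S
  · simp only [Set.indicator, mem_preimage, h, if_true, hf_symm]
  · simp only [Set.indicator, mem_preimage, h, if_false]

theorem stmt_7 (f g : ℝ → ℝ)
    (hf_nonneg : ∀ t, 0 ≤ f t)
    (hf_int : Integrable f)
    (hf_mass : ∫ t, f t = 1)
    (hf_cont : Continuous f)
    (hf_symm : ∀ t, f (-t) = f t)
    (hf_anti : StrictAntiOn f (Ici 0))
    (hg_concave : ConcaveOn ℝ univ g)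
    (hfg : ∀ t, f t = Real.exp (g t))
    (δ : ℝ) (hδ : 0 < δ)
    (κ : ℝ) (hκ : 0 < κ) (hκ_def : f κ = f 0 / 2) :
    IsEquilibrium f δ 0 0 ↔ κ ≤ δ := by
  have hf_pos : ∀ t, 0 < f t := fun t => by rw [hfg t]; exact Real.exp_pos _
  set F : ℝ → ℝ := fun t => ∫ x in (0:ℝ)..t, f x with hF
  have hFderiv : ∀ t : ℝ, HasDerivAt F (f t) t := fun t =>
    intervalIntegral.integral_hasDerivAt_right (hf_int.intervalIntegrable)
      hf_cont.stronglyMeasurable.stronglyMeasurableAtFilter hf_cont.continuousAt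
  have hFsub : ∀ a b : ℝ, F b - F a = ∫ x in a..b, f x := fun a b =>
    intervalIntegral.integral_interval_sub_left hf_int.intervalIntegrable
      hf_int.intervalIntegrable
  have hFmono : Monotone F := by
    intro a b hab
    have : 0 ≤ F b - F a := by
      rw [hFsub]
      exact intervalIntegral.integral_nonneg hab (fun x _ => hf_nonneg x)
    linarith
  have hF0 : F 0 = 0 := by simp [hF]
  have hFodd : ∀ t : ℝ, F (-t) = - F t := by
    intro t
    have h1 : (∫ x in (0:ℝ)..t, f x) = ∫ x in (0:ℝ)..t, f (-x) := by
      simp only [hf_symm]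
    have h2 : (∫ x in (0:ℝ)..t, f (-x)) = ∫ x in (-t)..(0:ℝ), f x := by
      rw [intervalIntegral.integral_comp_neg]; norm_num
    have h3 := hFsub (-t) 0
    rw [hF0] at h3
    rw [h2] at h1
    have h4 : (∫ x in (0:ℝ)..t, f x) = F t := rfl
    linarith [h1, h3]
  -- payoff at (0,0)
  have hIcc : {t : ℝ | |t - 0| ≤ δ} = Icc (-δ) δ := by
    ext t; simp [abs_le, mem_Icc]
  have hpay00 : payoff f δ 0 0 = F δ := by
    unfold payoff
    rw [if_pos rfl, hIcc, integral_Icc_eq_integral_Ioc,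
      ← intervalIntegral.integral_of_le (by linarith : (-δ:ℝ) ≤ δ), ← hFsub, hFodd]
    ring
  -- payoff for a positive deviation
  have hsetpos : ∀ y : ℝ, 0 < y →
      {t : ℝ | |t - y| ≤ δ ∧ |t - y| ≤ |t - 0|} = Icc (max (y - δ) (y / 2)) (y + δ) := by
    intro y hy
    ext t
    simp only [mem_setOf_eq, sub_zero, mem_Icc, max_le_iff]
    constructor
    · rintro ⟨habs, h3⟩
      have h1 := (abs_le.mp habs).1
      have h2 := (abs_le.mp habs).2
      have hsq := mul_self_le_mul_self (abs_nonneg (t - y)) h3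
      rw [abs_mul_abs_self, abs_mul_abs_self] at hsq
      exact ⟨⟨by linarith, by nlinarith⟩, by linarith⟩
    · rintro ⟨⟨h1, h2⟩, h3⟩
      have ht : 0 ≤ t := by linarith
      refine ⟨abs_le.mpr ⟨by linarith, by linarith⟩, ?_⟩
      rw [abs_of_nonneg ht]
      exact abs_le.mpr ⟨by linarith, by linarith⟩
  have hpaypos : ∀ y : ℝ, 0 < y →
      payoff f δ y 0 = F (y + δ) - F (max (y - δ) (y / 2)) := by
    intro y hy
    unfold payoff
    rw [if_neg (ne_of_gt hy), hsetpos y hy, integral_Icc_eq_integral_Ioc,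
      ← intervalIntegral.integral_of_le, ← hFsub]
    exact le_trans (max_le (by linarith) (by linarith)) le_rfl
  -- symmetry: payoff(y) = payoff(-y)
  have hpayneg : ∀ y : ℝ, y ≠ 0 → payoff f δ y 0 = payoff f δ (-y) 0 := by
    intro y hy
    unfold payoff
    rw [if_neg hy, if_neg (neg_ne_zero.mpr hy)]
    have hset : {t : ℝ | |t - -y| ≤ δ ∧ |t - -y| ≤ |t - 0|}
        = Neg.neg ⁻¹' {t : ℝ | |t - y| ≤ δ ∧ |t - y| ≤ |t - 0|} := by
      ext t
      simp only [mem_setOf_eq, mem_preimage, sub_zero]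
      have e1 : |(-t) - y| = |t - -y| := by
        rw [← abs_neg]; ring_nf
      have e2 : |(-t)| = |t| := abs_neg t
      rw [e1, e2]
    have hmeas : MeasurableSet {t : ℝ | |t - y| ≤ δ ∧ |t - y| ≤ |t - 0|} := by
      have heq : {t : ℝ | |t - y| ≤ δ ∧ |t - y| ≤ |t - 0|}
          = {t : ℝ | |t - y| ≤ δ} ∩ {t : ℝ | |t - y| ≤ |t - 0|} := rfl
      rw [heq]
      have c1 : Continuous fun t : ℝ => |t - y| :=
        continuous_abs.comp (continuous_id.sub continuous_const)
      have c2 : Continuous fun t : ℝ => |t - (0:ℝ)| :=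
        continuous_abs.comp (continuous_id.sub continuous_const)
      exact (measurableSet_le c1.measurable measurable_const).inter
        (measurableSet_le c1.measurable c2.measurable)
    rw [hset]
    exact (integral_preimage_neg_aux f hf_symm _ hmeas).symm
  -- the function G and its derivative
  set G : ℝ → ℝ := fun y => F (y + δ) - F (y / 2) with hG
  have hGderiv : ∀ y : ℝ, HasDerivAt G (f (y + δ) - f (y / 2) * (1 / 2)) y := by
    intro y
    have h1 : HasDerivAt (fun y : ℝ => F (y + δ)) (f (y + δ) * 1) y :=
      by have := (hFderiv (y + δ)).comp y ((hasDerivAt_id y).add_const δ); exact this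
    have h2 : HasDerivAt (fun y : ℝ => F (y / 2)) (f (y / 2) * (1 / 2)) y := by
      have := (hFderiv (y / 2)).comp y ((hasDerivAt_id y).div_const 2)
      exact this
    have := h1.sub h2; simp only [mul_one] at this; exact this
  have hG0 : G 0 = F δ := by
    simp only [hG, zero_add, zero_div]
    rw [hF0]; ring
  -- key concavity inequality: f(2a+δ)·f(0) ≤ f(a)·f(a+δ) for a ≥ 0
  have hconc : ∀ a : ℝ, 0 ≤ a → f (2 * a + δ) * f 0 ≤ f a * f (a + δ) := by
    intro a ha
    set s : ℝ := 2 * a + δ with hs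
    have hspos : 0 < s := by rw [hs]; linarith
    have w1 : (0:ℝ) ≤ a / s := div_nonneg ha hspos.le
    have w1' : (0:ℝ) ≤ 1 - a / s := by
      rw [sub_nonneg, div_le_one hspos]; rw [hs]; linarith
    have w2 : (0:ℝ) ≤ (a + δ) / s := div_nonneg (by linarith) hspos.le
    have w2' : (0:ℝ) ≤ 1 - (a + δ) / s := by
      rw [sub_nonneg, div_le_one hspos]; rw [hs]; linarith
    have c1 := hg_concave.2 (mem_univ s) (mem_univ (0:ℝ)) w1 w1' (by ring)
    have c2 := hg_concave.2 (mem_univ s) (mem_univ (0:ℝ)) w2 w2' (by ring)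
    simp only [smul_eq_mul, mul_zero, add_zero] at c1 c2
    rw [div_mul_cancel₀ _ (ne_of_gt hspos)] at c1 c2
    have hcoef : (a + δ) / s = 1 - a / s := by
      field_simp; rw [hs]; ring
    rw [hcoef] at c2
    have hsum : g s + g 0 ≤ g a + g (a + δ) := by nlinarith [c1, c2]
    calc f s * f 0 = Real.exp (g s + g 0) := by rw [hfg s, hfg 0, Real.exp_add]
      _ ≤ Real.exp (g a + g (a + δ)) := Real.exp_le_exp.mpr hsum
      _ = f a * f (a + δ) := by rw [hfg a, hfg (a + δ), Real.exp_add]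
  constructor
  · -- equilibrium ⇒ κ ≤ δ
    intro hE
    by_contra hlt
    push_neg at hlt
    have hfd : f 0 / 2 < f δ := by
      rw [← hκ_def]
      exact hf_anti (mem_Ici.mpr hδ.le) (mem_Ici.mpr hκ.le) hlt
    have hc : 0 < f (0 + δ) - f (0 / 2) * (1 / 2) := by
      rw [zero_add, zero_div]; linarith
    have hslope := hasDerivAt_iff_tendsto_slope.mp (hGderiv 0)
    have hev1 : ∀ᶠ y in nhdsWithin (0:ℝ) (Ioi 0), 0 < slope G 0 y := by
      apply Filter.Eventually.filter_mono
        (nhdsWithin_mono 0 (fun x hx => ne_of_gt hx : Ioi (0:ℝ) ⊆ {(0:ℝ)}ᶜ))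
      exact hslope.eventually (lt_mem_nhds hc)
    have hev2 : ∀ᶠ y in nhdsWithin (0:ℝ) (Ioi 0), y ∈ Ioo (0:ℝ) (2 * δ) :=
      Ioo_mem_nhdsGT_of_mem ⟨le_refl 0, by linarith⟩
    obtain ⟨y, hy1, hy2⟩ := (hev1.and hev2).exists
    obtain ⟨hy0, hy2δ⟩ := hy2
    have hslopeval : slope G 0 y = (G y - G 0) / y := by
      rw [slope_def_field]; rw [sub_zero]
    rw [hslopeval] at hy1
    have hGy : G 0 < G y := by
      have h := mul_pos hy1 hy0
      rw [div_mul_cancel₀ _ (ne_of_gt hy0)] at h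
      linarith
    have hmax : max (y - δ) (y / 2) = y / 2 := max_eq_right (by linarith)
    have hcontra := hE.1 y
    rw [hpaypos y hy0, hpay00, hmax] at hcontra
    have hGyval : G y = F (y + δ) - F (y / 2) := rfl
    rw [hG0, hGyval] at hGy
    linarith
  · -- κ ≤ δ ⇒ equilibrium
    intro hκδ
    have hfδ : f δ ≤ f 0 / 2 := by
      rw [← hκ_def]
      rcases eq_or_lt_of_le hκδ with h | h
      · rw [h]
      · exact le_of_lt (hf_anti (mem_Ici.mpr hκ.le) (mem_Ici.mpr hδ.le) h)
    -- f(y+δ) ≤ f(y/2)/2 for y ≥ 0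
    have hkey : ∀ y : ℝ, 0 ≤ y → f (y + δ) ≤ f (y / 2) / 2 := by
      intro y hy
      have ha : (0:ℝ) ≤ y / 2 := by linarith
      have h1 := hconc (y / 2) ha
      have h2 : f (y / 2 + δ) ≤ f δ :=
        (hf_anti.antitoneOn) (mem_Ici.mpr hδ.le) (mem_Ici.mpr (by linarith)) (by linarith)
      have h3 : f (y / 2 + δ) ≤ f 0 / 2 := le_trans h2 hfδ
      have he : 2 * (y / 2) + δ = y + δ := by ring
      rw [he] at h1
      have hf0 : 0 < f 0 := hf_pos 0
      have hfy2 : 0 < f (y / 2) := hf_pos (y / 2)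
      nlinarith [h1, h3, mul_le_mul_of_nonneg_left h3 (le_of_lt hfy2)]
    -- G is antitone on [0,∞)
    have hGanti : AntitoneOn G (Ici 0) := by
      apply antitoneOn_of_deriv_nonpos (convex_Ici 0)
      · exact fun x _ => ((hGderiv x).differentiableAt.continuousAt).continuousWithinAt
      · exact fun x _ => (hGderiv x).differentiableAt.differentiableWithinAt
      · intro x hx
        rw [interior_Ici] at hx
        rw [(hGderiv x).deriv]
        have := hkey x (le_of_lt hx)
        linarith
    -- conclude
    have hbound : ∀ y : ℝ, payoff f δ y 0 ≤ payoff f δ 0 0 := by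
      have hbp : ∀ y : ℝ, 0 < y → payoff f δ y 0 ≤ payoff f δ 0 0 := by
        intro y hy
        rw [hpaypos y hy, hpay00]
        have h1 : F (y / 2) ≤ F (max (y - δ) (y / 2)) := hFmono (le_max_right _ _)
        have h2 : G y ≤ G 0 := hGanti (mem_Ici.mpr le_rfl) (mem_Ici.mpr (le_of_lt hy))
          (le_of_lt hy)
        have hGyval : G y = F (y + δ) - F (y / 2) := rfl
        rw [hG0, hGyval] at h2
        linarith
      intro y
      rcases lt_trichotomy y 0 with hy | hy | hy
      · rw [hpayneg y (ne_of_lt hy)]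
        exact hbp (-y) (by linarith)
      · rw [hy]
      · exact hbp y hy
    exact ⟨hbound, hbound⟩
end

section
/- In the fixed-price location game with log-concave, symmetric, strictly decreasing on [0,∞), continuous density f, if δ ≥ κ then for every x₂ ∈ (0, 2δ], the derivative ∂q₂/∂x₂(0,x₂) = f(x₂+δ) − (1/2) f(x₂/2) is strictly negative. -/
open MeasureTheory Set

theorem stmt_8 (f g : ℝ → ℝ)
    (hf_nonneg : ∀ t, 0 ≤ f t)
    (hf_int : Integrable f)
    (hf_mass : ∫ t, f t = 1)
    (hf_cont : Continuous f)
    (hf_symm : ∀ t, f (-t) = f t)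
    (hf_anti : StrictAntiOn f (Ici 0))
    (hg_concave : ConcaveOn ℝ univ g)
    (hfg : ∀ t, f t = Real.exp (g t))
    (κ : ℝ) (hκ : 0 < κ) (hκ_def : f κ = f 0 / 2)
    (δ : ℝ) (hδ : κ ≤ δ) :
    ∀ x₂ ∈ Ioc (0 : ℝ) (2 * δ), f (x₂ + δ) - (1 / 2) * f (x₂ / 2) < 0 := by
  intro x₂ hx₂
  obtain ⟨hx0, hxle⟩ := hx₂
  set t := x₂ / 2 with ht
  have ht0 : 0 < t := by positivity
  have hf0 : 0 < f 0 := by rw [hfg]; exact Real.exp_pos _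
  have hs : 0 < t + κ := by linarith
  have ha : (0:ℝ) ≤ t / (t + κ) := by positivity
  have hb : (0:ℝ) ≤ κ / (t + κ) := by positivity
  have hab : t / (t + κ) + κ / (t + κ) = 1 := by field_simp
  have h1 := hg_concave.2 (mem_univ (t + κ)) (mem_univ (0:ℝ)) ha hb hab
  have h2 := hg_concave.2 (mem_univ (t + κ)) (mem_univ (0:ℝ)) hb ha (by linarith)
  simp only [smul_eq_mul, mul_zero, add_zero, div_mul_cancel₀ _ (ne_of_gt hs)] at h1 h2
  -- h1 : t/(t+κ) * g(t+κ) + κ/(t+κ) * g 0 ≤ g t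
  -- h2 : κ/(t+κ) * g(t+κ) + t/(t+κ) * g 0 ≤ g κ
  have hsum : g (t + κ) + g 0 ≤ g t + g κ := by
    have e1 : t / (t + κ) * g (t + κ) + κ / (t + κ) * g (t + κ) = g (t + κ) := by
      rw [← add_mul, hab, one_mul]
    have e2 : κ / (t + κ) * g 0 + t / (t + κ) * g 0 = g 0 := by
      rw [← add_mul]; rw [add_comm] at hab; rw [hab, one_mul]
    linarith
  have hmul : f (t + κ) * f 0 ≤ f t * f κ := by
    rw [hfg, hfg, hfg, hfg, ← Real.exp_add, ← Real.exp_add]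
    exact Real.exp_le_exp.mpr hsum
  rw [hκ_def] at hmul
  have key : f (t + κ) ≤ f t / 2 := by nlinarith
  have hlt : f (x₂ + δ) < f (t + κ) := by
    refine hf_anti (mem_Ici.mpr (le_of_lt hs)) (mem_Ici.mpr (by linarith)) ?_
    have : t < x₂ := by rw [ht]; linarith
    linarith
  linarith
end

section
/- In the fixed-price location game with log-concave, symmetric, strictly decreasing on [0,∞), continuous density f, a pure Nash equilibrium with partial differentiation (0 < |x₂ − x₁| < 2δ) exists if and only if κ/2 < δ < κ; in that case the unique such equilibrium (up to permutation of players) is (δ − κ, κ − δ). -/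
open MeasureTheory Set

/-! ### Auxiliary lemmas -/

set_option linter.unusedSectionVars false

lemma closer_iff {a b t : ℝ} (h : a < b) : |t - a| ≤ |t - b| ↔ t ≤ (a + b) / 2 := by
  rw [← Real.sqrt_sq_eq_abs (t-a), ← Real.sqrt_sq_eq_abs (t-b),
    Real.sqrt_le_sqrt_iff (by positivity)]
  constructor <;> intro h' <;> nlinarith

lemma closer_iff' {a b t : ℝ} (h : b < a) : |t - a| ≤ |t - b| ↔ (a + b) / 2 ≤ t := by
  rw [← Real.sqrt_sq_eq_abs (t-a), ← Real.sqrt_sq_eq_abs (t-b),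
    Real.sqrt_le_sqrt_iff (by positivity)]
  constructor <;> intro h' <;> nlinarith

lemma setInt_Icc (f : ℝ → ℝ) {a b : ℝ} (hab : a ≤ b) :
    (∫ t in Icc a b, f t) = ∫ t in a..b, f t := by
  rw [integral_Icc_eq_integral_Ioc, intervalIntegral.integral_of_le hab]

lemma payoff_eq_left (f : ℝ → ℝ) {δ own opp : ℝ} (hδ : 0 < δ) (h : own < opp) :
    payoff f δ own opp = ∫ t in (own - δ)..(min (own + δ) ((own + opp) / 2)), f t := by
  rw [payoff, if_neg h.ne]
  have hset : {t : ℝ | |t - own| ≤ δ ∧ |t - own| ≤ |t - opp|}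
      = Icc (own - δ) (min (own + δ) ((own + opp) / 2)) := by
    ext t
    simp only [mem_setOf_eq, mem_Icc, le_min_iff, abs_le, closer_iff h]
    constructor
    · rintro ⟨⟨h1, h2⟩, h3⟩; exact ⟨by linarith, by linarith, h3⟩
    · rintro ⟨h1, h2, h3⟩; exact ⟨⟨by linarith, by linarith⟩, h3⟩
  rw [hset, setInt_Icc]
  simp only [le_min_iff]
  constructor <;> linarith

lemma payoff_eq_right (f : ℝ → ℝ) {δ own opp : ℝ} (hδ : 0 < δ) (h : opp < own) :
    payoff f δ own opp = ∫ t in (max (own - δ) ((own + opp) / 2))..(own + δ), f t := by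
  rw [payoff, if_neg h.ne']
  have hset : {t : ℝ | |t - own| ≤ δ ∧ |t - own| ≤ |t - opp|}
      = Icc (max (own - δ) ((own + opp) / 2)) (own + δ) := by
    ext t
    have : (own + opp) / 2 = (opp + own) / 2 := by ring
    simp only [mem_setOf_eq, mem_Icc, max_le_iff, abs_le, closer_iff' h, le_max_iff, max_le_iff]
    constructor
    · rintro ⟨⟨h1, h2⟩, h3⟩; exact ⟨⟨by linarith, h3⟩, by linarith⟩
    · rintro ⟨⟨h1, h3⟩, h2⟩; exact ⟨⟨by linarith, by linarith⟩, h3⟩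
  rw [hset, setInt_Icc]
  simp only [max_le_iff]
  constructor <;> linarith

lemma payoff_eq_self (f : ℝ → ℝ) {δ c : ℝ} (hδ : 0 < δ) :
    payoff f δ c c = (∫ t in (c - δ)..(c + δ), f t) / 2 := by
  rw [payoff, if_pos rfl]
  have hset : {t : ℝ | |t - c| ≤ δ} = Icc (c - δ) (c + δ) := by
    ext t; simp only [mem_setOf_eq, mem_Icc, abs_le]
    constructor <;> rintro ⟨h1, h2⟩ <;> exact ⟨by linarith, by linarith⟩
  rw [hset, setInt_Icc f (by linarith)]

section analytic
variable {f g : ℝ → ℝ} {κ : ℝ}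
  (hf_symm : ∀ t, f (-t) = f t)
  (hf_anti : StrictAntiOn f (Ici 0))
  (hg_concave : ConcaveOn ℝ univ g)
  (hfg : ∀ t, f t = Real.exp (g t))
  (hκ : 0 < κ) (hκ_def : f κ = f 0 / 2)

include hfg in
lemma f_pos : ∀ t, 0 < f t := fun t => (hfg t) ▸ Real.exp_pos _

include hf_symm in
lemma f_abs (a : ℝ) : f |a| = f a := by
  rcases abs_cases a with ⟨h, _⟩ | ⟨h, _⟩
  · rw [h]
  · rw [h, hf_symm]

include hf_symm hf_anti in
lemma f_anti_abs {a b : ℝ} (h : |a| ≤ |b|) : f b ≤ f a := by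
  rw [← f_abs hf_symm a, ← f_abs hf_symm b]
  rcases eq_or_lt_of_le h with h | h
  · rw [h]
  · exact (hf_anti (abs_nonneg a) (abs_nonneg b) h).le

include hf_symm hf_anti in
lemma f_inj_abs {a b : ℝ} (h : f a = f b) : |a| = |b| := by
  have : f |a| = f |b| := by rw [f_abs hf_symm, f_abs hf_symm, h]
  exact hf_anti.injOn (abs_nonneg a) (abs_nonneg b) this

include hfg in
lemma g_le_g {a b : ℝ} (h : f a ≤ f b) : g a ≤ g b := by
  rw [hfg a, hfg b] at h; exact (Real.exp_le_exp.1 h)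

include hfg hκ_def in
lemma g_kappa : g κ = g 0 - Real.log 2 := by
  have h2 : Real.exp (g κ) = Real.exp (g 0 - Real.log 2) := by
    rw [Real.exp_sub, Real.exp_log two_pos, ← hfg, ← hfg, hκ_def]
  exact Real.exp_injective h2

include hg_concave hκ in
lemma g_super {u : ℝ} (hu : 0 ≤ u) : g (u + κ) + g 0 ≤ g u + g κ := by
  have ht : (0:ℝ) < u + κ := by linarith
  have h1 : (κ/(u+κ)) • g (u+κ) + (u/(u+κ)) • g 0 ≤ g ((κ/(u+κ)) • (u+κ) + (u/(u+κ)) • (0:ℝ)) :=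
    hg_concave.2 (mem_univ _) (mem_univ _) (by positivity) (by positivity)
      (by rw [← add_div, add_comm κ u]; exact div_self (by linarith))
  have h2 : (u/(u+κ)) • g (u+κ) + (κ/(u+κ)) • g 0 ≤ g ((u/(u+κ)) • (u+κ) + (κ/(u+κ)) • (0:ℝ)) :=
    hg_concave.2 (mem_univ _) (mem_univ _) (by positivity) (by positivity)
      (by rw [← add_div]; exact div_self (by linarith))
  have e1 : (κ / (u + κ)) • (u + κ) + (u / (u + κ)) • (0:ℝ) = κ := by
    simp only [smul_eq_mul]; field_simp; ring
  have e2 : (u / (u + κ)) • (u + κ) + (κ / (u + κ)) • (0:ℝ) = u := by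
    simp only [smul_eq_mul]; field_simp; ring
  rw [e1] at h1; rw [e2] at h2
  simp only [smul_eq_mul] at h1 h2
  have hsum : κ/(u+κ) + u/(u+κ) = 1 := by
    rw [← add_div, add_comm κ u]; exact div_self (by linarith)
  have key : (κ/(u+κ) + u/(u+κ)) * (g (u+κ) + g 0) = g (u+κ) + g 0 := by
    rw [hsum, one_mul]
  nlinarith [h1, h2, key]

include hf_symm hf_anti hg_concave hfg hκ hκ_def in
lemma L3 {u : ℝ} (hu : 0 ≤ u) : 2 * f (κ + 2 * u) ≤ f u := by
  have h1 : f (κ + 2*u) ≤ f (u + κ) := by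
    apply f_anti_abs hf_symm hf_anti
    rw [abs_of_nonneg (by linarith), abs_of_nonneg (by linarith)]; linarith
  have h2 := g_super hg_concave hκ (g := g) hu
  have h3 : g (κ + 2*u) ≤ g (u + κ) := g_le_g hfg h1
  have h4 : g (κ + 2*u) + Real.log 2 ≤ g u := by
    have := g_kappa hfg hκ_def (g := g); linarith
  calc 2 * f (κ + 2*u) = Real.exp (g (κ + 2*u) + Real.log 2) := by
        rw [Real.exp_add, Real.exp_log two_pos, hfg]; ring
    _ ≤ Real.exp (g u) := Real.exp_le_exp.2 h4
    _ = f u := (hfg u).symm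

include hg_concave hfg hκ hκ_def in
lemma Lup {t : ℝ} (ht : κ ≤ t) : f t ≤ f 0 * Real.exp (-(Real.log 2 / κ * t)) := by
  have htpos : (0:ℝ) < t := lt_of_lt_of_le hκ ht
  have h1 : (κ/t) • g t + (1 - κ/t) • g 0 ≤ g ((κ/t) • t + (1 - κ/t) • (0:ℝ)) :=
    hg_concave.2 (mem_univ _) (mem_univ _) (by positivity)
      (by rw [sub_nonneg]; exact (div_le_one htpos).mpr ht) (by ring)
  have e1 : (κ / t) • t + (1 - κ / t) • (0:ℝ) = κ := by
    simp only [smul_eq_mul]; field_simp; ring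
  rw [e1] at h1
  simp only [smul_eq_mul] at h1
  have hgk := g_kappa hfg hκ_def (g := g)
  rw [hgk] at h1
  have h3 : κ/t * (g t - g 0) ≤ -Real.log 2 := by ring_nf at h1 ⊢; linarith
  have h4 : g t - g 0 ≤ -Real.log 2 * (t/κ) := by
    have hpos : 0 < κ/t := by positivity
    rw [← mul_le_mul_iff_right₀ hpos]
    calc κ/t * (g t - g 0) ≤ -Real.log 2 := h3
      _ = κ/t * (-Real.log 2 * (t/κ)) := by field_simp
  have h5 : -Real.log 2 * (t/κ) = -(Real.log 2 / κ * t) := by ring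
  rw [h5] at h4
  rw [hfg t, hfg 0, ← Real.exp_add]
  apply Real.exp_le_exp.2; linarith

include hg_concave hfg hκ hκ_def in
lemma Llo {t : ℝ} (ht0 : 0 ≤ t) (htκ : t ≤ κ) :
    f 0 * Real.exp (-(Real.log 2 / κ * t)) ≤ f t := by
  have h1 : (t/κ) • g κ + (1 - t/κ) • g 0 ≤ g ((t/κ) • κ + (1 - t/κ) • (0:ℝ)) :=
    hg_concave.2 (mem_univ _) (mem_univ _) (by positivity)
      (by rw [sub_nonneg]; exact (div_le_one hκ).mpr htκ) (by ring)
  have e1 : (t / κ) • κ + (1 - t / κ) • (0:ℝ) = t := by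
    simp only [smul_eq_mul]; field_simp; ring
  rw [e1] at h1
  simp only [smul_eq_mul] at h1
  have hgk := g_kappa hfg hκ_def (g := g)
  rw [hgk] at h1
  have heq : t / κ * (g 0 - Real.log 2) + (1 - t / κ) * g 0
      = g 0 - Real.log 2 / κ * t := by field_simp; ring
  rw [heq] at h1
  rw [hfg t, hfg 0, ← Real.exp_add]
  apply Real.exp_le_exp.2; linarith

include hf_symm hf_anti hfg hκ hκ_def in
lemma Lmid {u : ℝ} (hu0 : 0 ≤ u) (hu : u ≤ κ / 2) : f u ≤ 2 * f (κ - 2 * u) := by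
  have h1 : f κ ≤ f (κ - 2*u) := by
    apply f_anti_abs hf_symm hf_anti
    rw [abs_of_nonneg (by linarith), abs_of_nonneg (by linarith)]; linarith
  have h2 : f u ≤ f 0 := by
    apply f_anti_abs hf_symm hf_anti
    rw [abs_of_nonneg hu0, abs_of_nonneg le_rfl]; exact hu0
  have h3 : f 0 = 2 * f κ := by linarith [hκ_def]
  linarith

end analytic

section ints
variable {f : ℝ → ℝ} {κ : ℝ}
  (hf_cont : Continuous f)
  (hf_symm : ∀ t, f (-t) = f t)

include hf_symm in
lemma int_even (a b : ℝ) : ∫ t in (-b)..(-a), f t = ∫ t in a..b, f t := by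
  rw [← intervalIntegral.integral_comp_neg (a := a) (b := b) fun x => f x]
  simp only [hf_symm]

include hf_symm in
lemma int_even0 (b : ℝ) : ∫ t in (-b)..(0:ℝ), f t = ∫ t in (0:ℝ)..b, f t := by
  have := int_even hf_symm 0 b
  simpa using this

lemma int_exp_aux (c a b : ℝ) (hc : 0 < c) :
    ∫ t in a..b, Real.exp (-(c*t)) = (Real.exp (-(c*a)) - Real.exp (-(c*b)))/c := by
  have hd : ∀ t : ℝ, HasDerivAt (fun t => -Real.exp (-(c*t))/c) (Real.exp (-(c*t))) t := by
    intro t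
    have h1 : HasDerivAt (fun t : ℝ => -(c*t)) (-c) t := by
      exact (((hasDerivAt_id t).const_mul c).neg).congr_deriv (by simp)
    have h2 := (Real.hasDerivAt_exp (-(c*t))).comp t h1
    have h3 := (h2.neg).div_const c
    exact h3.congr_deriv (by field_simp)
  rw [intervalIntegral.integral_eq_sub_of_hasDerivAt (fun t _ => hd t)
    ((Real.continuous_exp.comp (by continuity)).intervalIntegrable a b)]
  ring

include hf_cont in
lemma int_subst_pos (s : ℝ) :
    ∫ t in κ..(κ+s), f t = 2 * ∫ u in (0:ℝ)..(s/2), f (2*u + κ) := by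
  have := intervalIntegral.integral_comp_mul_add (a := (0:ℝ)) (b := s/2) f
    (two_ne_zero) κ
  rw [this]
  norm_num
  rw [show 2 * (s/2) + κ = κ + s by ring]
  ring

include hf_cont in
lemma int_subst_neg (s : ℝ) :
    ∫ t in (κ-s)..κ, f t = 2 * ∫ u in (0:ℝ)..(s/2), f (-2*u + κ) := by
  have := intervalIntegral.integral_comp_mul_add (a := (0:ℝ)) (b := s/2) f
    (neg_ne_zero.mpr (two_ne_zero)) κ
  rw [show ((-2:ℝ))⁻¹ = -(2⁻¹) by norm_num] at this
  rw [this]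
  norm_num
  rw [show -(2 * (s/2)) + κ = κ - s by ring, intervalIntegral.integral_symm (κ-s) κ]
  ring

end ints

section comp
variable {f g : ℝ → ℝ} {κ : ℝ}
  (hf_nonneg : ∀ t, 0 ≤ f t)
  (hf_cont : Continuous f)
  (hf_symm : ∀ t, f (-t) = f t)
  (hf_anti : StrictAntiOn f (Ici 0))
  (hg_concave : ConcaveOn ℝ univ g)
  (hfg : ∀ t, f t = Real.exp (g t))
  (hκ : 0 < κ) (hκ_def : f κ = f 0 / 2)

include hf_cont hg_concave hfg hκ hκ_def in
lemma tail_le {s : ℝ} (hs : 0 ≤ s) : ∫ t in κ..(κ+s), f t ≤ ∫ t in (0:ℝ)..κ, f t := by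
  have hf0 : 0 < f 0 := f_pos hfg 0
  set c := Real.log 2 / κ with hc
  have hcpos : 0 < c := div_pos (Real.log_pos one_lt_two) hκ
  have hck : c * κ = Real.log 2 := by rw [hc]; field_simp
  have hexpk : Real.exp (-(c*κ)) = 1/2 := by
    rw [hck, Real.exp_neg, Real.exp_log two_pos]; norm_num
  have hcont2 : Continuous fun t => f 0 * Real.exp (-(c*t)) :=
    continuous_const.mul (Real.continuous_exp.comp (by continuity))
  have h1 : ∫ t in κ..(κ+s), f t ≤ ∫ t in κ..(κ+s), f 0 * Real.exp (-(c*t)) := by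
    apply intervalIntegral.integral_mono_on (by linarith)
      (hf_cont.intervalIntegrable _ _) (hcont2.intervalIntegrable _ _)
    exact fun x hx => Lup hg_concave hfg hκ hκ_def hx.1
  have h2 : ∫ t in κ..(κ+s), f 0 * Real.exp (-(c*t))
      = f 0 * ((Real.exp (-(c*κ)) - Real.exp (-(c*(κ+s))))/c) := by
    rw [intervalIntegral.integral_const_mul, int_exp_aux c κ (κ+s) hcpos]
  have h3 : ∫ t in (0:ℝ)..κ, f 0 * Real.exp (-(c*t))
      = f 0 * ((Real.exp (-(c*0)) - Real.exp (-(c*κ)))/c) := by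
    rw [intervalIntegral.integral_const_mul, int_exp_aux c 0 κ hcpos]
  have h4 : ∫ t in (0:ℝ)..κ, f 0 * Real.exp (-(c*t)) ≤ ∫ t in (0:ℝ)..κ, f t := by
    apply intervalIntegral.integral_mono_on hκ.le
      (hcont2.intervalIntegrable _ _) (hf_cont.intervalIntegrable _ _)
    exact fun x hx => Llo hg_concave hfg hκ hκ_def hx.1 hx.2
  have hE : 0 < Real.exp (-(c*(κ+s))) := Real.exp_pos _
  have he0 : Real.exp (-(c*0)) = 1 := by norm_num
  rw [hexpk] at h2 h3
  rw [he0] at h3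
  have key : f 0 * ((1/2 - Real.exp (-(c*(κ+s))))/c) ≤ f 0 * ((1 - 1/2)/c) := by
    apply mul_le_mul_of_nonneg_left _ hf0.le
    rw [div_le_div_iff₀ hcpos hcpos]
    nlinarith
  linarith

include hf_nonneg hf_cont hf_symm hf_anti hg_concave hfg hκ hκ_def in
lemma tail_le_head {s : ℝ} (hs : 0 ≤ s) :
    ∫ t in κ..(κ+s), f t ≤ ∫ u in (0:ℝ)..(s/2), f u := by
  rw [int_subst_pos hf_cont s]
  have h1 : ∫ u in (0:ℝ)..(s/2), f (2*u + κ) ≤ ∫ u in (0:ℝ)..(s/2), f u / 2 := by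
    apply intervalIntegral.integral_mono_on (by linarith)
      ((hf_cont.comp (by continuity)).intervalIntegrable _ _)
      ((hf_cont.div_const 2).intervalIntegrable _ _)
    intro x hx
    show f (2*x + κ) ≤ f x / 2
    have := L3 hf_symm hf_anti hg_concave hfg hκ hκ_def hx.1
    rw [show κ + 2*x = 2*x + κ by ring] at this
    linarith
  rw [intervalIntegral.integral_div] at h1
  linarith

include hf_nonneg hf_cont hf_symm hf_anti hfg hκ hκ_def in
lemma head_le_mid {s : ℝ} (hs : 0 ≤ s) (hsκ : s ≤ κ) :
    ∫ u in (0:ℝ)..(s/2), f u ≤ ∫ t in (κ-s)..κ, f t := by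
  rw [int_subst_neg hf_cont s]
  have h1 : ∫ u in (0:ℝ)..(s/2), f u / 2 ≤ ∫ u in (0:ℝ)..(s/2), f (-2*u + κ) := by
    apply intervalIntegral.integral_mono_on (by linarith)
      ((hf_cont.div_const 2).intervalIntegrable _ _)
      ((hf_cont.comp (by continuity)).intervalIntegrable _ _)
    intro x hx
    show f x / 2 ≤ f (-2*x + κ)
    have := Lmid hf_symm hf_anti hfg hκ hκ_def hx.1 (by linarith [hx.2])
    rw [show κ - 2*x = -2*x + κ by ring] at this
    linarith
  rw [intervalIntegral.integral_div] at h1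
  linarith

end comp

section main
variable {f g : ℝ → ℝ} {κ δ : ℝ}
  (hf_nonneg : ∀ t, 0 ≤ f t)
  (hf_cont : Continuous f)
  (hf_symm : ∀ t, f (-t) = f t)
  (hf_anti : StrictAntiOn f (Ici 0))
  (hg_concave : ConcaveOn ℝ univ g)
  (hfg : ∀ t, f t = Real.exp (g t))
  (hκ : 0 < κ) (hκ_def : f κ = f 0 / 2)
  (hδ : 0 < δ) (hδ1 : κ/2 < δ) (hδ2 : δ < κ)

include hf_nonneg hf_cont in
lemma drop_left {a b c : ℝ} (h : a ≤ b) :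
    ∫ t in b..c, f t ≤ ∫ t in a..c, f t := by
  rw [← intervalIntegral.integral_add_adjacent_intervals
    (hf_cont.intervalIntegrable a b) (hf_cont.intervalIntegrable b c)]
  have : 0 ≤ ∫ t in a..b, f t := intervalIntegral.integral_nonneg h (fun u _ => hf_nonneg u)
  linarith

include hf_nonneg hf_cont in
lemma drop_right {a b c : ℝ} (h : b ≤ c) :
    ∫ t in a..b, f t ≤ ∫ t in a..c, f t := by
  rw [← intervalIntegral.integral_add_adjacent_intervals
    (hf_cont.intervalIntegrable a b) (hf_cont.intervalIntegrable b c)]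
  have : 0 ≤ ∫ t in b..c, f t := intervalIntegral.integral_nonneg h (fun u _ => hf_nonneg u)
  linarith

include hf_cont hf_symm hκ hδ hδ1 hδ2 in
lemma value_eq : payoff f δ (δ-κ) (κ-δ) = ∫ t in (0:ℝ)..κ, f t := by
  rw [payoff_eq_left f hδ (by linarith)]
  have h1 : min (δ-κ+δ) ((δ-κ+(κ-δ))/2) = 0 := by
    rw [min_eq_right]; · ring_nf
    · nlinarith
  rw [show (δ-κ-δ) = -κ by ring, h1, int_even0 hf_symm κ]

include hf_nonneg hf_cont hf_symm hf_anti hg_concave hfg hκ hκ_def hδ hδ1 hδ2 in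
lemma deviation_le (y : ℝ) : payoff f δ y (κ-δ) ≤ ∫ t in (0:ℝ)..κ, f t := by
  have II : ∀ a b : ℝ, IntervalIntegrable f volume a b := fun a b => hf_cont.intervalIntegrable a b
  have tail_le' : ∀ {s : ℝ}, 0 ≤ s → ∫ t in κ..(κ+s), f t ≤ ∫ t in (0:ℝ)..κ, f t :=
    fun hs => tail_le hf_cont hg_concave hfg hκ hκ_def hs
  have tail_le_head' : ∀ {s : ℝ}, 0 ≤ s → ∫ t in κ..(κ+s), f t ≤ ∫ u in (0:ℝ)..(s/2), f u :=
    fun hs => tail_le_head hf_nonneg hf_cont hf_symm hf_anti hg_concave hfg hκ hκ_def hs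
  have head_le_mid' : ∀ {s : ℝ}, 0 ≤ s → s ≤ κ →
      ∫ u in (0:ℝ)..(s/2), f u ≤ ∫ t in (κ-s)..κ, f t :=
    fun hs hsκ => head_le_mid hf_nonneg hf_cont hf_symm hf_anti hfg hκ hκ_def hs hsκ
  rcases lt_trichotomy y (κ-δ) with hy | hy | hy
  · rw [payoff_eq_left f hδ hy]
    set m := (y + (κ-δ))/2 with hm
    have step1 : ∫ t in (y-δ)..(min (y+δ) m), f t ≤ ∫ t in (y-δ)..m, f t :=
      drop_right hf_nonneg hf_cont (min_le_right _ _)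
    refine le_trans step1 ?_
    rcases le_or_gt y (δ-κ) with hcase | hcase
    · set s := δ-κ-y with hs
      have hs0 : 0 ≤ s := by simp only [hs]; linarith
      have e1 : y - δ = -(κ+s) := by rw [hs]; ring
      have e2 : m = -(s/2) := by rw [hm, hs]; ring
      rw [e1, e2]
      rw [int_even hf_symm (s/2) (κ+s)]
      rcases le_or_gt s (2*κ) with hsmall | hbig
      · have split : ∫ t in (s/2)..(κ+s), f t
            = (∫ t in (s/2)..κ, f t) + ∫ t in κ..(κ+s), f t := by
          rw [intervalIntegral.integral_add_adjacent_intervals (II _ _) (II _ _)]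
        rw [split]
        have h2 : ∫ t in κ..(κ+s), f t ≤ ∫ u in (0:ℝ)..(s/2), f u := tail_le_head' hs0
        have h3 : (∫ t in (0:ℝ)..(s/2), f t) + ∫ t in (s/2)..κ, f t = ∫ t in (0:ℝ)..κ, f t :=
          intervalIntegral.integral_add_adjacent_intervals (II _ _) (II _ _)
        linarith
      · have h2 : ∫ t in (s/2)..(κ+s), f t ≤ ∫ t in κ..(κ+s), f t :=
          drop_left hf_nonneg hf_cont (by linarith)
        exact le_trans h2 (tail_le' hs0)
    · set s := y-(δ-κ) with hs
      have hs0 : 0 < s := by simp only [hs]; linarith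
      have hsmall : s < 2*(κ-δ) := by rw [hs]; linarith
      have hsκ : s < κ := by linarith
      have e1 : y - δ = s - κ := by rw [hs]; ring
      have e2 : m = s/2 := by rw [hm, hs]; ring
      rw [e1, e2]
      have split : ∫ t in (s-κ)..(s/2), f t
          = (∫ t in (s-κ)..(0:ℝ), f t) + ∫ t in (0:ℝ)..(s/2), f t := by
        rw [intervalIntegral.integral_add_adjacent_intervals (II _ _) (II _ _)]
      rw [split]
      have h2 : ∫ t in (0:ℝ)..(s/2), f t ≤ ∫ t in (κ-s)..κ, f t :=
        head_le_mid' hs0.le hsκ.le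
      have e3 : ∫ t in (s-κ)..(0:ℝ), f t = ∫ t in (0:ℝ)..(κ-s), f t := by
        rw [show s-κ = -(κ-s) by ring, int_even0 hf_symm (κ-s)]
      have h3 : (∫ t in (0:ℝ)..(κ-s), f t) + ∫ t in (κ-s)..κ, f t = ∫ t in (0:ℝ)..κ, f t :=
        intervalIntegral.integral_add_adjacent_intervals (II _ _) (II _ _)
      rw [e3]
      linarith
  · rw [hy, payoff_eq_self f hδ]
    have h1 : ∫ t in (κ-δ-δ)..(κ-δ+δ), f t ≤ ∫ t in (-κ)..κ, f t := by
      have := drop_left hf_nonneg hf_cont (show -κ ≤ κ-δ-δ by linarith) (c := κ-δ+δ)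
      refine le_trans this ?_
      exact drop_right hf_nonneg hf_cont (by linarith)
    have h2 : ∫ t in (-κ)..κ, f t = 2 * ∫ t in (0:ℝ)..κ, f t := by
      have split : ∫ t in (-κ)..κ, f t
          = (∫ t in (-κ)..(0:ℝ), f t) + ∫ t in (0:ℝ)..κ, f t := by
        rw [intervalIntegral.integral_add_adjacent_intervals (II _ _) (II _ _)]
      rw [split, int_even0 hf_symm κ]
      ring
    linarith
  · rw [payoff_eq_right f hδ hy]
    set s := y - (κ-δ) with hs
    have hs0 : 0 < s := by simp only [hs]; linarith
    set m := (y + (κ-δ))/2 with hm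
    have em : m = κ-δ+s/2 := by rw [hm, hs]; ring
    have ey : y + δ = κ + s := by rw [hs]; ring
    have step1 : ∫ t in (max (y-δ) m)..(y+δ), f t ≤ ∫ t in m..(y+δ), f t :=
      drop_left hf_nonneg hf_cont (le_max_right _ _)
    refine le_trans step1 ?_
    rw [em, ey]
    rcases le_or_gt s (2*δ) with hsmall | hbig
    · have split : ∫ t in (κ-δ+s/2)..(κ+s), f t
          = (∫ t in (κ-δ+s/2)..κ, f t) + ∫ t in κ..(κ+s), f t := by
        rw [intervalIntegral.integral_add_adjacent_intervals (II _ _) (II _ _)]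
      rw [split]
      have h1 : ∫ t in (κ-δ+s/2)..κ, f t ≤ ∫ t in (s/2)..κ, f t :=
        drop_left hf_nonneg hf_cont (by linarith)
      have h2 : ∫ t in κ..(κ+s), f t ≤ ∫ u in (0:ℝ)..(s/2), f u := tail_le_head' hs0.le
      have h3 : (∫ t in (0:ℝ)..(s/2), f t) + ∫ t in (s/2)..κ, f t = ∫ t in (0:ℝ)..κ, f t :=
        intervalIntegral.integral_add_adjacent_intervals (II _ _) (II _ _)
      linarith
    · have h1 : ∫ t in (κ-δ+s/2)..(κ+s), f t ≤ ∫ t in κ..(κ+s), f t :=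
        drop_left hf_nonneg hf_cont (by linarith)
      exact le_trans h1 (tail_le' hs0.le)

include hf_symm hδ in
lemma payoff_neg (a b : ℝ) : payoff f δ (-a) (-b) = payoff f δ a b := by
  rcases lt_trichotomy a b with h | h | h
  · rw [payoff_eq_right f hδ (by linarith : -b < -a), payoff_eq_left f hδ h]
    have e1 : max (-a - δ) ((-a + -b)/2) = -(min (a + δ) ((a + b)/2)) := by
      rw [show (-a + -b)/2 = -((a+b)/2) by ring, show -a - δ = -(a + δ) by ring,
        max_neg_neg]
    have e2 : -a + δ = -(a - δ) := by ring
    rw [e1, e2, int_even hf_symm]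
  · rw [h, payoff_eq_self f hδ, payoff_eq_self f hδ]
    have e1 : -b - δ = -(b + δ) := by ring
    have e2 : -b + δ = -(b - δ) := by ring
    rw [e1, e2, int_even hf_symm]
  · rw [payoff_eq_left f hδ (by linarith : -a < -b), payoff_eq_right f hδ h]
    have e1 : min (-a + δ) ((-a + -b)/2) = -(max (a - δ) ((a + b)/2)) := by
      rw [show (-a + -b)/2 = -((a+b)/2) by ring, show -a + δ = -(a - δ) by ring,
        min_neg_neg]
    have e2 : -a - δ = -(a + δ) := by ring
    rw [e1, e2, int_even hf_symm]

include hf_nonneg hf_cont hf_symm hf_anti hg_concave hfg hκ hκ_def hδ hδ1 hδ2 in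
lemma exists_core : IsEquilibrium f δ (δ-κ) (κ-δ) := by
  have hval := value_eq hf_cont hf_symm hκ hδ hδ1 hδ2 (f := f)
  constructor
  · intro y
    rw [hval]
    exact deviation_le hf_nonneg hf_cont hf_symm hf_anti hg_concave hfg hκ hκ_def hδ hδ1 hδ2 y
  · intro y
    have e1 : payoff f δ y (δ-κ) = payoff f δ (-y) (κ-δ) := by
      have := payoff_neg hf_symm hδ (-y) (κ-δ)
      rw [neg_neg] at this
      rw [show δ-κ = -(κ-δ) by ring]
      exact this
    have e2 : payoff f δ (κ-δ) (δ-κ) = payoff f δ (δ-κ) (κ-δ) := by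
      have := payoff_neg hf_symm hδ (δ-κ) (κ-δ)
      simp only [show -(δ-κ) = κ-δ from by ring, show -(κ-δ) = δ-κ from by ring] at this
      exact this
    rw [e1, e2, hval]
    exact deviation_le hf_nonneg hf_cont hf_symm hf_anti hg_concave hfg hκ hκ_def hδ hδ1 hδ2 (-y)

include hf_cont in
lemma hasDerivAt_F (x : ℝ) : HasDerivAt (fun u => ∫ t in (0:ℝ)..u, f t) (f x) x :=
  intervalIntegral.integral_hasDerivAt_right (hf_cont.intervalIntegrable _ _)
    (hf_cont.stronglyMeasurable.stronglyMeasurableAtFilter) hf_cont.continuousAt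

include hf_cont in
lemma interval_eq_F (a b : ℝ) :
    ∫ t in a..b, f t = (∫ t in (0:ℝ)..b, f t) - ∫ t in (0:ℝ)..a, f t :=
  (intervalIntegral.integral_interval_sub_left
    (hf_cont.intervalIntegrable _ _) (hf_cont.intervalIntegrable _ _)).symm

include hf_cont hf_symm hf_anti hκ hκ_def hδ in
lemma unique_core {x₁ x₂ : ℝ} (heq : IsEquilibrium f δ x₁ x₂) (hlt : x₁ < x₂)
    (hd : x₂ - x₁ < 2*δ) : x₁ = δ - κ ∧ x₂ = κ - δ := by
  obtain ⟨h1, h2⟩ := heq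
  set F := fun u => ∫ t in (0:ℝ)..u, f t with hF
  have hev1 : ∀ y ∈ Ioo (x₂ - 2*δ) x₂,
      payoff f δ y x₂ = F ((y + x₂)/2) - F (y - δ) := by
    intro y hy
    rw [payoff_eq_left f hδ hy.2]
    have : min (y + δ) ((y + x₂)/2) = (y + x₂)/2 := by
      rw [min_eq_right]; linarith [hy.1]
    rw [this, interval_eq_F hf_cont]
  have hmem1 : x₁ ∈ Ioo (x₂ - 2*δ) x₂ := ⟨by linarith, hlt⟩
  have hev1' : ∀ᶠ y in nhds x₁, payoff f δ y x₂ = F ((y + x₂)/2) - F (y - δ) := by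
    filter_upwards [isOpen_Ioo.mem_nhds hmem1] using hev1
  have hmax1 : IsLocalMax (fun y => F ((y + x₂)/2) - F (y - δ)) x₁ := by
    have hP : IsLocalMax (fun y => payoff f δ y x₂) x₁ := Filter.Eventually.of_forall h1
    have hx₁ : payoff f δ x₁ x₂ = F ((x₁ + x₂)/2) - F (x₁ - δ) := hev1 x₁ hmem1
    filter_upwards [hev1', hP] with y hy hle
    simpa [← hy, ← hx₁] using hle
  have hd1 : HasDerivAt (fun y => F ((y + x₂)/2) - F (y - δ))
      (f ((x₁ + x₂)/2) * (1/2) - f (x₁ - δ) * 1) x₁ := by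
    have hinner : HasDerivAt (fun y : ℝ => (y + x₂)/2) (1/2) x₁ := by
      simpa using ((hasDerivAt_id x₁).add_const x₂).div_const 2
    have hA := (hasDerivAt_F hf_cont ((x₁ + x₂)/2)).comp x₁ hinner
    have hinner2 : HasDerivAt (fun y : ℝ => y - δ) 1 x₁ := by
      simpa using (hasDerivAt_id x₁).sub_const δ
    have hB := (hasDerivAt_F hf_cont (x₁ - δ)).comp x₁ hinner2
    exact hA.sub hB
  have foc1 : f ((x₁ + x₂)/2) * (1/2) - f (x₁ - δ) * 1 = 0 :=
    hmax1.hasDerivAt_eq_zero hd1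
  have hev2 : ∀ y ∈ Ioo x₁ (x₁ + 2*δ),
      payoff f δ y x₁ = F (y + δ) - F ((y + x₁)/2) := by
    intro y hy
    rw [payoff_eq_right f hδ hy.1]
    have : max (y - δ) ((y + x₁)/2) = (y + x₁)/2 := by
      rw [max_eq_right]; linarith [hy.2]
    rw [this, interval_eq_F hf_cont]
  have hmem2 : x₂ ∈ Ioo x₁ (x₁ + 2*δ) := ⟨hlt, by linarith⟩
  have hev2' : ∀ᶠ y in nhds x₂, payoff f δ y x₁ = F (y + δ) - F ((y + x₁)/2) := by
    filter_upwards [isOpen_Ioo.mem_nhds hmem2] using hev2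
  have hmax2 : IsLocalMax (fun y => F (y + δ) - F ((y + x₁)/2)) x₂ := by
    have hP : IsLocalMax (fun y => payoff f δ y x₁) x₂ := Filter.Eventually.of_forall h2
    have hx₂ : payoff f δ x₂ x₁ = F (x₂ + δ) - F ((x₂ + x₁)/2) := hev2 x₂ hmem2
    filter_upwards [hev2', hP] with y hy hle
    simpa [← hy, ← hx₂] using hle
  have hd2 : HasDerivAt (fun y => F (y + δ) - F ((y + x₁)/2))
      (f (x₂ + δ) * 1 - f ((x₂ + x₁)/2) * (1/2)) x₂ := by
    have hinner : HasDerivAt (fun y : ℝ => (y + x₁)/2) (1/2) x₂ := by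
      simpa using ((hasDerivAt_id x₂).add_const x₁).div_const 2
    have hA := (hasDerivAt_F hf_cont (x₂ + δ)).comp x₂ ((hasDerivAt_id x₂).add_const δ)
    have hB := (hasDerivAt_F hf_cont ((x₂ + x₁)/2)).comp x₂ hinner
    exact hA.sub hB
  have foc2 : f (x₂ + δ) * 1 - f ((x₂ + x₁)/2) * (1/2) = 0 :=
    hmax2.hasDerivAt_eq_zero hd2
  have hmideq : (x₂ + x₁)/2 = (x₁ + x₂)/2 := by ring
  rw [hmideq] at foc2
  have hfeq : f (x₁ - δ) = f (x₂ + δ) := by linarith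
  have habs : |x₁ - δ| = |x₂ + δ| := f_inj_abs hf_symm hf_anti hfeq
  rcases abs_eq_abs.1 habs with hc | hc
  · exfalso; linarith
  · have hx : x₁ = -x₂ := by linarith
    have hmid0 : (x₁ + x₂)/2 = 0 := by rw [hx]; ring
    rw [hmid0] at foc1
    have hfk : f (x₁ - δ) = f κ := by rw [hκ_def]; linarith
    have habs2 : |x₁ - δ| = |κ| := f_inj_abs hf_symm hf_anti hfk
    rw [abs_of_pos hκ] at habs2
    have hx2pos : 0 < x₂ := by linarith
    have hneg : x₁ - δ < 0 := by linarith
    rw [abs_of_neg hneg] at habs2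
    constructor <;> linarith

end main

theorem stmt_9 (f g : ℝ → ℝ)
    (hf_nonneg : ∀ t, 0 ≤ f t)
    (hf_int : Integrable f)
    (hf_mass : ∫ t, f t = 1)
    (hf_cont : Continuous f)
    (hf_symm : ∀ t, f (-t) = f t)
    (hf_anti : StrictAntiOn f (Ici 0))
    (hg_concave : ConcaveOn ℝ univ g)
    (hfg : ∀ t, f t = Real.exp (g t))
    (κ : ℝ) (hκ : 0 < κ) (hκ_def : f κ = f 0 / 2)
    (δ : ℝ) (hδ : 0 < δ) :
    ((∃ x₁ x₂ : ℝ, IsEquilibrium f δ x₁ x₂ ∧ 0 < |x₂ - x₁| ∧ |x₂ - x₁| < 2 * δ) ↔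
      (κ / 2 < δ ∧ δ < κ)) ∧
    (∀ x₁ x₂ : ℝ, IsEquilibrium f δ x₁ x₂ → 0 < |x₂ - x₁| → |x₂ - x₁| < 2 * δ →
      ((x₁ = δ - κ ∧ x₂ = κ - δ) ∨ (x₁ = κ - δ ∧ x₂ = δ - κ))) := by
  have key : ∀ x₁ x₂ : ℝ, IsEquilibrium f δ x₁ x₂ → 0 < |x₂ - x₁| → |x₂ - x₁| < 2 * δ →
      ((x₁ = δ - κ ∧ x₂ = κ - δ) ∨ (x₁ = κ - δ ∧ x₂ = δ - κ)) := by
    intro x₁ x₂ heq hpos hlt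
    rcases lt_trichotomy x₁ x₂ with h | h | h
    · left
      have habs : |x₂ - x₁| = x₂ - x₁ := abs_of_pos (by linarith)
      rw [habs] at hlt
      exact unique_core hf_cont hf_symm hf_anti hκ hκ_def hδ heq h hlt
    · exfalso; rw [h] at hpos; simp at hpos
    · right
      have heq' : IsEquilibrium f δ x₂ x₁ := ⟨heq.2, heq.1⟩
      have habs : |x₂ - x₁| = x₁ - x₂ := by
        rw [abs_of_neg (show x₂ - x₁ < 0 by linarith)]; ring
      rw [habs] at hlt
      have := unique_core hf_cont hf_symm hf_anti hκ hκ_def hδ heq' h (by linarith)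
      exact ⟨this.2, this.1⟩
  constructor
  · constructor
    · rintro ⟨x₁, x₂, heq, hpos, hlt⟩
      rcases lt_trichotomy x₁ x₂ with h | h | h
      · have habs : |x₂ - x₁| = x₂ - x₁ := abs_of_pos (by linarith)
        rw [habs] at hlt
        obtain ⟨e1, e2⟩ := unique_core hf_cont hf_symm hf_anti hκ hκ_def hδ heq h hlt
        rw [e1, e2] at h hlt
        exact ⟨by linarith, by linarith⟩
      · exfalso; rw [h] at hpos; simp at hpos
      · have heq' : IsEquilibrium f δ x₂ x₁ := ⟨heq.2, heq.1⟩
        have habs : |x₂ - x₁| = x₁ - x₂ := by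
          rw [abs_of_neg (show x₂ - x₁ < 0 by linarith)]; ring
        rw [habs] at hlt
        obtain ⟨e1, e2⟩ := unique_core hf_cont hf_symm hf_anti hκ hκ_def hδ heq' h hlt
        rw [e1, e2] at h hlt
        exact ⟨by linarith, by linarith⟩
    · rintro ⟨hδ1, hδ2⟩
      refine ⟨δ - κ, κ - δ,
        exists_core hf_nonneg hf_cont hf_symm hf_anti hg_concave hfg hκ hκ_def hδ hδ1 hδ2,
        ?_, ?_⟩
      · rw [show κ - δ - (δ - κ) = 2*(κ-δ) by ring, abs_of_pos (by linarith)]; linarith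
      · rw [show κ - δ - (δ - κ) = 2*(κ-δ) by ring, abs_of_pos (by linarith)]; linarith
  · exact key
end

section
/- In the fixed-price location game with log-concave, symmetric, strictly decreasing on [0,∞), continuous density f, any pure Nash equilibrium with partial differentiation is symmetric: if x₁ < x₂, 0 < x₂ − x₁ < 2δ, and (x₁,x₂) is an equilibrium, then x₁ + x₂ = 0. -/
open MeasureTheory Set

lemma set_right {a b δ : ℝ} (hab : a < b) (hd : b - a < 2 * δ) :
    {t : ℝ | |t - b| ≤ δ ∧ |t - b| ≤ |t - a|} = Icc ((a + b) / 2) (b + δ) := by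
  ext t
  simp only [mem_setOf_eq, mem_Icc]
  constructor
  · rintro ⟨h1, h2⟩
    have ht : t - b ≤ δ := (abs_le.mp h1).2
    refine ⟨?_, by linarith⟩
    have h3 : b - t ≤ |t - b| := by rw [abs_sub_comm]; exact le_abs_self _
    rcases le_or_gt a t with h | h
    · rw [abs_of_nonneg (sub_nonneg.mpr h)] at h2
      linarith [le_trans h3 h2]
    · exfalso
      rw [abs_of_neg (by linarith : t - a < 0)] at h2
      linarith [le_trans h3 h2]
  · rintro ⟨h1, h2⟩
    exact ⟨abs_le.mpr ⟨by linarith, by linarith⟩,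
      abs_le_abs (by linarith) (by linarith)⟩

lemma set_left {a b δ : ℝ} (hab : a < b) (hd : b - a < 2 * δ) :
    {t : ℝ | |t - a| ≤ δ ∧ |t - a| ≤ |t - b|} = Icc (a - δ) ((a + b) / 2) := by
  ext t
  simp only [mem_setOf_eq, mem_Icc]
  constructor
  · rintro ⟨h1, h2⟩
    have ht : -δ ≤ t - a := (abs_le.mp h1).1
    refine ⟨by linarith, ?_⟩
    have h3 : t - a ≤ |t - a| := le_abs_self _
    rcases le_or_gt t b with h | h
    · rw [abs_of_nonpos (by linarith : t - b ≤ 0)] at h2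
      linarith [le_trans h3 h2]
    · exfalso
      rw [abs_of_pos (by linarith : 0 < t - b)] at h2
      linarith [le_trans h3 h2]
  · rintro ⟨h1, h2⟩
    refine ⟨abs_le.mpr ⟨by linarith, by linarith⟩, ?_⟩
    rw [abs_sub_comm t a, abs_sub_comm t b]
    exact abs_le_abs (by linarith) (by linarith)

lemma interval_sub {f : ℝ → ℝ} (hf_int : Integrable f) (c d : ℝ) :
    ∫ t in c..d, f t = (∫ t in (0:ℝ)..d, f t) - ∫ t in (0:ℝ)..c, f t := by
  have h := intervalIntegral.integral_add_adjacent_intervals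
    (hf_int.intervalIntegrable (a := 0) (b := c))
    (hf_int.intervalIntegrable (a := c) (b := d))
  linarith

lemma payoff_right {f : ℝ → ℝ} (hf_int : Integrable f) {a b δ : ℝ}
    (hab : a < b) (hd : b - a < 2 * δ) (hδ : 0 < δ) :
    payoff f δ b a = (∫ t in (0:ℝ)..(b + δ), f t) - ∫ t in (0:ℝ)..((a + b) / 2), f t := by
  unfold payoff
  rw [if_neg (ne_of_gt hab), set_right hab hd, integral_Icc_eq_integral_Ioc,
    ← intervalIntegral.integral_of_le (by linarith), interval_sub hf_int]

lemma payoff_left {f : ℝ → ℝ} (hf_int : Integrable f) {a b δ : ℝ}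
    (hab : a < b) (hd : b - a < 2 * δ) (hδ : 0 < δ) :
    payoff f δ a b = (∫ t in (0:ℝ)..((a + b) / 2), f t) - ∫ t in (0:ℝ)..(a - δ), f t := by
  unfold payoff
  rw [if_neg (ne_of_lt hab), set_left hab hd, integral_Icc_eq_integral_Ioc,
    ← intervalIntegral.integral_of_le (by linarith), interval_sub hf_int]

theorem stmt_10 (f g : ℝ → ℝ)
    (hf_nonneg : ∀ t, 0 ≤ f t)
    (hf_int : Integrable f)
    (hf_mass : ∫ t, f t = 1)
    (hf_cont : Continuous f)
    (hf_symm : ∀ t, f (-t) = f t)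
    (hf_anti : StrictAntiOn f (Ici 0))
    (hg_concave : ConcaveOn ℝ univ g)
    (hfg : ∀ t, f t = Real.exp (g t))
    (δ : ℝ) (hδ : 0 < δ)
    (x₁ x₂ : ℝ) (hlt : x₁ < x₂) (hdist : x₂ - x₁ < 2 * δ)
    (heq : IsEquilibrium f δ x₁ x₂) :
    x₁ + x₂ = 0 := by
  set G : ℝ → ℝ := fun u => ∫ t in (0:ℝ)..u, f t with hGdef
  have hG : ∀ u : ℝ, HasDerivAt G (f u) u := fun u =>
    intervalIntegral.integral_hasDerivAt_right (hf_int.intervalIntegrable)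
      (hf_cont.stronglyMeasurableAtFilter _ _) hf_cont.continuousAt
  -- Firm 2's first-order condition
  set F₂ : ℝ → ℝ := fun y => G (y + δ) - G ((x₁ + y) / 2) with hF₂def
  have hev₂ : (fun y => payoff f δ y x₁) =ᶠ[nhds x₂] F₂ := by
    filter_upwards [Ioo_mem_nhds hlt (by linarith : x₂ < x₁ + 2 * δ)] with y hy
    exact payoff_right hf_int hy.1 (by linarith [hy.2]) hδ
  have hmax₂ : IsLocalMax (fun y => payoff f δ y x₁) x₂ :=
    Filter.Eventually.of_forall heq.2
  have hmaxF₂ : IsLocalMax F₂ x₂ :=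
    hmax₂.congr hev₂
  have hder₂ : HasDerivAt F₂ (f (x₂ + δ) * 1 - f ((x₁ + x₂) / 2) * (1 / 2)) x₂ := by
    have h1 : HasDerivAt (fun y : ℝ => y + δ) 1 x₂ := (hasDerivAt_id x₂).add_const δ
    have h2 : HasDerivAt (fun y : ℝ => (x₁ + y) / 2) (1 / 2) x₂ := by
      simpa using ((hasDerivAt_id x₂).const_add x₁).div_const 2
    exact ((hG (x₂ + δ)).comp x₂ h1).sub ((hG ((x₁ + x₂) / 2)).comp x₂ h2)
  have hfoc₂ : f (x₂ + δ) * 1 - f ((x₁ + x₂) / 2) * (1 / 2) = 0 := by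
    rw [← hder₂.deriv]; exact hmaxF₂.deriv_eq_zero
  -- Firm 1's first-order condition
  set F₁ : ℝ → ℝ := fun y => G ((y + x₂) / 2) - G (y - δ) with hF₁def
  have hev₁ : (fun y => payoff f δ y x₂) =ᶠ[nhds x₁] F₁ := by
    filter_upwards [Ioo_mem_nhds (by linarith : x₂ - 2 * δ < x₁) hlt] with y hy
    have := payoff_left hf_int (a := y) (b := x₂) hy.2 (by linarith [hy.1]) hδ
    simpa [hF₁def, hGdef] using this
  have hmax₁ : IsLocalMax (fun y => payoff f δ y x₂) x₁ :=
    Filter.Eventually.of_forall heq.1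
  have hmaxF₁ : IsLocalMax F₁ x₁ :=
    hmax₁.congr hev₁
  have hder₁ : HasDerivAt F₁ (f ((x₁ + x₂) / 2) * (1 / 2) - f (x₁ - δ) * 1) x₁ := by
    have h1 : HasDerivAt (fun y : ℝ => (y + x₂) / 2) (1 / 2) x₁ := by
      simpa using ((hasDerivAt_id x₁).add_const x₂).div_const 2
    have h2 : HasDerivAt (fun y : ℝ => y - δ) 1 x₁ := (hasDerivAt_id x₁).sub_const δ
    exact ((hG ((x₁ + x₂) / 2)).comp x₁ h1).sub ((hG (x₁ - δ)).comp x₁ h2)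
  have hfoc₁ : f ((x₁ + x₂) / 2) * (1 / 2) - f (x₁ - δ) * 1 = 0 := by
    rw [← hder₁.deriv]; exact hmaxF₁.deriv_eq_zero
  -- Combine
  have hkey : f (x₂ + δ) = f (x₁ - δ) := by linarith
  have fabs : ∀ a : ℝ, f |a| = f a := by
    intro a
    rcases le_or_gt 0 a with h | h
    · rw [abs_of_nonneg h]
    · rw [abs_of_neg h, hf_symm]
  have habs : |x₂ + δ| = |x₁ - δ| :=
    hf_anti.injOn (mem_Ici.mpr (abs_nonneg _)) (mem_Ici.mpr (abs_nonneg _)) (by rw [fabs, fabs]; exact hkey)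
  rcases abs_eq_abs.mp habs with h | h
  · linarith
  · linarith
end

section
/- In the fixed-price location game with log-concave, symmetric, strictly decreasing on [0,∞), continuous density f, a pure Nash equilibrium with full differentiation (|x₂ − x₁| ≥ 2δ) exists if and only if δ ≤ κ/2. -/
open MeasureTheory Set

namespace StmtAux

open intervalIntegral

variable {f : ℝ → ℝ} {δ : ℝ}

lemma abs_le_abs_iff' {a b : ℝ} : |a| ≤ |b| ↔ a * a ≤ b * b := by
  rw [mul_self_le_mul_self_iff (abs_nonneg a) (abs_nonneg b),
    abs_mul_abs_self, abs_mul_abs_self]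

lemma mid_lt {own opp t : ℝ} (h : own < opp) :
    |t - own| ≤ |t - opp| ↔ t ≤ (own + opp) / 2 := by
  rw [abs_le_abs_iff']
  constructor <;> intro H <;> nlinarith

lemma mid_gt {own opp t : ℝ} (h : opp < own) :
    |t - own| ≤ |t - opp| ↔ (own + opp) / 2 ≤ t := by
  rw [abs_le_abs_iff']
  constructor <;> intro H <;> nlinarith

lemma ball_eq (a : ℝ) : {t : ℝ | |t - a| ≤ δ} = Icc (a - δ) (a + δ) := by
  ext t
  simp only [mem_setOf_eq, mem_Icc, abs_le]
  constructor <;> intro h <;> exact ⟨by linarith [h.1], by linarith [h.2]⟩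

lemma set_lt {own opp : ℝ} (h : own < opp) :
    {t : ℝ | |t - own| ≤ δ ∧ |t - own| ≤ |t - opp|}
      = Icc (own - δ) (min (own + δ) ((own + opp) / 2)) := by
  ext t
  simp only [mem_setOf_eq, mem_Icc, abs_le, le_min_iff, mid_lt h]
  constructor
  · rintro ⟨⟨h1, h2⟩, h3⟩; exact ⟨by linarith, by linarith, h3⟩
  · rintro ⟨h1, h2, h3⟩; exact ⟨⟨by linarith, by linarith⟩, h3⟩

lemma set_gt {own opp : ℝ} (h : opp < own) :
    {t : ℝ | |t - own| ≤ δ ∧ |t - own| ≤ |t - opp|}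
      = Icc (max (own - δ) ((own + opp) / 2)) (own + δ) := by
  ext t
  simp only [mem_setOf_eq, mem_Icc, abs_le, max_le_iff, mid_gt h]
  constructor
  · rintro ⟨⟨h1, h2⟩, h3⟩; exact ⟨⟨by linarith, h3⟩, by linarith⟩
  · rintro ⟨⟨h1, h3⟩, h2⟩; exact ⟨⟨by linarith, by linarith⟩, h3⟩

lemma payoff_lt (hδ : 0 ≤ δ) {own opp : ℝ} (h : own < opp) :
    payoff f δ own opp
      = ∫ t in (own - δ)..(min (own + δ) ((own + opp) / 2)), f t := by
  rw [payoff, if_neg h.ne, set_lt h, integral_Icc_eq_integral_Ioc,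
    ← integral_of_le (le_min (by linarith) (by linarith))]

lemma payoff_gt (hδ : 0 ≤ δ) {own opp : ℝ} (h : opp < own) :
    payoff f δ own opp
      = ∫ t in (max (own - δ) ((own + opp) / 2))..(own + δ), f t := by
  rw [payoff, if_neg h.ne', set_gt h, integral_Icc_eq_integral_Ioc,
    ← integral_of_le (max_le (by linarith) (by linarith))]

lemma payoff_sep_lt (hδ : 0 ≤ δ) {own opp : ℝ} (h : own < opp)
    (hsep : own + 2 * δ ≤ opp) :
    payoff f δ own opp = ∫ t in (own - δ)..(own + δ), f t := by
  rw [payoff_lt hδ h, min_eq_left (by linarith)]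

lemma payoff_olap_lt (hδ : 0 ≤ δ) {own opp : ℝ} (h : own < opp)
    (holap : opp ≤ own + 2 * δ) :
    payoff f δ own opp = ∫ t in (own - δ)..((own + opp) / 2), f t := by
  rw [payoff_lt hδ h, min_eq_right (by linarith)]

lemma payoff_sep_gt (hδ : 0 ≤ δ) {own opp : ℝ} (h : opp < own)
    (hsep : opp + 2 * δ ≤ own) :
    payoff f δ own opp = ∫ t in (own - δ)..(own + δ), f t := by
  rw [payoff_gt hδ h, max_eq_left (by linarith)]

lemma payoff_olap_gt (hδ : 0 ≤ δ) {own opp : ℝ} (h : opp < own)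
    (holap : own ≤ opp + 2 * δ) :
    payoff f δ own opp = ∫ t in ((own + opp) / 2)..(own + δ), f t := by
  rw [payoff_gt hδ h, max_eq_right (by linarith)]

lemma payoff_self (hδ : 0 ≤ δ) (a : ℝ) :
    payoff f δ a a = (∫ t in (a - δ)..(a + δ), f t) / 2 := by
  rw [payoff, if_pos rfl, ball_eq, integral_Icc_eq_integral_Ioc,
    ← integral_of_le (by linarith)]

lemma int_le_const (hf_int : Integrable f) {a b C : ℝ} (hab : a ≤ b)
    (h : ∀ t ∈ Icc a b, f t ≤ C) : (∫ t in a..b, f t) ≤ (b - a) * C := by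
  calc (∫ t in a..b, f t) ≤ ∫ _t in a..b, C :=
        integral_mono_on hab hf_int.intervalIntegrable intervalIntegrable_const h
    _ = (b - a) * C := by simp [smul_eq_mul]

lemma const_le_int (hf_int : Integrable f) {a b C : ℝ} (hab : a ≤ b)
    (h : ∀ t ∈ Icc a b, C ≤ f t) : (b - a) * C ≤ ∫ t in a..b, f t := by
  calc (b - a) * C = ∫ _t in a..b, C := by simp [smul_eq_mul]
    _ ≤ ∫ t in a..b, f t :=
        integral_mono_on hab intervalIntegrable_const hf_int.intervalIntegrable h

lemma int_even (hf_symm : ∀ t, f (-t) = f t) (a b : ℝ) :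
    (∫ t in (-b)..(-a), f t) = ∫ t in a..b, f t := by
  rw [← intervalIntegral.integral_comp_neg f]
  simp only [hf_symm]

lemma f_abs (hf_symm : ∀ t, f (-t) = f t) (t : ℝ) : f t = f |t| := by
  rcases le_or_gt 0 t with h | h
  · rw [abs_of_nonneg h]
  · rw [abs_of_neg h]; exact (hf_symm t).symm

lemma f_mono (hf_symm : ∀ t, f (-t) = f t) (hf_anti : StrictAntiOn f (Ici 0))
    {s t : ℝ} (h : |s| ≤ |t|) : f t ≤ f s := by
  rw [f_abs hf_symm s, f_abs hf_symm t]
  rcases h.eq_or_lt with h' | h'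
  · rw [h']
  · exact (hf_anti (mem_Ici.2 (abs_nonneg s)) (mem_Ici.2 (abs_nonneg t)) h').le

lemma f_smono (hf_symm : ∀ t, f (-t) = f t) (hf_anti : StrictAntiOn f (Ici 0))
    {s t : ℝ} (h : |s| < |t|) : f t < f s := by
  rw [f_abs hf_symm s, f_abs hf_symm t]
  exact hf_anti (mem_Ici.2 (abs_nonneg s)) (mem_Ici.2 (abs_nonneg t)) h

lemma hh_lt (hf_int : Integrable f) (hf_cont : Continuous f)
    (hf_symm : ∀ t, f (-t) = f t) (hf_anti : StrictAntiOn f (Ici 0))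
    (hδ : 0 < δ) {y y' : ℝ} (hy' : y' ≤ 0) (h : y < y') :
    (∫ t in (y - δ)..(y + δ), f t) < ∫ t in (y' - δ)..(y' + δ), f t := by
  have hint : ∀ a b : ℝ, IntervalIntegrable f volume a b :=
    fun _ _ => hf_int.intervalIntegrable
  have e1 : (∫ t in (y - δ)..(y' - δ), f (t + 2 * δ))
      = ∫ t in (y + δ)..(y' + δ), f t := by
    rw [integral_comp_add_right]; congr 1 <;> ring
  have key : (∫ t in (y - δ)..(y' - δ), f t)
      < ∫ t in (y - δ)..(y' - δ), f (t + 2 * δ) := by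
    apply integral_lt_integral_of_continuousOn_of_le_of_exists_lt (by linarith)
      hf_cont.continuousOn (hf_cont.comp (by continuity)).continuousOn
    · intro x hx
      have hx2 : x ≤ y' - δ := hx.2
      have habs : |x + 2 * δ| ≤ |x| := by
        rw [abs_of_nonpos (by linarith : x ≤ 0), abs_le]
        constructor <;> linarith
      exact f_mono hf_symm hf_anti habs
    · refine ⟨y - δ, ⟨le_refl _, by linarith⟩, ?_⟩
      have habs : |y - δ + 2 * δ| < |y - δ| := by
        rw [abs_of_nonpos (by linarith : y - δ ≤ 0), abs_lt]
        constructor <;> linarith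
      exact f_smono hf_symm hf_anti habs
  have a1 := integral_add_adjacent_intervals (μ := volume)
    (hint (y - δ) (y' - δ)) (hint (y' - δ) (y' + δ))
  have a2 := integral_add_adjacent_intervals (μ := volume)
    (hint (y - δ) (y + δ)) (hint (y + δ) (y' + δ))
  rw [e1] at key
  linarith

lemma hh_gt (hf_int : Integrable f) (hf_cont : Continuous f)
    (hf_symm : ∀ t, f (-t) = f t) (hf_anti : StrictAntiOn f (Ici 0))
    (hδ : 0 < δ) {y y' : ℝ} (hy' : 0 ≤ y') (h : y' < y) :
    (∫ t in (y - δ)..(y + δ), f t) < ∫ t in (y' - δ)..(y' + δ), f t := by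
  have H := hh_lt hf_int hf_cont hf_symm hf_anti hδ
    (show -y' ≤ 0 by linarith) (show -y < -y' by linarith)
  have e1 : (∫ t in (-y - δ)..(-y + δ), f t) = ∫ t in (y - δ)..(y + δ), f t := by
    rw [show -y - δ = -(y + δ) by ring, show -y + δ = -(y - δ) by ring,
      int_even hf_symm]
  have e2 : (∫ t in (-y' - δ)..(-y' + δ), f t)
      = ∫ t in (y' - δ)..(y' + δ), f t := by
    rw [show -y' - δ = -(y' + δ) by ring, show -y' + δ = -(y' - δ) by ring,
      int_even hf_symm]
  rw [e1, e2] at H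
  exact H

lemma payoff_neg (hδ : 0 ≤ δ) (hf_symm : ∀ t, f (-t) = f t) (a b : ℝ) :
    payoff f δ (-a) (-b) = payoff f δ a b := by
  rcases lt_trichotomy a b with h | h | h
  · rw [payoff_gt hδ (show -b < -a by linarith), payoff_lt hδ h,
      ← int_even hf_symm (a - δ) (min (a + δ) ((a + b) / 2))]
    congr 1
    · rcases le_total (a + δ) ((a + b) / 2) with h' | h'
      · rw [min_eq_left h', max_eq_left (by linarith)]; ring
      · rw [min_eq_right h', max_eq_right (by linarith)]; ring
    · ring
  · subst h
    rw [payoff_self hδ, payoff_self hδ,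
      show -a - δ = -(a + δ) by ring, show -a + δ = -(a - δ) by ring,
      int_even hf_symm]
  · rw [payoff_lt hδ (show -a < -b by linarith), payoff_gt hδ h,
      ← int_even hf_symm (max (a - δ) ((a + b) / 2)) (a + δ)]
    congr 1
    · ring
    · rcases le_total (a - δ) ((a + b) / 2) with h' | h'
      · rw [max_eq_right h', min_eq_right (by linarith)]; ring
      · rw [max_eq_left h', min_eq_left (by linarith)]; ring

lemma equilibrium_neg (hδ : 0 ≤ δ) (hf_symm : ∀ t, f (-t) = f t) {x₁ x₂ : ℝ}
    (h : IsEquilibrium f δ x₁ x₂) : IsEquilibrium f δ (-x₂) (-x₁) := by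
  constructor
  · intro y
    have h1 : payoff f δ y (-x₁) = payoff f δ (-y) x₁ := by
      have := payoff_neg hδ hf_symm (-y) x₁
      rwa [neg_neg] at this
    rw [h1, payoff_neg hδ hf_symm x₂ x₁]
    exact h.2 (-y)
  · intro y
    have h1 : payoff f δ y (-x₂) = payoff f δ (-y) x₂ := by
      have := payoff_neg hδ hf_symm (-y) x₂
      rwa [neg_neg] at this
    rw [h1, payoff_neg hδ hf_symm x₁ x₂]
    exact h.1 (-y)

lemma x1_nonpos (hf_int : Integrable f) (hf_cont : Continuous f)
    (hf_symm : ∀ t, f (-t) = f t) (hf_anti : StrictAntiOn f (Ici 0))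
    (hδ : 0 < δ) {x₁ x₂ : ℝ} (hgap : x₁ + 2 * δ ≤ x₂)
    (heq1 : ∀ y, payoff f δ y x₂ ≤ payoff f δ x₁ x₂) : x₁ ≤ 0 := by
  by_contra hx
  push_neg at hx
  have h1 := heq1 (x₁ / 2)
  rw [payoff_sep_lt hδ.le (by linarith) (by linarith),
      payoff_sep_lt hδ.le (by linarith) hgap] at h1
  exact absurd h1 (not_le.2 (hh_gt hf_int hf_cont hf_symm hf_anti hδ
    (by linarith : (0:ℝ) ≤ x₁ / 2) (by linarith)))

lemma gap_eq (hf_int : Integrable f) (hf_cont : Continuous f)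
    (hf_symm : ∀ t, f (-t) = f t) (hf_anti : StrictAntiOn f (Ici 0))
    (hδ : 0 < δ) {x₁ x₂ : ℝ} (hgap : x₁ + 2 * δ ≤ x₂)
    (heq : IsEquilibrium f δ x₁ x₂) (hx2 : 0 ≤ x₂) : x₂ = x₁ + 2 * δ := by
  by_contra hne
  have hlt : x₁ + 2 * δ < x₂ := hgap.lt_of_ne (Ne.symm hne)
  rcases hx2.eq_or_lt with h0 | h0
  · have h1 := heq.1 (x₂ - 2 * δ)
    rw [payoff_sep_lt hδ.le (by linarith) (by linarith),
        payoff_sep_lt hδ.le (by linarith) hgap] at h1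
    exact absurd h1 (not_le.2 (hh_lt hf_int hf_cont hf_symm hf_anti hδ
      (by linarith : x₂ - 2 * δ ≤ 0) (by linarith)))
  · have h2 := heq.2 (max (x₁ + 2 * δ) 0)
    have hyx : max (x₁ + 2 * δ) 0 < x₂ := max_lt hlt h0
    rw [payoff_sep_gt hδ.le
        (lt_of_lt_of_le (by linarith) (le_max_left _ _)) (le_max_left _ _),
        payoff_sep_gt hδ.le (by linarith) hgap] at h2
    exact absurd h2 (not_le.2 (hh_gt hf_int hf_cont hf_symm hf_anti hδ
      (le_max_right _ _) hyx))

lemma cond1 (hf_int : Integrable f) (hf_cont : Continuous f)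
    (hδ : 0 < δ) {x₁ x₂ : ℝ} (hx2 : x₂ = x₁ + 2 * δ)
    (heq1 : ∀ y, payoff f δ y x₂ ≤ payoff f δ x₁ x₂) :
    f (x₁ + δ) ≤ 2 * f (x₁ - δ) := by
  by_contra hcon
  push_neg at hcon
  have hint : ∀ a b : ℝ, IntervalIntegrable f volume a b :=
    fun _ _ => hf_int.intervalIntegrable
  set η := (f (x₁ + δ) - 2 * f (x₁ - δ)) / 4 with hη
  have hηpos : 0 < η := by rw [hη]; linarith
  obtain ⟨ε₁, hε₁, H1⟩ :=
    Metric.continuousAt_iff.1 (hf_cont.continuousAt (x := x₁ + δ)) η hηpos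
  obtain ⟨ε₂, hε₂, H2⟩ :=
    Metric.continuousAt_iff.1 (hf_cont.continuousAt (x := x₁ - δ)) η hηpos
  set ε := min (min ε₁ ε₂) (2 * δ) / 2 with hε
  have hεpos : 0 < ε := by
    apply div_pos _ two_pos
    exact lt_min (lt_min hε₁ hε₂) (by linarith)
  have hεδ : ε ≤ δ := by
    have : min (min ε₁ ε₂) (2 * δ) ≤ 2 * δ := min_le_right _ _
    rw [hε]; linarith
  have hεε₁ : ε < ε₁ := by
    have : min (min ε₁ ε₂) (2 * δ) ≤ ε₁ := le_trans (min_le_left _ _) (min_le_left _ _)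
    rw [hε]; linarith
  have hεε₂ : ε < ε₂ := by
    have : min (min ε₁ ε₂) (2 * δ) ≤ ε₂ := le_trans (min_le_left _ _) (min_le_right _ _)
    rw [hε]; linarith
  have h1 := heq1 (x₁ + ε)
  rw [payoff_olap_lt hδ.le (by linarith) (by linarith),
      payoff_olap_lt hδ.le (by linarith) (by linarith),
      show x₁ + ε - δ = x₁ - δ + ε by ring] at h1
  -- h1 : ∫_{x₁-δ+ε}^{(x₁+ε+x₂)/2} ≤ ∫_{x₁-δ}^{(x₁+x₂)/2}
  have a1 := integral_add_adjacent_intervals (μ := volume)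
    (hint (x₁ - δ) (x₁ - δ + ε)) (hint (x₁ - δ + ε) ((x₁ + x₂) / 2))
  have a2 := integral_add_adjacent_intervals (μ := volume)
    (hint (x₁ - δ + ε) ((x₁ + x₂) / 2)) (hint ((x₁ + x₂) / 2) ((x₁ + ε + x₂) / 2))
  have key : (∫ t in ((x₁ + x₂) / 2)..((x₁ + ε + x₂) / 2), f t)
      ≤ ∫ t in (x₁ - δ)..(x₁ - δ + ε), f t := by linarith
  have low : ((x₁ + ε + x₂) / 2 - (x₁ + x₂) / 2) * (f (x₁ + δ) - η)
      ≤ ∫ t in ((x₁ + x₂) / 2)..((x₁ + ε + x₂) / 2), f t := by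
    apply const_le_int hf_int (by linarith)
    intro t ht
    have ht1 : (x₁ + x₂) / 2 ≤ t := ht.1
    have ht2 : t ≤ (x₁ + ε + x₂) / 2 := ht.2
    have hd : dist t (x₁ + δ) < ε₁ := by
      rw [Real.dist_eq, abs_lt]
      constructor <;> [skip; skip] <;> rw [hx2] at ht1 ht2 <;> linarith
    have := H1 hd
    rw [Real.dist_eq, abs_lt] at this
    linarith [this.1]
  have high : (∫ t in (x₁ - δ)..(x₁ - δ + ε), f t)
      ≤ ((x₁ - δ + ε) - (x₁ - δ)) * (f (x₁ - δ) + η) := by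
    apply int_le_const hf_int (by linarith)
    intro t ht
    have hd : dist t (x₁ - δ) < ε₂ := by
      rw [Real.dist_eq, abs_lt]
      constructor <;> [skip; skip] <;> [linarith [ht.1]; linarith [ht.2]]
    have := H2 hd
    rw [Real.dist_eq, abs_lt] at this
    linarith [this.2]
  have e1 : (x₁ + ε + x₂) / 2 - (x₁ + x₂) / 2 = ε / 2 := by ring
  have e2 : (x₁ - δ + ε) - (x₁ - δ) = ε := by ring
  rw [e1] at low
  rw [e2] at high
  have h4 : f (x₁ + δ) - 2 * f (x₁ - δ) = 4 * η := by rw [hη]; ring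
  nlinarith [key, low, high, mul_pos hεpos hηpos]

lemma f_pos {g : ℝ → ℝ} (hfg : ∀ t, f t = Real.exp (g t)) (t : ℝ) : 0 < f t := by
  rw [hfg]; exact Real.exp_pos _

lemma conc {g : ℝ → ℝ} (hg_concave : ConcaveOn ℝ univ g)
    (hfg : ∀ t, f t = Real.exp (g t)) (hδ : 0 < δ) {a : ℝ} (ha : 0 ≤ a)
    (h : f a ≤ 2 * f (a + 2 * δ)) : f 0 ≤ 2 * f (2 * δ) := by
  have hb : 0 < a + 2 * δ := by linarith
  have h1 := hg_concave.2 (mem_univ (0:ℝ)) (mem_univ (a + 2 * δ))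
      (show 0 ≤ a / (a + 2 * δ) by positivity)
      (show 0 ≤ (2 * δ) / (a + 2 * δ) by positivity)
      (by rw [← add_div, div_self hb.ne'])
  have h2 := hg_concave.2 (mem_univ (0:ℝ)) (mem_univ (a + 2 * δ))
      (show 0 ≤ (2 * δ) / (a + 2 * δ) by positivity)
      (show 0 ≤ a / (a + 2 * δ) by positivity)
      (by rw [← add_div, show 2 * δ + a = a + 2 * δ by ring, div_self hb.ne'])
  simp only [smul_eq_mul, mul_zero, zero_add] at h1 h2
  rw [div_mul_cancel₀ _ hb.ne'] at h1 h2
  -- h1 : a/(a+2δ) * g 0 + (2δ)/(a+2δ) * g (a+2δ) ≤ g (2δ)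
  -- h2 : (2δ)/(a+2δ) * g 0 + a/(a+2δ) * g (a+2δ) ≤ g a
  have hpq : a / (a + 2 * δ) + (2 * δ) / (a + 2 * δ) = 1 := by field_simp
  have hsum : g 0 + g (a + 2 * δ) ≤ g (2 * δ) + g a := by
    have hs := add_le_add h1 h2
    have hrw : a / (a + 2 * δ) * g 0 + 2 * δ / (a + 2 * δ) * g (a + 2 * δ)
        + (2 * δ / (a + 2 * δ) * g 0 + a / (a + 2 * δ) * g (a + 2 * δ))
        = (a / (a + 2 * δ) + (2 * δ) / (a + 2 * δ)) * (g 0 + g (a + 2 * δ)) := by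
      ring
    rw [hrw, hpq, one_mul] at hs
    exact hs
  have E : f 0 * f (a + 2 * δ) ≤ f (2 * δ) * f a := by
    rw [hfg 0, hfg (a + 2 * δ), hfg (2 * δ), hfg a, ← Real.exp_add, ← Real.exp_add]
    exact Real.exp_le_exp.2 hsum
  nlinarith [E, h, f_pos hfg (a + 2 * δ), f_pos hfg a, f_pos hfg 0,
    f_pos hfg (2 * δ)]

lemma firm1 (hf_nonneg : ∀ t, 0 ≤ f t) (hf_int : Integrable f)
    (hf_symm : ∀ t, f (-t) = f t) (hf_anti : StrictAntiOn f (Ici 0))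
    (hδ : 0 < δ) (hK : f 0 ≤ 2 * f (2 * δ)) (y : ℝ) :
    payoff f δ y δ ≤ payoff f δ (-δ) δ := by
  have hint : ∀ a b : ℝ, IntervalIntegrable f volume a b :=
    fun _ _ => hf_int.intervalIntegrable
  have hT : payoff f δ (-δ) δ = ∫ t in (-(2 * δ))..0, f t := by
    rw [payoff_olap_lt hδ.le (by linarith) (by linarith)]
    congr 1 <;> ring
  have hT2 : (∫ t in (-(2 * δ))..(0:ℝ), f t) = ∫ t in (0:ℝ)..(2 * δ), f t := by
    rw [← int_even hf_symm 0 (2 * δ)]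
    congr 1
    norm_num
  rcases lt_trichotomy y δ with hy | hy | hy
  · rcases le_or_gt (y + δ) 0 with h0 | h0
    · rw [payoff_sep_lt hδ.le hy (by linarith), hT]
      have e : (∫ t in (y - δ)..(y + δ), f (t + (-δ - y)))
          = ∫ t in (-(2 * δ))..(0:ℝ), f t := by
        rw [integral_comp_add_right]; congr 1 <;> ring
      rw [← e]
      apply integral_mono_on (by linarith) (hint _ _)
        ((hint (y - δ + (-δ - y)) (y + δ + (-δ - y))).comp_add_right (-δ - y)
          |>.mono_set ?_)
      · intro t ht
        have ht2 : t ≤ y + δ := ht.2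
        have habs : |t + (-δ - y)| ≤ |t| := by
          rw [abs_of_nonpos (by linarith : t ≤ 0), abs_le]
          constructor <;> linarith
        exact f_mono hf_symm hf_anti habs
      · rw [show y - δ + (-δ - y) - (-δ - y) = y - δ by ring,
          show y + δ + (-δ - y) - (-δ - y) = y + δ by ring]
    · rw [payoff_olap_lt hδ.le hy (by linarith), hT]
      have a1 := integral_add_adjacent_intervals (μ := volume)
        (hint (y - δ) 0) (hint 0 ((y + δ) / 2))
      have a2 := integral_add_adjacent_intervals (μ := volume)
        (hint (-(2 * δ)) (y - δ)) (hint (y - δ) 0)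
      have key : (∫ t in (0:ℝ)..((y + δ) / 2), f t)
          ≤ ∫ t in (-(2 * δ))..(y - δ), f t := by
        have c1 : (∫ t in (0:ℝ)..((y + δ) / 2), f t) ≤ ((y + δ) / 2 - 0) * f 0 :=
          int_le_const hf_int (by linarith) (fun t ht =>
            f_mono hf_symm hf_anti (by simpa using abs_nonneg t))
        have c2 : ((y - δ) - (-(2 * δ))) * f (2 * δ)
            ≤ ∫ t in (-(2 * δ))..(y - δ), f t := by
          apply const_le_int hf_int (by linarith)
          intro t ht
          apply f_mono hf_symm hf_anti
          rw [abs_of_nonpos (by linarith [ht.2] : t ≤ 0),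
            abs_of_nonneg (by linarith : (0:ℝ) ≤ 2 * δ)]
          linarith [ht.1]
        have c3 : ((y + δ) / 2 - 0) * f 0 ≤ ((y - δ) - (-(2 * δ))) * f (2 * δ) := by
          nlinarith [mul_nonneg (by linarith : (0:ℝ) ≤ (y + δ) / 2)
            (by linarith : (0:ℝ) ≤ 2 * f (2 * δ) - f 0)]
        linarith
      linarith
  · rw [hy, payoff_self hδ.le, hT, hT2]
    have e : (∫ t in (δ - δ)..(δ + δ), f t) = ∫ t in (0:ℝ)..(2 * δ), f t := by
      congr 1 <;> ring
    rw [e]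
    have hpos : 0 ≤ ∫ t in (0:ℝ)..(2 * δ), f t :=
      integral_nonneg (by linarith) (fun u _ => hf_nonneg u)
    linarith
  · rcases le_or_gt (3 * δ) y with h3 | h3
    · rw [payoff_sep_gt hδ.le hy (by linarith), hT, hT2]
      have e : (∫ t in (0:ℝ)..(2 * δ), f (t + (y - δ)))
          = ∫ t in (y - δ)..(y + δ), f t := by
        rw [integral_comp_add_right]; congr 1 <;> ring
      rw [← e]
      apply integral_mono_on (by linarith) (((hint (y - δ) (y + δ)).comp_add_right
        (y - δ)).mono_set ?_) (hint _ _)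
      · intro t ht
        have ht1 : (0:ℝ) ≤ t := ht.1
        have habs : |t| ≤ |t + (y - δ)| := by
          rw [abs_of_nonneg ht1, abs_of_nonneg (by linarith : (0:ℝ) ≤ t + (y - δ))]
          linarith
        exact f_mono hf_symm hf_anti habs
      · rw [show y - δ - (y - δ) = (0:ℝ) by ring,
          show y + δ - (y - δ) = 2 * δ by ring]
    · rw [payoff_olap_gt hδ.le hy (by linarith), hT, hT2]
      have a1 := integral_add_adjacent_intervals (μ := volume)
        (hint ((y + δ) / 2) (2 * δ)) (hint (2 * δ) (y + δ))
      have a2 := integral_add_adjacent_intervals (μ := volume)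
        (hint 0 ((y + δ) / 2)) (hint ((y + δ) / 2) (2 * δ))
      have key : (∫ t in (2 * δ)..(y + δ), f t)
          ≤ ∫ t in (0:ℝ)..((y + δ) / 2), f t := by
        have c1 : (∫ t in (2 * δ)..(y + δ), f t) ≤ ((y + δ) - 2 * δ) * f (2 * δ) := by
          apply int_le_const hf_int (by linarith)
          intro t ht
          apply f_mono hf_symm hf_anti
          rw [abs_of_nonneg (by linarith : (0:ℝ) ≤ 2 * δ),
            abs_of_nonneg (by linarith [ht.1] : (0:ℝ) ≤ t)]
          linarith [ht.1]
        have c2 : ((y + δ) / 2 - 0) * f (2 * δ)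
            ≤ ∫ t in (0:ℝ)..((y + δ) / 2), f t := by
          apply const_le_int hf_int (by linarith)
          intro t ht
          apply f_mono hf_symm hf_anti
          rw [abs_of_nonneg (by linarith [ht.1] : (0:ℝ) ≤ t),
            abs_of_nonneg (by linarith : (0:ℝ) ≤ 2 * δ)]
          linarith [ht.2]
        have c3 : ((y + δ) - 2 * δ) * f (2 * δ) ≤ ((y + δ) / 2 - 0) * f (2 * δ) := by
          nlinarith [hf_nonneg (2 * δ)]
        linarith
      linarith

end StmtAux

theorem stmt_11 (f g : ℝ → ℝ)
    (hf_nonneg : ∀ t, 0 ≤ f t)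
    (hf_int : Integrable f)
    (hf_mass : ∫ t, f t = 1)
    (hf_cont : Continuous f)
    (hf_symm : ∀ t, f (-t) = f t)
    (hf_anti : StrictAntiOn f (Ici 0))
    (hg_concave : ConcaveOn ℝ univ g)
    (hfg : ∀ t, f t = Real.exp (g t))
    (κ : ℝ) (hκ : 0 < κ) (hκ_def : f κ = f 0 / 2)
    (δ : ℝ) (hδ : 0 < δ) :
    (∃ x₁ x₂ : ℝ, IsEquilibrium f δ x₁ x₂ ∧ 2 * δ ≤ |x₂ - x₁|) ↔ δ ≤ κ / 2 := by
  constructor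
  · rintro ⟨x₁, x₂, heq, hgap⟩
    have main : ∀ a b : ℝ, a + 2 * δ ≤ b → IsEquilibrium f δ a b → δ ≤ κ / 2 := by
      intro a b hab heq
      have hx1 : a ≤ 0 :=
        StmtAux.x1_nonpos hf_int hf_cont hf_symm hf_anti hδ hab heq.1
      have heqn := StmtAux.equilibrium_neg hδ.le hf_symm heq
      have hx2 : 0 ≤ b := by
        have := StmtAux.x1_nonpos hf_int hf_cont hf_symm hf_anti hδ
          (show -b + 2 * δ ≤ -a by linarith) heqn.1
        linarith
      have hbeq : b = a + 2 * δ :=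
        StmtAux.gap_eq hf_int hf_cont hf_symm hf_anti hδ hab heq hx2
      have hC1 : f (a + δ) ≤ 2 * f (a - δ) :=
        StmtAux.cond1 hf_int hf_cont hδ hbeq heq.1
      have hC2 : f (-b + δ) ≤ 2 * f (-b - δ) :=
        StmtAux.cond1 hf_int hf_cont hδ (show -a = -b + 2 * δ by linarith) heqn.1
      have hK : f 0 ≤ 2 * f (2 * δ) := by
        rcases le_or_gt 0 (a + δ) with hm | hm
        · apply StmtAux.conc hg_concave hfg hδ hm
          have e1 : f (-b + δ) = f (a + δ) := by
            rw [show -b + δ = -(a + δ) by linarith, hf_symm]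
          have e2 : f (-b - δ) = f (a + δ + 2 * δ) := by
            rw [show -b - δ = -(a + δ + 2 * δ) by linarith, hf_symm]
          rw [← e1, ← e2]
          exact hC2
        · apply StmtAux.conc hg_concave hfg hδ (show 0 ≤ -(a + δ) by linarith)
          have e1 : f (-(a + δ)) = f (a + δ) := hf_symm _
          have e2 : f (-(a + δ) + 2 * δ) = f (a - δ) := by
            rw [show -(a + δ) + 2 * δ = -(a - δ) by ring, hf_symm]
          rw [e1, e2]
          exact hC1
      by_contra hcon
      push_neg at hcon
      have hlt : f (2 * δ) < f κ :=
        hf_anti (mem_Ici.2 hκ.le) (mem_Ici.2 (by linarith)) (by linarith)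
      rw [hκ_def] at hlt
      linarith
    rcases lt_trichotomy x₁ x₂ with h | h | h
    · refine main x₁ x₂ ?_ heq
      rw [abs_of_pos (sub_pos.2 h)] at hgap; linarith
    · rw [h, sub_self, abs_zero] at hgap; linarith
    · refine main x₂ x₁ ?_ ⟨heq.2, heq.1⟩
      rw [abs_of_neg (sub_neg.2 h)] at hgap; linarith
  · intro hκδ
    have hK : f 0 ≤ 2 * f (2 * δ) := by
      have h2 : f κ ≤ f (2 * δ) := by
        rcases eq_or_lt_of_le (show 2 * δ ≤ κ by linarith) with h | h
        · rw [h]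
        · exact (hf_anti (mem_Ici.2 (by linarith)) (mem_Ici.2 hκ.le) h).le
      rw [hκ_def] at h2; linarith
    refine ⟨-δ, δ, ⟨?_, ?_⟩, ?_⟩
    · exact StmtAux.firm1 hf_nonneg hf_int hf_symm hf_anti hδ hK
    · intro y
      have h1 : payoff f δ y (-δ) = payoff f δ (-y) δ := by
        have := StmtAux.payoff_neg hδ.le hf_symm (-y) δ
        rwa [neg_neg] at this
      have h2 : payoff f δ δ (-δ) = payoff f δ (-δ) δ := by
        have := StmtAux.payoff_neg hδ.le hf_symm (-δ) δ
        rwa [neg_neg] at this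
      rw [h1, h2]
      exact StmtAux.firm1 hf_nonneg hf_int hf_symm hf_anti hδ hK (-y)
    · rw [show δ - -δ = 2 * δ by ring, abs_of_pos (by linarith)]
end

section
/- In the fixed-price location game with log-concave, symmetric, strictly decreasing on [0,∞), continuous density f, assume 2δ ≤ κ. Define α = max{t ∈ [0,δ] : (1/2) f(t) ≤ f(t + 2δ)}. Then, up to permutation of players, the set of pure Nash equilibria is exactly {(m − δ, m + δ) : m ∈ [−α, α]}. -/
open MeasureTheory Set

set_option linter.unusedSectionVars false
set_option maxHeartbeats 1000000

open intervalIntegral Topology Filter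

namespace Stmt12

noncomputable def F (f : ℝ → ℝ) (x : ℝ) : ℝ := ∫ t in (0:ℝ)..x, f t

section P1



variable {f g : ℝ → ℝ} {κ δ α : ℝ}

lemma fpos (hfg : ∀ t, f t = Real.exp (g t)) (t : ℝ) : 0 < f t := by
  rw [hfg]; exact Real.exp_pos _

lemma fabs (hf_symm : ∀ t, f (-t) = f t) (t : ℝ) : f |t| = f t := by
  rcases le_or_gt 0 t with h | h
  · rw [abs_of_nonneg h]
  · rw [abs_of_neg h, hf_symm]

lemma fmono (hf_symm : ∀ t, f (-t) = f t) (hf_anti : StrictAntiOn f (Ici 0))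
    {a b : ℝ} (h : |a| ≤ |b|) : f b ≤ f a := by
  rw [← fabs hf_symm a, ← fabs hf_symm b]
  rcases eq_or_lt_of_le h with h' | h'
  · rw [h']
  · exact (hf_anti (abs_nonneg a) (abs_nonneg b) h').le

lemma fmono_strict (hf_symm : ∀ t, f (-t) = f t) (hf_anti : StrictAntiOn f (Ici 0))
    {a b : ℝ} (h : |a| < |b|) : f b < f a := by
  rw [← fabs hf_symm a, ← fabs hf_symm b]
  exact hf_anti (abs_nonneg a) (abs_nonneg b) h

lemma finj (hf_symm : ∀ t, f (-t) = f t) (hf_anti : StrictAntiOn f (Ici 0))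
    {a b : ℝ} (h : f a = f b) : |a| = |b| := by
  by_contra hne
  rcases lt_or_gt_of_ne hne with h' | h'
  · exact absurd h (ne_of_gt (fmono_strict hf_symm hf_anti h'))
  · exact absurd h (ne_of_lt (fmono_strict hf_symm hf_anti h'))

/-- concavity increment lemma -/
lemma concave_incr (hg : ConcaveOn ℝ univ g) {a b c : ℝ} (hab : a ≤ b) (hc : 0 ≤ c) :
    g (b + c) - g b ≤ g (a + c) - g a := by
  rcases eq_or_lt_of_le hab with rfl | hab
  · exact le_rfl
  rcases eq_or_lt_of_le hc with rfl | hc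
  · simp
  have hD : 0 < b + c - a := by linarith
  set lam := c / (b + c - a) with hlam
  set mu := (b - a) / (b + c - a) with hmu
  have hlam0 : 0 ≤ lam := div_nonneg hc.le hD.le
  have hmu0 : 0 ≤ mu := div_nonneg (by linarith) hD.le
  have hsum : mu + lam = 1 := by
    rw [hmu, hlam, ← add_div, show b - a + c = b + c - a by ring]
    exact div_self hD.ne'
  have h1 := hg.2 (mem_univ a) (mem_univ (b + c)) hmu0 hlam0 hsum
  have h2 := hg.2 (mem_univ a) (mem_univ (b + c)) hlam0 hmu0 (by linarith)
  have e1 : mu • a + lam • (b + c) = a + c := by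
    simp only [smul_eq_mul, hlam, hmu]; field_simp; ring
  have e2 : lam • a + mu • (b + c) = b := by
    simp only [smul_eq_mul, hlam, hmu]; field_simp; ring
  rw [e1] at h1; rw [e2] at h2
  simp only [smul_eq_mul] at h1 h2
  have key : mu * g a + lam * g (b + c) + (lam * g a + mu * g (b + c))
      = g a + g (b + c) := by
    have : mu * g a + lam * g (b + c) + (lam * g a + mu * g (b + c))
        = (mu + lam) * (g a + g (b + c)) := by ring
    rw [this, hsum, one_mul]
  linarith

section Alpha

variable (hf_symm : ∀ t, f (-t) = f t) (hf_anti : StrictAntiOn f (Ici 0))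
  (hg_concave : ConcaveOn ℝ univ g) (hfg : ∀ t, f t = Real.exp (g t))
  (hκ : 0 < κ) (hκ_def : f κ = f 0 / 2) (hδ : 0 < δ) (hδκ : 2 * δ ≤ κ)
  (hα : IsGreatest {t : ℝ | t ∈ Icc 0 δ ∧ (1 / 2) * f t ≤ f (t + 2 * δ)} α)

include hf_symm hf_anti hg_concave hfg hκ hκ_def hδ hδκ hα in
/-- The key pointwise inequality: `(1/2) f t ≤ f (t + 2δ)` for all `t ≤ α`. -/
lemma K2 {t : ℝ} (ht : t ≤ α) : (1 / 2) * f t ≤ f (t + 2 * δ) := by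
  obtain ⟨⟨⟨hα0, hαδ⟩, hαS⟩, -⟩ := hα
  have hf0 : f t ≤ f 0 := fmono hf_symm hf_anti (by simpa using abs_nonneg t)
  rcases le_or_gt (|t + 2 * δ|) κ with h1 | h1
  · have : f κ ≤ f (t + 2 * δ) := fmono hf_symm hf_anti (by rwa [abs_of_pos hκ])
    rw [hκ_def] at this; linarith
  · rcases le_or_gt 0 (t + 2 * δ) with h2 | h2
    · -- t + 2δ > κ, so t > κ - 2δ ≥ 0, t ∈ (0, α]
      rw [abs_of_nonneg h2] at h1
      have hinc : g (α + 2 * δ) - g α ≤ g (t + 2 * δ) - g t :=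
        concave_incr hg_concave ht (by linarith)
      have hαlog : g α - Real.log 2 ≤ g (α + 2 * δ) := by
        have h' : (0:ℝ) < (1 / 2) * f α := by
          have := fpos hfg α; positivity
        have := Real.log_le_log h' hαS
        rw [Real.log_mul (by norm_num) (fpos hfg α).ne', hfg α, hfg (α + 2 * δ),
          Real.log_exp, Real.log_exp, one_div, Real.log_inv] at this
        linarith
      have : g t - Real.log 2 ≤ g (t + 2 * δ) := by linarith
      rw [hfg t, hfg (t + 2 * δ)]
      calc (1 / 2) * Real.exp (g t) = Real.exp (g t - Real.log 2) := by
            rw [Real.exp_sub, Real.exp_log two_pos]; ring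
        _ ≤ Real.exp (g (t + 2 * δ)) := Real.exp_le_exp.2 this
    · -- t + 2δ < -κ < 0
      have : f t ≤ f (t + 2 * δ) := by
        apply fmono hf_symm hf_anti
        rw [abs_of_neg h2, abs_of_neg (by linarith : t < 0)]
        linarith
      have := fpos hfg t
      linarith

end Alpha

end P1

section P2



variable {f : ℝ → ℝ} {δ : ℝ}


section Fbasic
variable (hf_int : Integrable f)

include hf_int in
lemma F_sub (a b : ℝ) : (∫ t in a..b, f t) = F f b - F f a := by
  rw [F, F, ← intervalIntegral.integral_interval_sub_left
    (hf_int.intervalIntegrable) (hf_int.intervalIntegrable)]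

include hf_int in
lemma F_mono (hf_nonneg : ∀ t, 0 ≤ f t) {a b : ℝ} (h : a ≤ b) : F f a ≤ F f b := by
  have : 0 ≤ ∫ t in a..b, f t := intervalIntegral.integral_nonneg h (fun u _ => hf_nonneg u)
  rw [F_sub hf_int] at this; linarith

include hf_int in
lemma F_strict (hpos : ∀ t, 0 < f t) {a b : ℝ} (h : a < b) : F f a < F f b := by
  have : 0 < ∫ t in a..b, f t :=
    intervalIntegral.intervalIntegral_pos_of_pos_on hf_int.intervalIntegrable
      (fun x _ => hpos x) h
  rw [F_sub hf_int] at this; linarith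

include hf_int in
lemma F_neg (hf_symm : ∀ t, f (-t) = f t) (x : ℝ) : F f (-x) = - F f x := by
  have h1 : (∫ t in (0:ℝ)..x, f (-t)) = ∫ t in (-x)..(0:ℝ), f t := by
    simpa using intervalIntegral.integral_comp_neg f (a := 0) (b := x)
  simp only [hf_symm] at h1
  have h2 : (∫ t in (-x)..(0:ℝ), f t) = F f 0 - F f (-x) := F_sub hf_int _ _
  have h0 : F f 0 = 0 := intervalIntegral.integral_same
  rw [h2, h0] at h1
  rw [show (∫ t in (0:ℝ)..x, f t) = F f x from rfl] at h1
  linarith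

include hf_int in
lemma F_cont : Continuous (F f) := hf_int.continuous_primitive 0

include hf_int in
lemma F_deriv (hf_cont : Continuous f) (x : ℝ) : HasDerivAt (F f) (f x) x := by
  exact intervalIntegral.integral_hasDerivAt_right hf_int.intervalIntegrable
    hf_cont.stronglyMeasurable.stronglyMeasurableAtFilter
    hf_cont.continuousAt

end Fbasic

lemma midpoint_iff {o p t : ℝ} (h : o < p) : |t - o| ≤ |t - p| ↔ t ≤ (o + p) / 2 := by
  constructor <;> intro h' <;>
    rcases abs_cases (t - o) with ⟨e1, e2⟩ | ⟨e1, e2⟩ <;>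
    rcases abs_cases (t - p) with ⟨e3, e4⟩ | ⟨e3, e4⟩ <;>
    simp only [e1, e3] at * <;> linarith

variable (hf_int : Integrable f) (hδ : 0 < δ)

include hf_int hδ in
lemma payoff_lt {own opp : ℝ} (h : own < opp) :
    payoff f δ own opp = F f (min (own + δ) ((own + opp) / 2)) - F f (own - δ) := by
  rw [payoff, if_neg h.ne]
  have hset : {t : ℝ | |t - own| ≤ δ ∧ |t - own| ≤ |t - opp|}
      = Icc (own - δ) (min (own + δ) ((own + opp) / 2)) := by
    ext t
    simp only [mem_setOf_eq, mem_Icc, abs_le, le_min_iff, midpoint_iff h]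
    constructor
    · rintro ⟨⟨a1, a2⟩, a3⟩; exact ⟨by linarith, by linarith, a3⟩
    · rintro ⟨a1, a2, a3⟩; exact ⟨⟨by linarith, by linarith⟩, a3⟩
  have hab : own - δ ≤ min (own + δ) ((own + opp) / 2) := by
    apply le_min <;> [linarith; linarith]
  rw [hset, integral_Icc_eq_integral_Ioc, ← intervalIntegral.integral_of_le hab,
    F_sub hf_int]

include hf_int hδ in
lemma payoff_gt {own opp : ℝ} (h : opp < own) :
    payoff f δ own opp = F f (own + δ) - F f (max (own - δ) ((own + opp) / 2)) := by
  rw [payoff, if_neg h.ne']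
  have hmid : ∀ t : ℝ, (|t - own| ≤ |t - opp| ↔ (own + opp) / 2 ≤ t) := by
    intro t
    constructor <;> intro h' <;>
      rcases abs_cases (t - own) with ⟨e1, e2⟩ | ⟨e1, e2⟩ <;>
      rcases abs_cases (t - opp) with ⟨e3, e4⟩ | ⟨e3, e4⟩ <;>
      simp only [e1, e3] at * <;> linarith
  have hset : {t : ℝ | |t - own| ≤ δ ∧ |t - own| ≤ |t - opp|}
      = Icc (max (own - δ) ((own + opp) / 2)) (own + δ) := by
    ext t
    simp only [mem_setOf_eq, mem_Icc, abs_le, hmid, max_le_iff]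
    constructor
    · rintro ⟨⟨a1, a2⟩, a3⟩; exact ⟨⟨by linarith, a3⟩, by linarith⟩
    · rintro ⟨⟨a1, a2⟩, a3⟩; exact ⟨⟨by linarith, by linarith⟩, a2⟩
  have hab : max (own - δ) ((own + opp) / 2) ≤ own + δ := by
    apply max_le <;> [linarith; linarith]
  rw [hset, integral_Icc_eq_integral_Ioc, ← intervalIntegral.integral_of_le hab,
    F_sub hf_int]

include hf_int hδ in
lemma payoff_self (x : ℝ) :
    payoff f δ x x = (F f (x + δ) - F f (x - δ)) / 2 := by
  rw [payoff, if_pos rfl]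
  have hset : {t : ℝ | |t - x| ≤ δ} = Icc (x - δ) (x + δ) := by
    ext t; simp only [mem_setOf_eq, mem_Icc, abs_le]; constructor <;> intro h <;>
      constructor <;> linarith [h.1, h.2]
  rw [hset, integral_Icc_eq_integral_Ioc, ← intervalIntegral.integral_of_le (by linarith),
    F_sub hf_int]


end P2

section P3


variable {f : ℝ → ℝ}


variable (hf_int : Integrable f) (hf_cont : Continuous f)

include hf_cont in
lemma contII (a b L : ℝ) : IntervalIntegrable (fun u => f (a + b * u)) volume 0 L :=
  (hf_cont.comp (continuous_const.add (continuous_const.mul continuous_id))).intervalIntegrable _ _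

include hf_int in
lemma conv_add (p L : ℝ) : (∫ u in (0:ℝ)..L, f (p + u)) = F f (p + L) - F f p := by
  rw [intervalIntegral.integral_comp_add_left f p, add_zero, F_sub hf_int]

include hf_int in
lemma conv_sub (p L : ℝ) : (∫ u in (0:ℝ)..L, f (p - u)) = F f p - F f (p - L) := by
  rw [intervalIntegral.integral_comp_sub_left f p, sub_zero, F_sub hf_int]

include hf_int in
lemma conv_sub2 (b L : ℝ) : (∫ u in (0:ℝ)..L, f (b - 2 * u)) = (F f b - F f (b - 2 * L)) / 2 := by
  rw [intervalIntegral.integral_comp_sub_mul f (two_ne_zero) b]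
  rw [mul_zero, sub_zero, F_sub hf_int]
  simp [smul_eq_mul]; ring

include hf_int hf_cont in
lemma cmpT {p q L : ℝ} (hL : 0 ≤ L) (h : ∀ u ∈ Icc (0:ℝ) L, f (p + u) ≤ f (q + u)) :
    F f (p + L) - F f p ≤ F f (q + L) - F f q := by
  rw [← conv_add hf_int, ← conv_add hf_int]
  apply intervalIntegral.integral_mono_on hL _ _ h
  · simpa using contII hf_cont p 1 L
  · simpa using contII hf_cont q 1 L

include hf_int hf_cont in
lemma cmpR {p q L : ℝ} (hL : 0 ≤ L) (h : ∀ u ∈ Icc (0:ℝ) L, f (p - u) ≤ f (q + u)) :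
    F f p - F f (p - L) ≤ F f (q + L) - F f q := by
  rw [← conv_add hf_int, ← conv_sub hf_int]
  apply intervalIntegral.integral_mono_on hL _ _ h
  · simpa [sub_eq_add_neg] using contII hf_cont p (-1) L
  · simpa using contII hf_cont q 1 L

include hf_int hf_cont in
lemma cmpS {a b L : ℝ} (hL : 0 ≤ L) (h : ∀ u ∈ Icc (0:ℝ) L, f (a - u) ≤ 2 * f (b - 2 * u)) :
    F f a - F f (a - L) ≤ F f b - F f (b - 2 * L) := by
  have h2 : (∫ u in (0:ℝ)..L, 2 * f (b - 2 * u)) = F f b - F f (b - 2 * L) := by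
    rw [intervalIntegral.integral_const_mul, conv_sub2 hf_int]; ring
  rw [← conv_sub hf_int, ← h2]
  apply intervalIntegral.integral_mono_on hL _ _ h
  · simpa [sub_eq_add_neg] using contII hf_cont a (-1) L
  · exact (continuous_const.mul (hf_cont.comp (continuous_const.sub
      (continuous_const.mul continuous_id)))).intervalIntegrable _ _

include hf_int hf_cont in
lemma cmpH {a b L : ℝ} (hL : 0 ≤ L) (h : ∀ u ∈ Icc (0:ℝ) L, f (a + u) ≤ 2 * f (b + u)) :
    F f (a + L) - F f a ≤ 2 * (F f (b + L) - F f b) := by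
  have h2 : (∫ u in (0:ℝ)..L, 2 * f (b + u)) = 2 * (F f (b + L) - F f b) := by
    rw [intervalIntegral.integral_const_mul, conv_add hf_int]
  rw [← conv_add hf_int, ← h2]
  apply intervalIntegral.integral_mono_on hL _ _ h
  · simpa using contII hf_cont a 1 L
  · exact (continuous_const.mul (hf_cont.comp (continuous_const.add
      continuous_id))).intervalIntegrable _ _

include hf_int hf_cont in
lemma cmp_const_le {a L C : ℝ} (hL : 0 ≤ L) (h : ∀ u ∈ Icc (0:ℝ) L, f (a + u) ≤ C) :
    F f (a + L) - F f a ≤ L * C := by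
  have h2 : (∫ _ in (0:ℝ)..L, C) = L * C := by simp [mul_comm]
  rw [← conv_add hf_int, ← h2]
  apply intervalIntegral.integral_mono_on hL _ _ h
  · simpa using contII hf_cont a 1 L
  · exact intervalIntegrable_const

include hf_int hf_cont in
lemma cmp_const_ge {a L C : ℝ} (hL : 0 ≤ L) (h : ∀ u ∈ Icc (0:ℝ) L, C ≤ f (a + u)) :
    L * C ≤ F f (a + L) - F f a := by
  have h2 : (∫ _ in (0:ℝ)..L, C) = L * C := by simp [mul_comm]
  rw [← conv_add hf_int, ← h2]
  apply intervalIntegral.integral_mono_on hL _ _ h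
  · exact intervalIntegrable_const
  · simpa using contII hf_cont a 1 L

include hf_int hf_cont in
/-- strict version: if pointwise `≤` on `[0,L]` and strict on the interior, strict inequality. -/
lemma cmpT_strict {p q L : ℝ} (hL : 0 < L)
    (h : ∀ u ∈ Icc (0:ℝ) L, f (p + u) ≤ f (q + u))
    (hs : ∀ u ∈ Ioo (0:ℝ) L, f (p + u) < f (q + u)) :
    F f (p + L) - F f p < F f (q + L) - F f q := by
  rw [← conv_add hf_int, ← conv_add hf_int]
  have key : 0 < ∫ u in (0:ℝ)..L, (f (q + u) - f (p + u)) := by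
    apply intervalIntegral.intervalIntegral_pos_of_pos_on
    · exact ((hf_cont.comp (continuous_const.add continuous_id)).sub
        (hf_cont.comp (continuous_const.add continuous_id))).intervalIntegrable _ _
    · intro x hx; have := hs x hx; linarith
    · exact hL
  have heq := intervalIntegral.integral_sub (μ := volume) (a := 0) (b := L)
    (f := fun u => f (q + u)) (g := fun u => f (p + u))
    ((hf_cont.comp (continuous_const.add continuous_id)).intervalIntegrable 0 L)
    ((hf_cont.comp (continuous_const.add continuous_id)).intervalIntegrable 0 L)
  rw [heq] at key
  linarith


end P3


section Main

variable {f g : ℝ → ℝ} {κ δ α : ℝ}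
variable (hf_nonneg : ∀ t, 0 ≤ f t) (hf_int : Integrable f) (hf_cont : Continuous f)
  (hf_symm : ∀ t, f (-t) = f t) (hf_anti : StrictAntiOn f (Ici 0))
  (hg_concave : ConcaveOn ℝ univ g) (hfg : ∀ t, f t = Real.exp (g t))
  (hκ : 0 < κ) (hκ_def : f κ = f 0 / 2) (hδ : 0 < δ) (hδκ : 2 * δ ≤ κ)
  (hα : IsGreatest {t : ℝ | t ∈ Icc 0 δ ∧ (1 / 2) * f t ≤ f (t + 2 * δ)} α)

include hf_symm hf_anti hg_concave hfg hκ hκ_def hδ hδκ hα in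
lemma KK {m : ℝ} (hm : m ∈ Icc (-α) α) {w : ℝ} (hw0 : 0 ≤ w) (hwδ : w ≤ δ) :
    f (m - w) ≤ 2 * f (m + 2 * δ - 2 * w) := by
  obtain ⟨hm1, hm2⟩ := hm
  have hα0 : 0 ≤ α := hα.1.1.1
  have hαδ : α ≤ δ := hα.1.1.2
  rcases le_or_gt 0 (m + 2 * δ - 2 * w) with h2 | h2
  · have step1 : f (m - w + 2 * δ) ≤ f (m + 2 * δ - 2 * w) := by
      apply fmono hf_symm hf_anti
      rw [abs_of_nonneg h2, abs_of_nonneg (by linarith : (0:ℝ) ≤ m - w + 2 * δ)]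
      linarith
    have step2 := K2 hf_symm hf_anti hg_concave hfg hκ hκ_def hδ hδκ hα
      (t := m - w) (by linarith)
    have : f (m - w + 2 * δ) ≥ (1/2) * f (m - w) := by linarith
    linarith
  · have h3 : f κ ≤ f (m + 2 * δ - 2 * w) := by
      apply fmono hf_symm hf_anti
      rw [abs_of_pos hκ, abs_of_neg h2]
      linarith
    have h4 : f (m - w) ≤ f 0 := fmono hf_symm hf_anti (by simp)
    rw [hκ_def] at h3
    linarith

include hf_nonneg hf_int hf_cont hf_symm hf_anti hg_concave hfg hκ hκ_def hδ hδκ hα in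
lemma devBound {m : ℝ} (hm : m ∈ Icc (-α) α) (y : ℝ) :
    payoff f δ y (m - δ) ≤ F f (m + 2 * δ) - F f m := by
  obtain ⟨hm1, hm2⟩ := hm
  have hα0 : 0 ≤ α := hα.1.1.1
  have hαδ : α ≤ δ := hα.1.1.2
  have hK2 : ∀ t, t ≤ α → (1 / 2) * f t ≤ f (t + 2 * δ) :=
    fun t ht => K2 hf_symm hf_anti hg_concave hfg hκ hκ_def hδ hδκ hα ht
  have hKK : ∀ w, 0 ≤ w → w ≤ δ → f (m - w) ≤ 2 * f (m + 2 * δ - 2 * w) :=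
    fun w h1 h2 => KK hf_symm hf_anti hg_concave hfg hκ hκ_def hδ hδκ hα ⟨hm1, hm2⟩ h1 h2
  set x₁ := m - δ with hx₁
  rcases lt_trichotomy y x₁ with hy | hy | hy
  · -- y < x₁
    rw [payoff_lt hf_int hδ hy]
    rcases le_or_gt y (x₁ - 2 * δ) with hy2 | hy2
    · -- far left: full interval A(y)
      have hmin : min (y + δ) ((y + x₁) / 2) = y + δ := min_eq_left (by
        rw [hx₁]; linarith)
      rw [hmin]
      -- A(y) ≤ A(m - 3δ) ≤ q₂
      have hstep1 : F f (y + δ) - F f (y - δ) ≤ F f ((m - 3*δ) + δ) - F f ((m - 3*δ) - δ) := by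
        -- A even + Aanti on nonneg: A(y) = A(-y), -(m-3δ) ≤ -y
        have hAy : F f (y + δ) - F f (y - δ) = F f ((-y) + δ) - F f ((-y) - δ) := by
          have e1 : F f ((-y) + δ) = - F f (y - δ) := by
            rw [show (-y) + δ = -(y - δ) by ring, F_neg hf_int hf_symm]
          have e2 : F f ((-y) - δ) = - F f (y + δ) := by
            rw [show (-y) - δ = -(y + δ) by ring, F_neg hf_int hf_symm]
          rw [e1, e2]; ring
        have hAm : F f ((m - 3*δ) + δ) - F f ((m - 3*δ) - δ)
            = F f ((-(m - 3*δ)) + δ) - F f ((-(m - 3*δ)) - δ) := by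
          have e1 : F f ((-(m - 3*δ)) + δ) = - F f ((m - 3*δ) - δ) := by
            rw [show (-(m - 3*δ)) + δ = -((m - 3*δ) - δ) by ring, F_neg hf_int hf_symm]
          have e2 : F f ((-(m - 3*δ)) - δ) = - F f ((m - 3*δ) + δ) := by
            rw [show (-(m - 3*δ)) - δ = -((m - 3*δ) + δ) by ring, F_neg hf_int hf_symm]
          rw [e1, e2]; ring
        rw [hAy, hAm]
        -- Aanti : 0 ≤ a ≤ b → A b ≤ A a with a := -(m - 3δ), b := -y
        have ha0 : 0 ≤ -(m - 3*δ) := by linarith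
        have hab : -(m - 3*δ) ≤ -y := by rw [hx₁] at hy2; linarith
        -- cmpT : p := a+δ, q := a-δ, L := b - a
        set a := -(m - 3*δ)
        set b := -y
        have hcmp := cmpT hf_int hf_cont (p := a + δ) (q := a - δ) (L := b - a)
          (by linarith) (fun u hu => by
            apply fmono hf_symm hf_anti
            rw [abs_of_nonneg (by cases hu with | intro h1 h2 => linarith : (0:ℝ) ≤ a + δ + u)]
            rw [abs_le]
            cases hu with | intro h1 h2 => constructor <;> linarith)
        rw [show a + δ + (b - a) = b + δ by ring, show a - δ + (b - a) = b - δ by ring] at hcmp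
        linarith
      have hstep2 : F f ((m - 3*δ) + δ) - F f ((m - 3*δ) - δ) ≤ F f (m + 2*δ) - F f m := by
        have hcmp := cmpR hf_int hf_cont (p := m - 2*δ) (q := m) (L := 2*δ)
          (by linarith) (fun u hu => by
            apply fmono hf_symm hf_anti
            obtain ⟨h1, h2⟩ := hu
            rw [abs_of_neg (by linarith : m - 2*δ - u < 0), abs_le]
            constructor <;> linarith)
        rw [show m - 2*δ - 2*δ = (m - 3*δ) - δ by ring] at hcmp
        calc F f ((m - 3*δ) + δ) - F f ((m - 3*δ) - δ)
            = F f (m - 2*δ) - F f ((m - 3*δ) - δ) := by rw [show (m - 3*δ) + δ = m - 2*δ by ring]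
          _ ≤ F f (m + 2*δ) - F f m := hcmp
      linarith
    · -- x₁ - 2δ < y < x₁ : contested from the left
      have hmin : min (y + δ) ((y + x₁) / 2) = (y + x₁) / 2 := min_eq_right (by
        rw [hx₁] at hy2 ⊢; linarith)
      rw [hmin]
      set s := x₁ - y with hs
      have hs0 : 0 < s := by rw [hs]; linarith
      have hs2 : s < 2 * δ := by rw [hs, hx₁] at *; linarith
      set c := δ + s/2 - m with hc
      have hc0 : 0 ≤ c := by rw [hc]; linarith
      have hℓ : (y + x₁)/2 = -c := by rw [hc, hs, hx₁]; ring
      have hℓ2 : y - δ = -(c + (δ + s/2)) := by rw [hc, hs, hx₁]; ring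
      have hpay : F f ((y + x₁)/2) - F f (y - δ) = F f (c + (δ + s/2)) - F f c := by
        rw [hℓ, hℓ2, F_neg hf_int hf_symm, F_neg hf_int hf_symm]; ring
      rw [hpay]
      rcases le_or_gt m c with hmc | hmc
      · -- m ≤ c : direct pointwise comparison
        have hcmp := cmpT hf_int hf_cont (p := c) (q := m) (L := δ + s/2)
          (by linarith) (fun u hu => by
            obtain ⟨h1, h2⟩ := hu
            apply fmono hf_symm hf_anti
            rw [abs_of_nonneg (by linarith : (0:ℝ) ≤ c + u), abs_le]
            constructor
            · rw [hc]; linarith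
            · linarith)
        have hF : F f (m + (δ + s/2)) ≤ F f (m + 2*δ) :=
          F_mono hf_int hf_nonneg (by linarith)
        linarith
      · -- c < m
        have hsm : s/2 < m := by rw [hc] at hmc; linarith
        have hcmp := cmpS hf_int hf_cont (a := m) (b := m + 2*δ) (L := m - s/2)
          (by linarith) (fun u hu => by
            obtain ⟨h1, h2⟩ := hu
            exact hKK u h1 (by linarith))
        rw [show m - (m - s/2) = s/2 by ring,
          show m + 2*δ - 2*(m - s/2) = c + (δ + s/2) by rw [hc]; ring] at hcmp
        have hF : F f (s/2) ≤ F f c := F_mono hf_int hf_nonneg (by rw [hc]; linarith)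
        linarith
  · -- y = x₁ : tie
    subst hy
    rw [payoff_self hf_int hδ]
    have hcmp := cmpH hf_int hf_cont (a := m - 2*δ) (b := m) (L := 2*δ)
      (by linarith) (fun u hu => by
        obtain ⟨h1, h2⟩ := hu
        have := hK2 (m - 2*δ + u) (by linarith)
        rw [show m - 2*δ + u + 2*δ = m + u by ring] at this
        linarith)
    rw [show m - 2*δ + 2*δ = m by ring] at hcmp
    rw [show x₁ + δ = m by rw [hx₁]; ring, show x₁ - δ = m - 2*δ by rw [hx₁]; ring]
    linarith
  · -- y > x₁
    rw [payoff_gt hf_int hδ hy]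
    rcases le_or_gt y (x₁ + 2 * δ) with hy2 | hy2
    · -- contested from the right
      have hmax : max (y - δ) ((y + x₁) / 2) = (y + x₁) / 2 := max_eq_right (by
        rw [hx₁] at hy2 ⊢; linarith)
      rw [hmax]
      set L := (m + δ - y)/2 with hL
      have hL0 : 0 ≤ L := by rw [hL, hx₁] at *; linarith
      have hLδ : L ≤ δ := by rw [hL, hx₁] at *; linarith
      have hcmp := cmpS hf_int hf_cont (a := m) (b := m + 2*δ) (L := L)
        hL0 (fun u hu => by
          obtain ⟨h1, h2⟩ := hu
          exact hKK u h1 (by linarith))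
      rw [show m - L = (y + x₁)/2 by rw [hL, hx₁]; ring,
        show m + 2*δ - 2*L = y + δ by rw [hL]; ring] at hcmp
      linarith
    · -- far right : full interval A(y)
      have hmax : max (y - δ) ((y + x₁) / 2) = y - δ := max_eq_left (by
        rw [hx₁] at hy2 ⊢; linarith)
      rw [hmax]
      -- A(y) ≤ A(m + δ) = q₂, via Aanti with a := m + δ ≥ 0, b := y
      have ha0 : 0 ≤ m + δ := by linarith
      have hab : m + δ ≤ y := by rw [hx₁] at hy2; linarith
      have hcmp := cmpT hf_int hf_cont (p := (m + δ) + δ) (q := (m + δ) - δ) (L := y - (m + δ))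
        (by linarith) (fun u hu => by
          obtain ⟨h1, h2⟩ := hu
          apply fmono hf_symm hf_anti
          rw [abs_of_nonneg (by linarith : (0:ℝ) ≤ (m + δ) + δ + u), abs_le]
          constructor <;> linarith)
      rw [show (m + δ) + δ + (y - (m + δ)) = y + δ by ring,
        show (m + δ) - δ + (y - (m + δ)) = y - δ by ring,
        show (m + δ) + δ = m + 2*δ by ring,
        show (m + δ) - δ = m by ring] at hcmp
      linarith

end Main

section P5

variable {f : ℝ → ℝ} {δ : ℝ}
variable (hf_int : Integrable f) (hδ : 0 < δ) (hf_symm : ∀ t, f (-t) = f t)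

include hf_int hδ hf_symm in
lemma payoff_reflect (y x : ℝ) : payoff f δ (-y) (-x) = payoff f δ y x := by
  rcases lt_trichotomy y x with h | h | h
  · rw [payoff_lt hf_int hδ h, payoff_gt hf_int hδ (by linarith : -x < -y)]
    have hmax : max (-y - δ) ((-y + -x) / 2) = -(min (y + δ) ((y + x)/2)) := by
      rw [show -y - δ = -(y + δ) by ring, show (-y + -x)/2 = -((y + x)/2) by ring,
        max_neg_neg]
    rw [hmax, F_neg hf_int hf_symm, show -y + δ = -(y - δ) by ring,
      F_neg hf_int hf_symm]
    ring
  · subst h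
    rw [payoff_self hf_int hδ, payoff_self hf_int hδ,
      show -y + δ = -(y - δ) by ring, show -y - δ = -(y + δ) by ring,
      F_neg hf_int hf_symm, F_neg hf_int hf_symm]
    ring
  · rw [payoff_gt hf_int hδ h, payoff_lt hf_int hδ (by linarith : -y < -x)]
    have hmin : min (-y + δ) ((-y + -x) / 2) = -(max (y - δ) ((y + x)/2)) := by
      rw [show -y + δ = -(y - δ) by ring, show (-y + -x)/2 = -((y + x)/2) by ring,
        min_neg_neg]
    rw [hmin, F_neg hf_int hf_symm, show -y - δ = -(y + δ) by ring,
      F_neg hf_int hf_symm]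
    ring

end P5

section P6

variable {f g : ℝ → ℝ} {κ δ α : ℝ}
variable (hf_nonneg : ∀ t, 0 ≤ f t) (hf_int : Integrable f) (hf_cont : Continuous f)
  (hf_symm : ∀ t, f (-t) = f t) (hf_anti : StrictAntiOn f (Ici 0))
  (hg_concave : ConcaveOn ℝ univ g) (hfg : ∀ t, f t = Real.exp (g t))
  (hκ : 0 < κ) (hκ_def : f κ = f 0 / 2) (hδ : 0 < δ) (hδκ : 2 * δ ≤ κ)
  (hα : IsGreatest {t : ℝ | t ∈ Icc 0 δ ∧ (1 / 2) * f t ≤ f (t + 2 * δ)} α)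

include hf_nonneg hf_int hf_cont hf_symm hf_anti hg_concave hfg hκ hκ_def hδ hδκ hα in
lemma sufficiency {m : ℝ} (hm : m ∈ Icc (-α) α) :
    IsEquilibrium f δ (m - δ) (m + δ) := by
  have hmδ : m - δ < m + δ := by linarith
  have hq2 : payoff f δ (m + δ) (m - δ) = F f (m + 2 * δ) - F f m := by
    rw [payoff_gt hf_int hδ hmδ]
    rw [show m + δ - δ = m by ring, show (m + δ + (m - δ)) / 2 = m by ring, max_self,
      show m + δ + δ = m + 2 * δ by ring]
  have hq1 : payoff f δ (m - δ) (m + δ) = F f m - F f (m - 2 * δ) := by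
    rw [payoff_lt hf_int hδ hmδ]
    rw [show m - δ + δ = m by ring, show (m - δ + (m + δ)) / 2 = m by ring, min_self,
      show m - δ - δ = m - 2 * δ by ring]
  constructor
  · intro y
    rw [hq1]
    have hm' : -m ∈ Icc (-α) α := by
      obtain ⟨h1, h2⟩ := hm; exact ⟨by linarith, by linarith⟩
    have hb := devBound hf_nonneg hf_int hf_cont hf_symm hf_anti hg_concave hfg
      hκ hκ_def hδ hδκ hα hm' (-y)
    rw [show -m - δ = -(m + δ) by ring, payoff_reflect hf_int hδ hf_symm] at hb
    rw [show -m + 2 * δ = -(m - 2*δ) by ring, F_neg hf_int hf_symm,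
      F_neg hf_int hf_symm] at hb
    linarith
  · intro y
    rw [hq2]
    exact devBound hf_nonneg hf_int hf_cont hf_symm hf_anti hg_concave hfg
      hκ hκ_def hδ hδκ hα hm y

end P6

section Deriv1

variable {Φ : ℝ → ℝ} {c D η : ℝ}

lemma deriv_nonneg_of_left (hη : 0 < η) (hd : HasDerivAt Φ D c)
    (h : ∀ y, c - η < y → y < c → Φ y ≤ Φ c) : 0 ≤ D := by
  have hslope := hasDerivAt_iff_tendsto_slope.1 hd
  have hmono : 𝓝[<] c ≤ 𝓝[≠] c :=
    nhdsWithin_mono c (fun y hy => ne_of_lt hy)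
  have h2 : Filter.Tendsto (slope Φ c) (𝓝[<] c) (𝓝 D) := hslope.mono_left hmono
  refine ge_of_tendsto h2 ?_
  filter_upwards [Ioo_mem_nhdsLT (by linarith : c - η < c)] with y hy
  have h3 : Φ y ≤ Φ c := h y hy.1 hy.2
  rw [slope_def_field]
  rw [div_nonneg_iff]
  right
  constructor
  · linarith
  · linarith [hy.2]

lemma deriv_nonpos_of_right (hη : 0 < η) (hd : HasDerivAt Φ D c)
    (h : ∀ y, c < y → y < c + η → Φ y ≤ Φ c) : D ≤ 0 := by
  have hslope := hasDerivAt_iff_tendsto_slope.1 hd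
  have hmono : 𝓝[>] c ≤ 𝓝[≠] c :=
    nhdsWithin_mono c (fun y hy => ne_of_gt hy)
  have h2 : Filter.Tendsto (slope Φ c) (𝓝[>] c) (𝓝 D) := hslope.mono_left hmono
  refine le_of_tendsto h2 ?_
  filter_upwards [Ioo_mem_nhdsGT (by linarith : c < c + η)] with y hy
  have h3 : Φ y ≤ Φ c := h y hy.1 hy.2
  rw [slope_def_field]
  rw [div_nonpos_iff]
  right
  constructor
  · linarith
  · linarith [hy.1]

end Deriv1

section P7

variable {f g : ℝ → ℝ} {κ δ α : ℝ}
variable (hf_nonneg : ∀ t, 0 ≤ f t) (hf_int : Integrable f) (hf_cont : Continuous f)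
  (hf_symm : ∀ t, f (-t) = f t) (hf_anti : StrictAntiOn f (Ici 0))
  (hκ : 0 < κ) (hκ_def : f κ = f 0 / 2) (hδ : 0 < δ) (hδκ : 2 * δ ≤ κ)

include hf_int hf_cont hf_symm hf_anti hδ in
lemma Bstrict {z₁ z₂ : ℝ} (h0 : 0 ≤ z₁) (h12 : z₁ < z₂) :
    F f (z₂ + δ/2) - F f (z₂ - δ/2) < F f (z₁ + δ/2) - F f (z₁ - δ/2) := by
  have hcmp := cmpT_strict hf_int hf_cont (p := z₁ + δ/2) (q := z₁ - δ/2) (L := z₂ - z₁)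
    (by linarith)
    (fun u hu => by
      obtain ⟨h1, h2⟩ := hu
      apply fmono hf_symm hf_anti
      rw [abs_of_nonneg (by linarith : (0:ℝ) ≤ z₁ + δ/2 + u), abs_le]
      constructor <;> linarith)
    (fun u hu => by
      obtain ⟨h1, h2⟩ := hu
      apply fmono_strict hf_symm hf_anti
      rw [abs_of_nonneg (by linarith : (0:ℝ) ≤ z₁ + δ/2 + u), abs_lt]
      constructor <;> linarith)
  rw [show z₁ + δ/2 + (z₂ - z₁) = z₂ + δ/2 by ring,
    show z₁ - δ/2 + (z₂ - z₁) = z₂ - δ/2 by ring] at hcmp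
  linarith

include hf_nonneg hf_int hf_cont hf_symm hf_anti hκ hκ_def hδ hδκ in
lemma no_stack {x : ℝ} (hx : 0 ≤ x) (h : ∀ y, payoff f δ y x ≤ payoff f δ x x) :
    False := by
  have hF0 : F f 0 = 0 := intervalIntegral.integral_same
  rcases eq_or_lt_of_le hx with hx0 | hx0
  · -- x = 0 : deviation to -δ
    subst hx0
    have hdev := h (-δ)
    rw [payoff_lt hf_int hδ (by linarith : -δ < (0:ℝ)), payoff_self hf_int hδ] at hdev
    rw [show -δ + δ = (0:ℝ) by ring, show (-δ + 0)/2 = -(δ/2) by ring,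
      show -δ - δ = -(2*δ) by ring, min_eq_right (by linarith : -(δ/2) ≤ (0:ℝ)),
      show (0:ℝ) + δ = δ by ring, show (0:ℝ) - δ = -δ by ring,
      F_neg hf_int hf_symm, F_neg hf_int hf_symm, F_neg hf_int hf_symm] at hdev
    -- hdev : -F(δ/2) - (-F(2δ)) ≤ (F δ - (-F δ))/2
    have hup : F f (δ/2) < (δ/2) * f 0 := by
      have hpos : 0 < ∫ u in (0:ℝ)..(δ/2), (f 0 - f (0 + u)) := by
        apply intervalIntegral.intervalIntegral_pos_of_pos_on
        · exact (continuous_const.sub (hf_cont.comp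
            (continuous_const.add continuous_id))).intervalIntegrable _ _
        · intro u hu
          have : f (0 + u) < f 0 := by
            apply fmono_strict hf_symm hf_anti
            rw [abs_of_nonneg (by linarith [hu.1] : (0:ℝ) ≤ 0 + u)]
            simp [abs_of_nonneg]
            linarith [hu.1]
          linarith
        · linarith
      have hint2 : IntervalIntegrable (fun u : ℝ => f (0 + u)) volume 0 (δ/2) :=
        Continuous.intervalIntegrable
          (by exact hf_cont.comp (continuous_const.add continuous_id)) _ _
      have he : (∫ u in (0:ℝ)..(δ/2), (f 0 - f (0 + u)))
          = (δ/2) * f 0 - (F f (0 + δ/2) - F f 0) := by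
        rw [intervalIntegral.integral_sub intervalIntegrable_const hint2,
          intervalIntegral.integral_const, conv_add hf_int]
        simp [smul_eq_mul]
      rw [he, hF0] at hpos
      simp only [zero_add] at hpos
      linarith
    have hlow : δ * f (2*δ) ≤ F f (2*δ) - F f δ := by
      have := cmp_const_ge hf_int hf_cont (a := δ) (L := δ) (C := f (2*δ))
        (by linarith) (fun u hu => by
          apply fmono hf_symm hf_anti
          obtain ⟨h1, h2⟩ := hu
          rw [abs_of_nonneg (by linarith : (0:ℝ) ≤ 2*δ),
            abs_of_nonneg (by linarith : (0:ℝ) ≤ δ + u)]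
          linarith)
      rw [show δ + δ = 2*δ by ring] at this
      linarith
    have hf2δ : f 0 / 2 ≤ f (2*δ) := by
      have : f κ ≤ f (2*δ) := by
        apply fmono hf_symm hf_anti
        rw [abs_of_nonneg (by linarith : (0:ℝ) ≤ 2*δ), abs_of_pos hκ]
        exact hδκ
      rw [hκ_def] at this; exact this
    have hmul : δ * (f 0 / 2) ≤ δ * f (2*δ) :=
      mul_le_mul_of_nonneg_left hf2δ (le_of_lt hδ)
    have he2 : (δ/2) * f 0 = δ * (f 0 / 2) := by ring
    linarith
  · -- x > 0 : deviation slightly to the left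
    have hq : payoff f δ x x = (F f (x + δ) - F f (x - δ))/2 := payoff_self hf_int hδ x
    have hkey : F f (x + δ) - F f x < F f x - F f (x - δ) := by
      rcases le_or_gt 0 (x - δ/2) with h' | h'
      · have := Bstrict hf_int hf_cont hf_symm hf_anti hδ h' (by linarith : x - δ/2 < x + δ/2)
        rw [show x + δ/2 + δ/2 = x + δ by ring, show x + δ/2 - δ/2 = x by ring,
          show x - δ/2 + δ/2 = x by ring, show x - δ/2 - δ/2 = x - δ by ring] at this
        linarith
      · have := Bstrict hf_int hf_cont hf_symm hf_anti hδ
          (by linarith : (0:ℝ) ≤ δ/2 - x) (by linarith : δ/2 - x < x + δ/2)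
        rw [show x + δ/2 + δ/2 = x + δ by ring, show x + δ/2 - δ/2 = x by ring,
          show δ/2 - x + δ/2 = -(x - δ) by ring, show δ/2 - x - δ/2 = -x by ring,
          F_neg hf_int hf_symm, F_neg hf_int hf_symm] at this
        linarith
    set φ : ℝ → ℝ := fun ε => F f (x - ε/2) - F f (x - ε - δ) with hφ
    have hcont : ContinuousAt φ 0 := by
      apply Continuous.continuousAt
      apply Continuous.sub
      · exact (F_cont hf_int).comp (continuous_const.sub (continuous_id.div_const 2))
      · exact (F_cont hf_int).comp ((continuous_const.sub continuous_id).sub continuous_const)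
    have hφ0 : φ 0 = F f x - F f (x - δ) := by simp [hφ]
    have hlt : payoff f δ x x < φ 0 := by rw [hq, hφ0]; linarith
    have hev : ∀ᶠ ε in 𝓝 (0:ℝ), payoff f δ x x < φ ε :=
      hcont.tendsto.eventually (eventually_gt_nhds hlt)
    obtain ⟨η, hη, hball⟩ := Metric.eventually_nhds_iff.1 hev
    set ε₀ := min (η/2) δ with hε₀
    have hε₀pos : 0 < ε₀ := lt_min (by linarith) hδ
    have hε₀δ : ε₀ ≤ δ := min_le_right _ _
    have hdist : dist ε₀ 0 < η := by
      rw [Real.dist_eq, sub_zero, abs_of_pos hε₀pos]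
      calc ε₀ ≤ η/2 := min_le_left _ _
        _ < η := by linarith
    have hφval := hball hdist
    have hdev := h (x - ε₀)
    rw [payoff_lt hf_int hδ (by linarith : x - ε₀ < x)] at hdev
    rw [show (x - ε₀ + x)/2 = x - ε₀/2 by ring,
      min_eq_right (by linarith : x - ε₀/2 ≤ x - ε₀ + δ)] at hdev
    have : φ ε₀ ≤ payoff f δ x x := by rw [hφ]; exact hdev
    linarith

end P7

section P8

variable {f g : ℝ → ℝ} {κ δ α : ℝ}
variable (hf_nonneg : ∀ t, 0 ≤ f t) (hf_int : Integrable f) (hf_cont : Continuous f)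
  (hf_symm : ∀ t, f (-t) = f t) (hf_anti : StrictAntiOn f (Ici 0))
  (hκ : 0 < κ) (hκ_def : f κ = f 0 / 2) (hδ : 0 < δ) (hδκ : 2 * δ ≤ κ)

include hf_int hf_cont in
lemma derivF_mid (x₂ x : ℝ) :
    HasDerivAt (fun y => F f ((y + x₂)/2)) (f ((x + x₂)/2) * (1/2)) x := by
  have hinner : HasDerivAt (fun y : ℝ => (y + x₂)/2) (1/2) x := by
    simpa using ((hasDerivAt_id x).add_const x₂).div_const 2
  exact HasDerivAt.comp x (F_deriv hf_int hf_cont ((x + x₂)/2)) hinner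

include hf_int hf_cont in
lemma derivF_shift (d x : ℝ) :
    HasDerivAt (fun y => F f (y + d)) (f (x + d)) x := by
  have hinner : HasDerivAt (fun y : ℝ => y + d) 1 x := (hasDerivAt_id x).add_const d
  simpa [Function.comp_def] using HasDerivAt.comp x (F_deriv hf_int hf_cont (x + d)) hinner

include hf_int hf_cont in
lemma derivF_sub (d x : ℝ) :
    HasDerivAt (fun y => F f (y - d)) (f (x - d)) x := by
  have hinner : HasDerivAt (fun y : ℝ => y - d) 1 x := (hasDerivAt_id x).sub_const d
  simpa [Function.comp_def] using HasDerivAt.comp x (F_deriv hf_int hf_cont (x - d)) hinner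

include hf_int hf_cont hf_symm hf_anti hκ hκ_def hδ hδκ in
lemma nec_mid {x₁ x₂ : ℝ} (h12 : x₁ < x₂) (hd : x₂ - x₁ < 2 * δ)
    (heq : IsEquilibrium f δ x₁ x₂) : False := by
  obtain ⟨h1, h2⟩ := heq
  set c := (x₁ + x₂)/2 with hc
  -- firm 1 FOC
  have hq1 : payoff f δ x₁ x₂ = F f c - F f (x₁ - δ) := by
    rw [payoff_lt hf_int hδ h12, min_eq_right (by linarith)]
  have hΦ₁ : HasDerivAt (fun y => F f ((y + x₂)/2) - F f (y - δ))
      (f c * (1/2) - f (x₁ - δ)) x₁ := by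
    exact (derivF_mid hf_int hf_cont x₂ x₁).sub (derivF_sub hf_int hf_cont δ x₁)
  have hloc1 : IsLocalMax (fun y => F f ((y + x₂)/2) - F f (y - δ)) x₁ := by
    filter_upwards [Ioo_mem_nhds (by linarith : x₂ - 2*δ < x₁) h12] with y hy
    have hpay : payoff f δ y x₂ = F f ((y + x₂)/2) - F f (y - δ) := by
      rw [payoff_lt hf_int hδ hy.2, min_eq_right (by linarith [hy.1] : (y + x₂)/2 ≤ y + δ)]
    have := h1 y
    rw [hpay, hq1] at this
    simpa using this
  have hz1 : f c * (1/2) - f (x₁ - δ) = 0 := hloc1.hasDerivAt_eq_zero hΦ₁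
  -- firm 2 FOC
  have hq2 : payoff f δ x₂ x₁ = F f (x₂ + δ) - F f c := by
    rw [payoff_gt hf_int hδ h12, max_eq_right (by linarith),
      show (x₂ + x₁)/2 = c by rw [hc]; ring]
  have hΦ₂ : HasDerivAt (fun y => F f (y + δ) - F f ((y + x₁)/2))
      (f (x₂ + δ) - f c * (1/2)) x₂ := by
    have := (derivF_shift hf_int hf_cont δ x₂).sub (derivF_mid hf_int hf_cont x₁ x₂)
    rw [show (x₂ + x₁)/2 = c by rw [hc]; ring] at this
    exact this
  have hloc2 : IsLocalMax (fun y => F f (y + δ) - F f ((y + x₁)/2)) x₂ := by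
    filter_upwards [Ioo_mem_nhds h12 (by linarith : x₂ < x₁ + 2*δ)] with y hy
    have hpay : payoff f δ y x₁ = F f (y + δ) - F f ((y + x₁)/2) := by
      rw [payoff_gt hf_int hδ hy.1, max_eq_right (by linarith [hy.2] : y - δ ≤ (y + x₁)/2)]
    have := h2 y
    rw [hpay, hq2] at this
    show F f (y + δ) - F f ((y + x₁)/2) ≤ F f (x₂ + δ) - F f ((x₂ + x₁)/2)
    rw [show (x₂ + x₁)/2 = c by rw [hc]; ring]
    exact this
  have hz2 : f (x₂ + δ) - f c * (1/2) = 0 := hloc2.hasDerivAt_eq_zero hΦ₂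
  -- combine
  have habs := finj hf_symm hf_anti (show f (x₁ - δ) = f (x₂ + δ) by linarith)
  rcases abs_eq_abs.1 habs with he | he
  · linarith
  · have hx : x₁ = -x₂ := by linarith
    have hc0 : c = 0 := by rw [hc, hx]; ring
    have hfx : f (x₂ + δ) = f κ := by rw [hκ_def]; rw [hc0] at hz2; linarith
    have habs2 := finj hf_symm hf_anti hfx
    rw [abs_of_pos hκ, abs_of_pos (by linarith : 0 < x₂ + δ)] at habs2
    linarith

include hf_int hf_cont hf_symm hf_anti hδ in
lemma nec_far {x₁ x₂ : ℝ} (h12 : x₁ < x₂) (hd : 2 * δ < x₂ - x₁)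
    (heq : IsEquilibrium f δ x₁ x₂) : False := by
  obtain ⟨h1, h2⟩ := heq
  have hΨ : ∀ x : ℝ, HasDerivAt (fun y => F f (y + δ) - F f (y - δ))
      (f (x + δ) - f (x - δ)) x := fun x =>
    (derivF_shift hf_int hf_cont δ x).sub (derivF_sub hf_int hf_cont δ x)
  -- x₁ = 0
  have hq1 : payoff f δ x₁ x₂ = F f (x₁ + δ) - F f (x₁ - δ) := by
    rw [payoff_lt hf_int hδ h12, min_eq_left (by linarith : x₁ + δ ≤ (x₁ + x₂)/2)]
  have hloc1 : IsLocalMax (fun y => F f (y + δ) - F f (y - δ)) x₁ := by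
    filter_upwards [Iio_mem_nhds (by linarith : x₁ < x₂ - 2*δ)] with y hy
    have hy' : y < x₂ := by simp at hy; linarith
    have hpay : payoff f δ y x₂ = F f (y + δ) - F f (y - δ) := by
      rw [payoff_lt hf_int hδ hy', min_eq_left (by simp at hy; linarith : y + δ ≤ (y + x₂)/2)]
    have := h1 y
    rw [hpay, hq1] at this
    simpa using this
  have hz1 : f (x₁ + δ) - f (x₁ - δ) = 0 := hloc1.hasDerivAt_eq_zero (hΨ x₁)
  have hx1 : x₁ = 0 := by
    have habs := finj hf_symm hf_anti (show f (x₁ + δ) = f (x₁ - δ) by linarith)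
    rcases abs_eq_abs.1 habs with he | he <;> linarith
  -- x₂ = 0
  have hq2 : payoff f δ x₂ x₁ = F f (x₂ + δ) - F f (x₂ - δ) := by
    rw [payoff_gt hf_int hδ h12, max_eq_left (by linarith : (x₂ + x₁)/2 ≤ x₂ - δ)]
  have hloc2 : IsLocalMax (fun y => F f (y + δ) - F f (y - δ)) x₂ := by
    filter_upwards [Ioi_mem_nhds (by linarith : x₁ + 2*δ < x₂)] with y hy
    have hy' : x₁ < y := by simp at hy; linarith
    have hpay : payoff f δ y x₁ = F f (y + δ) - F f (y - δ) := by
      rw [payoff_gt hf_int hδ hy', max_eq_left (by simp at hy; linarith : (y + x₁)/2 ≤ y - δ)]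
    have := h2 y
    rw [hpay, hq2] at this
    simpa using this
  have hz2 : f (x₂ + δ) - f (x₂ - δ) = 0 := hloc2.hasDerivAt_eq_zero (hΨ x₂)
  have hx2 : x₂ = 0 := by
    have habs := finj hf_symm hf_anti (show f (x₂ + δ) = f (x₂ - δ) by linarith)
    rcases abs_eq_abs.1 habs with he | he <;> linarith
  rw [hx1, hx2] at hd
  linarith

end P8

section P9

variable {f g : ℝ → ℝ} {κ δ α : ℝ}
variable (hf_nonneg : ∀ t, 0 ≤ f t) (hf_int : Integrable f) (hf_cont : Continuous f)
  (hf_symm : ∀ t, f (-t) = f t) (hf_anti : StrictAntiOn f (Ici 0))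
  (hg_concave : ConcaveOn ℝ univ g) (hfg : ∀ t, f t = Real.exp (g t))
  (hκ : 0 < κ) (hκ_def : f κ = f 0 / 2) (hδ : 0 < δ) (hδκ : 2 * δ ≤ κ)
  (hα : IsGreatest {t : ℝ | t ∈ Icc 0 δ ∧ (1 / 2) * f t ≤ f (t + 2 * δ)} α)

include hf_int hf_cont hf_symm hf_anti hδ hα in
lemma nec_exact {x₁ x₂ : ℝ} (h12 : x₁ < x₂) (hd : x₂ - x₁ = 2 * δ)
    (heq : IsEquilibrium f δ x₁ x₂) : (x₁ + δ) ∈ Icc (-α) α := by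
  obtain ⟨h1, h2⟩ := heq
  set m := x₁ + δ with hm
  have hx₂ : x₂ = m + δ := by rw [hm]; linarith
  have hα0 : 0 ≤ α := hα.1.1.1
  have hαδ : α ≤ δ := hα.1.1.2
  have hq1 : payoff f δ x₁ x₂ = F f m - F f (x₁ - δ) := by
    rw [payoff_lt hf_int hδ h12,
      show (x₁ + x₂)/2 = m by rw [hm]; linarith,
      show x₁ + δ = m from hm.symm, min_self]
  have hq2 : payoff f δ x₂ x₁ = F f (x₂ + δ) - F f m := by
    rw [payoff_gt hf_int hδ h12,
      show (x₂ + x₁)/2 = m by rw [hm]; linarith,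
      show x₂ - δ = m by rw [hx₂]; ring, max_self]
  -- (A) firm 2 moving left: (1/2) f m ≤ f (m + 2δ)
  have hA : (1/2) * f m ≤ f (m + 2*δ) := by
    have hΦ : HasDerivAt (fun y => F f (y + δ) - F f ((y + x₁)/2))
        (f (x₂ + δ) - f m * (1/2)) x₂ := by
      have := (derivF_shift hf_int hf_cont δ x₂).sub (derivF_mid hf_int hf_cont x₁ x₂)
      rw [show (x₂ + x₁)/2 = m by rw [hm]; linarith] at this
      exact this
    have hside : 0 ≤ f (x₂ + δ) - f m * (1/2) := by
      apply deriv_nonneg_of_left (by linarith : (0:ℝ) < 2*δ) hΦ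
      intro y hy1 hy2
      have hy1' : x₁ < y := by linarith
      have hpay : payoff f δ y x₁ = F f (y + δ) - F f ((y + x₁)/2) := by
        rw [payoff_gt hf_int hδ hy1',
          max_eq_right (by linarith : y - δ ≤ (y + x₁)/2)]
      have := h2 y
      rw [hpay, hq2] at this
      show F f (y + δ) - F f ((y + x₁)/2) ≤ F f (x₂ + δ) - F f ((x₂ + x₁)/2)
      rw [show (x₂ + x₁)/2 = m by rw [hm]; linarith]
      exact this
    rw [show x₂ + δ = m + 2*δ by rw [hx₂]; ring] at hside
    linarith
  -- (B) firm 1 moving right: (1/2) f m ≤ f (m - 2δ)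
  have hB : (1/2) * f m ≤ f (m - 2*δ) := by
    have hΦ : HasDerivAt (fun y => F f ((y + x₂)/2) - F f (y - δ))
        (f m * (1/2) - f (x₁ - δ)) x₁ := by
      have := (derivF_mid hf_int hf_cont x₂ x₁).sub (derivF_sub hf_int hf_cont δ x₁)
      rw [show (x₁ + x₂)/2 = m by rw [hm]; linarith] at this
      exact this
    have hside : f m * (1/2) - f (x₁ - δ) ≤ 0 := by
      apply deriv_nonpos_of_right (by linarith : (0:ℝ) < 2*δ) hΦ
      intro y hy1 hy2
      have hy2' : y < x₂ := by linarith
      have hpay : payoff f δ y x₂ = F f ((y + x₂)/2) - F f (y - δ) := by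
        rw [payoff_lt hf_int hδ hy2',
          min_eq_right (by linarith : (y + x₂)/2 ≤ y + δ)]
      have := h1 y
      rw [hpay, hq1] at this
      show F f ((y + x₂)/2) - F f (y - δ) ≤ F f ((x₁ + x₂)/2) - F f (x₁ - δ)
      rw [show (x₁ + x₂)/2 = m by rw [hm]; linarith]
      exact this
    rw [show x₁ - δ = m - 2*δ by rw [hm]; ring] at hside
    linarith
  -- (C) firm 1 moving further left: f (m - 2δ) ≤ f m, hence m ≤ δ
  have hC : f (m - 2*δ) ≤ f m := by
    have hΦ : HasDerivAt (fun y => F f (y + δ) - F f (y - δ))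
        (f (x₁ + δ) - f (x₁ - δ)) x₁ :=
      (derivF_shift hf_int hf_cont δ x₁).sub (derivF_sub hf_int hf_cont δ x₁)
    have hside : 0 ≤ f (x₁ + δ) - f (x₁ - δ) := by
      apply deriv_nonneg_of_left (by linarith : (0:ℝ) < 1) hΦ
      intro y hy1 hy2
      have hy2' : y < x₂ := by linarith
      have hpay : payoff f δ y x₂ = F f (y + δ) - F f (y - δ) := by
        rw [payoff_lt hf_int hδ hy2',
          min_eq_left (by linarith : y + δ ≤ (y + x₂)/2)]
      have := h1 y
      rw [hpay, hq1] at this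
      show F f (y + δ) - F f (y - δ) ≤ F f (x₁ + δ) - F f (x₁ - δ)
      rw [show x₁ + δ = m from hm.symm]
      exact this
    rw [show x₁ + δ = m from hm.symm, show x₁ - δ = m - 2*δ by rw [hm]; ring] at hside
    linarith
  -- (D) firm 2 moving further right: f (m + 2δ) ≤ f m, hence -δ ≤ m
  have hD : f (m + 2*δ) ≤ f m := by
    have hΦ : HasDerivAt (fun y => F f (y + δ) - F f (y - δ))
        (f (x₂ + δ) - f (x₂ - δ)) x₂ :=
      (derivF_shift hf_int hf_cont δ x₂).sub (derivF_sub hf_int hf_cont δ x₂)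
    have hside : f (x₂ + δ) - f (x₂ - δ) ≤ 0 := by
      apply deriv_nonpos_of_right (by linarith : (0:ℝ) < 1) hΦ
      intro y hy1 hy2
      have hy1' : x₁ < y := by linarith
      have hpay : payoff f δ y x₁ = F f (y + δ) - F f (y - δ) := by
        rw [payoff_gt hf_int hδ hy1',
          max_eq_left (by linarith : (y + x₁)/2 ≤ y - δ)]
      have := h2 y
      rw [hpay, hq2] at this
      show F f (y + δ) - F f (y - δ) ≤ F f (x₂ + δ) - F f (x₂ - δ)
      rw [show x₂ - δ = m by rw [hx₂]; ring]
      exact this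
    rw [show x₂ + δ = m + 2*δ by rw [hx₂]; ring,
      show x₂ - δ = m by rw [hx₂]; ring] at hside
    linarith
  -- m ≤ δ from (C)
  have hmδ : m ≤ δ := by
    by_contra hcon
    push_neg at hcon
    have : f m < f (m - 2*δ) := by
      apply fmono_strict hf_symm hf_anti
      rw [abs_of_pos (by linarith : 0 < m), abs_lt]
      constructor <;> linarith
    linarith
  -- -δ ≤ m from (D)
  have hmδ' : -δ ≤ m := by
    by_contra hcon
    push_neg at hcon
    have : f m < f (m + 2*δ) := by
      apply fmono_strict hf_symm hf_anti
      rw [abs_of_neg (by linarith : m < 0), abs_lt]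
      constructor <;> linarith
    linarith
  -- conclude
  rcases le_or_gt 0 m with hm0 | hm0
  · have hmem : m ∈ {t : ℝ | t ∈ Icc 0 δ ∧ (1 / 2) * f t ≤ f (t + 2 * δ)} :=
      ⟨⟨hm0, hmδ⟩, hA⟩
    exact ⟨by linarith [hα.2 hmem], hα.2 hmem⟩
  · have hf1 : f (-m) = f m := hf_symm m
    have hf2 : f (-m + 2*δ) = f (m - 2*δ) := by
      have h' := hf_symm (m - 2*δ)
      rw [show -(m - 2*δ) = -m + 2*δ by ring] at h'
      exact h'
    have hmem : -m ∈ {t : ℝ | t ∈ Icc 0 δ ∧ (1 / 2) * f t ≤ f (t + 2 * δ)} := by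
      refine ⟨⟨by linarith, by linarith⟩, ?_⟩
      rw [hf1, hf2]
      exact hB
    exact ⟨by linarith [hα.2 hmem], by linarith [hα.2 hmem, hα.1.1.1]⟩

end P9

end Stmt12


open Stmt12 in
theorem stmt_12 (f g : ℝ → ℝ)
    (hf_nonneg : ∀ t, 0 ≤ f t)
    (hf_int : Integrable f)
    (hf_mass : ∫ t, f t = 1)
    (hf_cont : Continuous f)
    (hf_symm : ∀ t, f (-t) = f t)
    (hf_anti : StrictAntiOn f (Ici 0))
    (hg_concave : ConcaveOn ℝ univ g)
    (hfg : ∀ t, f t = Real.exp (g t))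
    (κ : ℝ) (hκ : 0 < κ) (hκ_def : f κ = f 0 / 2)
    (δ : ℝ) (hδ : 0 < δ) (hδκ : 2 * δ ≤ κ)
    (α : ℝ) (hα : IsGreatest {t : ℝ | t ∈ Icc 0 δ ∧ (1 / 2) * f t ≤ f (t + 2 * δ)} α) :
    ∀ x₁ x₂ : ℝ, x₁ ≤ x₂ →
      (IsEquilibrium f δ x₁ x₂ ↔ ∃ m ∈ Icc (-α) α, x₁ = m - δ ∧ x₂ = m + δ) := by
  intro x₁ x₂ hle
  constructor
  · intro heq
    rcases eq_or_lt_of_le hle with rfl | h12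
    · exfalso
      obtain ⟨h1, h2⟩ := heq
      rcases le_or_gt 0 x₁ with hx | hx
      · exact no_stack hf_nonneg hf_int hf_cont hf_symm hf_anti hκ hκ_def hδ hδκ hx h1
      · refine no_stack hf_nonneg hf_int hf_cont hf_symm hf_anti hκ hκ_def hδ hδκ
          (x := -x₁) (by linarith) ?_
        intro y
        calc payoff f δ y (-x₁) = payoff f δ (-(-y)) (-x₁) := by rw [neg_neg]
          _ = payoff f δ (-y) x₁ := payoff_reflect hf_int hδ hf_symm (-y) x₁
          _ ≤ payoff f δ x₁ x₁ := h1 (-y)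
          _ = payoff f δ (-x₁) (-x₁) := (payoff_reflect hf_int hδ hf_symm x₁ x₁).symm
    · rcases lt_trichotomy (x₂ - x₁) (2 * δ) with hd | hd | hd
      · exact absurd heq (fun h =>
          nec_mid hf_int hf_cont hf_symm hf_anti hκ hκ_def hδ hδκ h12 hd h)
      · exact ⟨x₁ + δ, nec_exact hf_int hf_cont hf_symm hf_anti hδ hα h12 hd heq,
          by ring, by linarith⟩
      · exact absurd heq (fun h =>
          nec_far hf_int hf_cont hf_symm hf_anti hδ h12 hd h)
  · rintro ⟨m, hm, rfl, rfl⟩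
    exact sufficiency hf_nonneg hf_int hf_cont hf_symm hf_anti hg_concave hfg
      hκ hκ_def hδ hδκ hα hm
end

section
/- If consumers follow a normal distribution N(0, σ²) with density f(x) = (1/(σ√(2π))) exp(−x²/(2σ²)), then the unique positive solution κ of f(κ) = f(0)/2 is κ = σ√(2 ln 2), and for δ > 0 the quantity α = max{t ∈ [0,δ] : (1/2)f(t) ≤ f(t+2δ)} equals min(δ, σ² ln 2/(2δ) − δ) whenever this minimum is nonnegative. -/
open Set

theorem stmt_13 (σ : ℝ) (hσ : 0 < σ) (f : ℝ → ℝ)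
    (hf : ∀ x, f x = (1 / (σ * Real.sqrt (2 * Real.pi))) * Real.exp (-(x ^ 2) / (2 * σ ^ 2)))
    (κ : ℝ) (hκ : 0 < κ) (hκ_def : f κ = f 0 / 2)
    (δ : ℝ) (hδ : 0 < δ)
    (α : ℝ) (hα : IsGreatest {t : ℝ | t ∈ Icc 0 δ ∧ (1 / 2) * f t ≤ f (t + 2 * δ)} α)
    (hmin : 0 ≤ min δ (σ ^ 2 * Real.log 2 / (2 * δ) - δ)) :
    κ = σ * Real.sqrt (2 * Real.log 2) ∧
    α = min δ (σ ^ 2 * Real.log 2 / (2 * δ) - δ) := by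
  have hπ : 0 < Real.sqrt (2 * Real.pi) := Real.sqrt_pos.mpr (by positivity)
  have hc : 0 < 1 / (σ * Real.sqrt (2 * Real.pi)) := by positivity
  have h2σ : (0:ℝ) < 2 * σ ^ 2 := by positivity
  have hlog2 : 0 < Real.log 2 := Real.log_pos (by norm_num)
  set C := σ ^ 2 * Real.log 2 / (2 * δ) - δ with hC
  -- κ part
  have hκ2 : κ ^ 2 = 2 * σ ^ 2 * Real.log 2 := by
    have h1 := hκ_def
    rw [hf, hf] at h1
    have h0 : Real.exp (-(0 ^ 2) / (2 * σ ^ 2)) = 1 := by norm_num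
    rw [h0] at h1
    have h2 : Real.exp (-(κ ^ 2) / (2 * σ ^ 2)) = 1 / 2 := by
      have h1' : (1 / (σ * Real.sqrt (2 * Real.pi))) * Real.exp (-(κ ^ 2) / (2 * σ ^ 2)) =
          (1 / (σ * Real.sqrt (2 * Real.pi))) * (1 / 2) := by linarith [h1]
      exact mul_left_cancel₀ (ne_of_gt hc) h1'
    have h3 : -(κ ^ 2) / (2 * σ ^ 2) = Real.log (1 / 2) := by
      rw [← h2, Real.log_exp]
    rw [Real.log_div one_ne_zero (by norm_num), Real.log_one] at h3
    field_simp at h3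
    linarith
  have hκeq : κ = σ * Real.sqrt (2 * Real.log 2) := by
    have : κ = Real.sqrt (κ ^ 2) := (Real.sqrt_sq hκ.le).symm
    rw [this, hκ2, show 2 * σ ^ 2 * Real.log 2 = σ ^ 2 * (2 * Real.log 2) by ring,
      Real.sqrt_mul (sq_nonneg σ), Real.sqrt_sq hσ.le]
  -- characterization of the condition
  have hiff : ∀ t : ℝ, ((1 / 2) * f t ≤ f (t + 2 * δ)) ↔ t ≤ C := by
    intro t
    rw [hf, hf]
    have hrw : (1 / 2 : ℝ) * ((1 / (σ * Real.sqrt (2 * Real.pi))) *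
        Real.exp (-(t ^ 2) / (2 * σ ^ 2))) =
        (1 / (σ * Real.sqrt (2 * Real.pi))) *
        Real.exp (-(t ^ 2) / (2 * σ ^ 2) - Real.log 2) := by
      rw [Real.exp_sub, Real.exp_log (by norm_num : (0:ℝ) < 2)]
      ring
    have e1 : -(t ^ 2) / (2 * σ ^ 2) - Real.log 2 =
        (-(t ^ 2) - 2 * σ ^ 2 * Real.log 2) / (2 * σ ^ 2) := by
      field_simp
    have e2 : t ≤ C ↔ (t + δ) * (2 * δ) ≤ σ ^ 2 * Real.log 2 := by
      rw [hC, le_sub_iff_add_le, ← le_div_iff₀ (by positivity : (0:ℝ) < 2 * δ)]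
    rw [hrw, mul_le_mul_iff_right₀ hc, Real.exp_le_exp, e1,
      div_le_div_iff₀ h2σ h2σ, e2]
    constructor <;> intro h <;> nlinarith [h, hσ, hδ]
  set m := min δ C with hm
  have hmem : m ∈ {t : ℝ | t ∈ Icc 0 δ ∧ (1 / 2) * f t ≤ f (t + 2 * δ)} := by
    refine ⟨⟨hmin, min_le_left _ _⟩, (hiff m).mpr (min_le_right _ _)⟩
  have hub : ∀ t ∈ {t : ℝ | t ∈ Icc 0 δ ∧ (1 / 2) * f t ≤ f (t + 2 * δ)}, t ≤ m := by
    intro t ht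
    exact le_min ht.1.2 ((hiff t).mp ht.2)
  exact ⟨hκeq, hα.unique ⟨hmem, hub⟩⟩
end
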